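/- arXiv:2303.01288 — 6 statements merged into one kernel-verified Lean document; each statement's English description precedes it below -/
import Mathlib

section
/- There exists an increasing function α : ℝ≥0 → ℝ≥0 (depending only on the dimension n) such that the following holds. For every f, φ, t_f, u, G as in the context, every true moment flow (μ_t) for (f,G,u) on [0,t_f] with mean m and covariance P, and its statistical linearization (m̂,P̂) defined on all of [0,t_f], one has sup_{t∈[0,t_f]} ‖m(t) − m̂(t)‖² + sup_{t∈[0,t_f]} ‖P(t) − P̂(t)‖ ≤ α(∫₀^{t_f} φ(‖u(s)‖) ds) · ∫₀^{t_f} φ(‖u(s)‖) ‖P̂(s)‖ ds. -/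
open MeasureTheory intervalIntegral ContinuousLinearMap
open scoped RealInnerProductSpace NNReal

namespace SLEaux

lemma point_amgm {a ε : ℝ} (ha : 0 ≤ a) (hε : 0 < ε) : a ≤ (ε + a ^ 2 / ε) / 2 := by
  rw [le_div_iff₀ (by norm_num : (0:ℝ) < 2), ← sub_nonneg]
  have h : ε + a ^ 2 / ε - a * 2 = (ε * ε + a ^ 2 - 2 * a * ε) / ε := by
    field_simp
  rw [h]
  apply div_nonneg _ hε.le
  nlinarith [sq_nonneg (a - ε)]

lemma amgm_opt {X a b : ℝ} (hX : 0 ≤ X) (ha : 0 ≤ a) (hb : 0 ≤ b)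
    (h : ∀ ε : ℝ, 0 < ε → X ≤ (ε * a + b / ε) / 2) : X ≤ Real.sqrt (a * b) := by
  have hXle0 : (∀ δ : ℝ, 0 < δ → X ≤ δ) → X ≤ Real.sqrt (a * b) := by
    intro hd
    have : X ≤ 0 := by
      by_contra hc
      push_neg at hc
      have := hd (X / 2) (by linarith)
      linarith
    exact this.trans (Real.sqrt_nonneg _)
  rcases eq_or_lt_of_le ha with ha0 | ha'
  · apply hXle0
    intro δ hδ
    have hε : (0:ℝ) < b / δ + 1 := by positivity
    have h1 := h _ hε
    rw [← ha0] at h1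
    have hb' : b / (b / δ + 1) ≤ δ := by
      rw [div_le_iff₀ hε]
      have : 0 ≤ b / δ * δ := by positivity
      nlinarith [div_mul_cancel₀ b hδ.ne']
    simp at h1
    linarith
  rcases eq_or_lt_of_le hb with hb0 | hb'
  · apply hXle0
    intro δ hδ
    have hε : (0:ℝ) < 2 * δ / a := by positivity
    have h1 := h _ hε
    rw [← hb0] at h1
    have : 2 * δ / a * a = 2 * δ := by field_simp
    simp only [zero_div] at h1
    rw [this] at h1
    linarith
  · have hε : (0:ℝ) < Real.sqrt (b / a) := Real.sqrt_pos.2 (by positivity)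
    have h1 := h _ hε
    have key : (Real.sqrt (b / a) * a + b / Real.sqrt (b / a)) / 2 = Real.sqrt (a * b) := by
      have h2 : Real.sqrt (b / a) ^ 2 = b / a := Real.sq_sqrt (by positivity)
      have h3 : Real.sqrt (a * b) ^ 2 = a * b := Real.sq_sqrt (by positivity)
      have h4 : Real.sqrt (b / a) * a * Real.sqrt (b / a) = b := by
        rw [mul_right_comm, ← sq, h2]; field_simp
      have h5 : Real.sqrt (a * b) = Real.sqrt (b / a) * a := by
        rw [show a * b = (Real.sqrt (b / a) * a) ^ 2 from by rw [sq]; nlinarith,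
          Real.sqrt_sq (by positivity)]
      have h6 : b / Real.sqrt (b / a) = Real.sqrt (b / a) * a := by
        rw [div_eq_iff hε.ne']; linarith [h4]
      rw [h5, h6]; ring
    rw [key] at h1
    exact h1

lemma sqrt_add_le (a b : ℝ) : Real.sqrt (a + b) ≤ Real.sqrt a + Real.sqrt b := by
  rcases lt_or_ge a 0 with ha | ha
  · calc Real.sqrt (a + b) ≤ Real.sqrt b := Real.sqrt_le_sqrt (by linarith)
      _ ≤ Real.sqrt a + Real.sqrt b := le_add_of_nonneg_left (Real.sqrt_nonneg a)
  rcases lt_or_ge b 0 with hb | hb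
  · calc Real.sqrt (a + b) ≤ Real.sqrt a := Real.sqrt_le_sqrt (by linarith)
      _ ≤ Real.sqrt a + Real.sqrt b := le_add_of_nonneg_right (Real.sqrt_nonneg b)
  · have h : a + b ≤ (Real.sqrt a + Real.sqrt b) ^ 2 := by
      have h1 := Real.sq_sqrt ha
      have h2 := Real.sq_sqrt hb
      nlinarith [Real.sqrt_nonneg a, Real.sqrt_nonneg b]
    calc Real.sqrt (a + b) ≤ Real.sqrt ((Real.sqrt a + Real.sqrt b) ^ 2) := Real.sqrt_le_sqrt h
      _ = Real.sqrt a + Real.sqrt b := Real.sqrt_sq (by positivity)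


noncomputable def gronC : ℕ → ℝ
  | 0 => 1
  | (N + 1) => 2 + (N : ℝ) * gronC N

lemma gronC_one_le : ∀ N, 1 ≤ gronC N := by
  intro N
  induction N with
  | zero => simp [gronC]
  | succ N ih => simp only [gronC]; nlinarith [Nat.cast_nonneg (α := ℝ) N, ih]

lemma gronC_mono : Monotone gronC := by
  apply monotone_nat_of_le_succ
  intro N
  have h := gronC_one_le N
  simp only [gronC]
  rcases Nat.eq_zero_or_pos N with h0 | h0
  · subst h0; simp [gronC]
  · have : (1:ℝ) ≤ (N:ℝ) := by exact_mod_cast h0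
    nlinarith

lemma gronwall_aux {T A : ℝ} (hT : 0 ≤ T) (hA : 0 ≤ A) (L v : ℝ → ℝ)
    (hL : IntervalIntegrable L volume 0 T) (hLpos : ∀ s ∈ Set.Icc 0 T, 0 ≤ L s)
    (hv : ContinuousOn v (Set.Icc 0 T)) (hvpos : ∀ s ∈ Set.Icc 0 T, 0 ≤ v s)
    (hineq : ∀ t ∈ Set.Icc 0 T, v t ≤ A + ∫ s in (0:ℝ)..t, L s * v s) :
    ∀ t ∈ Set.Icc 0 T, v t ≤ A * gronC ⌈2 * ∫ s in (0:ℝ)..T, L s⌉₊ := by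
  set Φ : ℝ → ℝ := fun t => ∫ s in (0:ℝ)..t, L s with hΦdef
  have huIcc : Set.uIcc (0:ℝ) T = Set.Icc 0 T := Set.uIcc_of_le hT
  have hsubI : ∀ {a b : ℝ}, a ∈ Set.Icc (0:ℝ) T → b ∈ Set.Icc (0:ℝ) T →
      Set.uIcc a b ⊆ Set.uIcc (0:ℝ) T := by
    intro a b ha hb
    rw [huIcc]
    exact Set.uIcc_subset_Icc ha hb
  have hLsub : ∀ {a b : ℝ}, a ∈ Set.Icc (0:ℝ) T → b ∈ Set.Icc (0:ℝ) T →
      IntervalIntegrable L volume a b := fun ha hb => hL.mono_set (hsubI ha hb)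
  have hzero : (0:ℝ) ∈ Set.Icc (0:ℝ) T := Set.left_mem_Icc.2 hT
  have hLv : ∀ {a b : ℝ}, a ∈ Set.Icc (0:ℝ) T → b ∈ Set.Icc (0:ℝ) T →
      IntervalIntegrable (fun s => L s * v s) volume a b := by
    intro a b ha hb
    exact (hLsub ha hb).mul_continuousOn (hv.mono (by rw [← huIcc]; exact hsubI ha hb))
  have hΦ0 : Φ 0 = 0 := integral_same
  have hΦmono : ∀ {a b : ℝ}, a ∈ Set.Icc (0:ℝ) T → b ∈ Set.Icc (0:ℝ) T → a ≤ b →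
      Φ a ≤ Φ b := by
    intro a b ha hb hab
    have hsplit : Φ a + ∫ s in a..b, L s = Φ b :=
      integral_add_adjacent_intervals (hLsub hzero ha) (hLsub ha hb)
    have hpos : 0 ≤ ∫ s in a..b, L s :=
      integral_nonneg hab (fun s hs => hLpos s ⟨ha.1.trans hs.1, hs.2.trans hb.2⟩)
    linarith
  have hΦcont : ContinuousOn Φ (Set.Icc 0 T) := by
    rw [← huIcc]
    exact continuousOn_primitive_interval' hL (by rw [huIcc]; exact hzero)
  have key : ∀ N : ℕ, ∀ t ∈ Set.Icc (0:ℝ) T, Φ t ≤ N / 2 → v t ≤ A * gronC N := by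
    intro N
    induction N with
    | zero =>
      intro t ht hΦt
      simp only [Nat.cast_zero, zero_div] at hΦt
      obtain ⟨s₀, hs₀mem, hs₀max⟩ := isCompact_Icc.exists_isMaxOn
        (Set.nonempty_Icc.2 ht.1) (hv.mono (Set.Icc_subset_Icc le_rfl ht.2))
      have hs₀Icc : s₀ ∈ Set.Icc (0:ℝ) T := ⟨hs₀mem.1, hs₀mem.2.trans ht.2⟩
      have hb : ∫ s in (0:ℝ)..s₀, L s * v s ≤ Φ s₀ * v s₀ := by
        have hmon := intervalIntegral.integral_mono_on hs₀mem.1 (hLv hzero hs₀Icc)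
          ((hLsub hzero hs₀Icc).mul_const (v s₀))
          (fun s hs => mul_le_mul_of_nonneg_left
            (hs₀max ⟨hs.1, hs.2.trans hs₀mem.2⟩)
            (hLpos s ⟨hs.1, hs.2.trans hs₀Icc.2⟩))
        rwa [intervalIntegral.integral_mul_const] at hmon
      have hΦs₀ : Φ s₀ = 0 := le_antisymm ((hΦmono hs₀Icc ht hs₀mem.2).trans hΦt)
        (by rw [← hΦ0]; exact hΦmono hzero hs₀Icc hs₀mem.1)
      have h1 := hineq s₀ hs₀Icc
      rw [hΦs₀] at hb
      have hvt : v t ≤ v s₀ := hs₀max (Set.mem_Icc.2 ⟨ht.1, le_rfl⟩)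
      simp only [gronC]
      linarith
    | succ N ih =>
      intro t ht hΦt
      by_cases hc : Φ t ≤ N / 2
      · exact (ih t ht hc).trans
          (mul_le_mul_of_nonneg_left (gronC_mono (Nat.le_succ N)) hA)
      push_neg at hc
      set S : Set ℝ := {s | s ∈ Set.Icc (0:ℝ) t ∧ Φ s ≤ N / 2} with hSdef
      have hS0 : (0:ℝ) ∈ S := ⟨Set.left_mem_Icc.2 ht.1, by rw [hΦ0]; positivity⟩
      have hSbdd : BddAbove S := ⟨t, fun s hs => hs.1.2⟩
      have hSclosed : IsClosed S := by
        have : S = Set.Icc 0 t ∩ Φ ⁻¹' Set.Iic ((N:ℝ) / 2) := by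
          ext s; simp [hSdef, Set.mem_Icc, and_assoc]
        rw [this]
        exact ContinuousOn.preimage_isClosed_of_isClosed
          (hΦcont.mono (Set.Icc_subset_Icc le_rfl ht.2)) isClosed_Icc isClosed_Iic
      set τ := sSup S with hτdef
      have hτS : τ ∈ S := hSclosed.csSup_mem ⟨0, hS0⟩ hSbdd
      obtain ⟨⟨hτ0, hτt⟩, hΦτ⟩ := hτS
      have hτIcc : τ ∈ Set.Icc (0:ℝ) T := ⟨hτ0, hτt.trans ht.2⟩
      have hΦτ' : Φ τ = N / 2 := by
        obtain ⟨s, hsmem, hsval⟩ := intermediate_value_Icc ht.1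
          (hΦcont.mono (Set.Icc_subset_Icc le_rfl ht.2))
          (Set.mem_Icc.2 ⟨by rw [hΦ0]; positivity, hc.le⟩)
        have hsτ : s ≤ τ := le_csSup hSbdd ⟨hsmem, hsval.le⟩
        exact le_antisymm hΦτ (hsval ▸ hΦmono ⟨hsmem.1, hsmem.2.trans ht.2⟩ hτIcc hsτ)
      obtain ⟨s₀, hs₀mem, hs₀max⟩ := isCompact_Icc.exists_isMaxOn (Set.nonempty_Icc.2 hτt)
        (hv.mono (Set.Icc_subset_Icc hτ0 ht.2))
      have hs₀Icc : s₀ ∈ Set.Icc (0:ℝ) T := ⟨hτ0.trans hs₀mem.1, hs₀mem.2.trans ht.2⟩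
      have hsplit : ∫ s in (0:ℝ)..s₀, L s * v s =
          (∫ s in (0:ℝ)..τ, L s * v s) + ∫ s in τ..s₀, L s * v s :=
        (integral_add_adjacent_intervals (hLv hzero hτIcc) (hLv hτIcc hs₀Icc)).symm
      have hIH : ∀ s ∈ Set.Icc (0:ℝ) τ, v s ≤ A * gronC N := by
        intro s hs
        exact ih s ⟨hs.1, hs.2.trans hτIcc.2⟩
          ((hΦmono ⟨hs.1, hs.2.trans hτIcc.2⟩ hτIcc hs.2).trans hΦτ'.le)
      have hb1 : ∫ s in (0:ℝ)..τ, L s * v s ≤ Φ τ * (A * gronC N) := by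
        have := intervalIntegral.integral_mono_on hτ0 (hLv hzero hτIcc)
          ((hLsub hzero hτIcc).mul_const (A * gronC N))
          (fun s hs => mul_le_mul_of_nonneg_left (hIH s hs)
            (hLpos s ⟨hs.1, hs.2.trans hτIcc.2⟩))
        rwa [intervalIntegral.integral_mul_const] at this
      have hb2 : ∫ s in τ..s₀, L s * v s ≤ (Φ s₀ - Φ τ) * v s₀ := by
        have hττ : τ ≤ s₀ := hs₀mem.1
        have hvs₀ : 0 ≤ v s₀ := hvpos s₀ hs₀Icc
        have hmon := intervalIntegral.integral_mono_on hττ (hLv hτIcc hs₀Icc)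
          ((hLsub hτIcc hs₀Icc).mul_const (v s₀))
          (fun s hs => mul_le_mul_of_nonneg_left
            (hs₀max ⟨hs.1, hs.2.trans hs₀mem.2⟩)
            (hLpos s ⟨hτ0.trans hs.1, hs.2.trans hs₀Icc.2⟩))
        rw [intervalIntegral.integral_mul_const] at hmon
        have heq : ∫ s in τ..s₀, L s = Φ s₀ - Φ τ := by
          have := integral_add_adjacent_intervals (hLsub hzero hτIcc) (hLsub hτIcc hs₀Icc)
          simp only [hΦdef]; linarith [this]
        rwa [heq] at hmon
      have hΦd : Φ s₀ - Φ τ ≤ 1 / 2 := by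
        have h1 : Φ s₀ ≤ Φ t := hΦmono hs₀Icc ht hs₀mem.2
        push_cast at hΦt
        rw [hΦτ']
        linarith
      have hΦd0 : 0 ≤ Φ s₀ - Φ τ := sub_nonneg.2 (hΦmono hτIcc hs₀Icc hs₀mem.1)
      have hvs₀b : v s₀ ≤ A + Φ τ * (A * gronC N) + (Φ s₀ - Φ τ) * v s₀ := by
        have := hineq s₀ hs₀Icc
        rw [hsplit] at this
        linarith
      have hvs₀f : v s₀ ≤ A * gronC (N + 1) := by
        have hvs₀ : 0 ≤ v s₀ := hvpos s₀ hs₀Icc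
        have hgron : 1 ≤ gronC N := gronC_one_le N
        simp only [gronC]
        push_cast
        rw [hΦτ'] at hvs₀b
        nlinarith [mul_le_mul_of_nonneg_right hΦd hvs₀]
      exact le_trans (hs₀max (Set.mem_Icc.2 ⟨hτt, le_rfl⟩)) hvs₀f
  intro t ht
  apply key _ t ht
  have h1 : Φ t ≤ Φ T := hΦmono ht (Set.right_mem_Icc.2 hT) ht.2
  have h2 : 2 * Φ T ≤ (⌈2 * Φ T⌉₊ : ℝ) := Nat.le_ceil _
  simp only [hΦdef] at h1 h2 ⊢
  linarith


lemma II_mono {EE : Type*} [NormedAddCommGroup EE] {T a b : ℝ} (hT : 0 ≤ T) {X : ℝ → EE}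
    (hX : IntervalIntegrable X volume 0 T) (ha : a ∈ Set.Icc 0 T) (hb : b ∈ Set.Icc 0 T) :
    IntervalIntegrable X volume a b :=
  hX.mono_set (by rw [Set.uIcc_of_le hT]; exact Set.uIcc_subset_Icc ha hb)

lemma primitive_contOn {EE : Type*} [NormedAddCommGroup EE] [NormedSpace ℝ EE] {T : ℝ}
    (hT : 0 ≤ T) {X : ℝ → EE} (hX : IntervalIntegrable X volume 0 T) :
    ContinuousOn (fun t => ∫ s in (0:ℝ)..t, X s) (Set.Icc 0 T) := by
  rw [← Set.uIcc_of_le hT]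
  exact continuousOn_primitive_interval' hX (by rw [Set.uIcc_of_le hT]; exact Set.left_mem_Icc.2 hT)

lemma primitive_mono {T a b : ℝ} (hT : 0 ≤ T) {X : ℝ → ℝ}
    (hX : IntervalIntegrable X volume 0 T) (hpos : ∀ s ∈ Set.Icc 0 T, 0 ≤ X s)
    (ha : a ∈ Set.Icc 0 T) (hb : b ∈ Set.Icc 0 T) (hab : a ≤ b) :
    ∫ s in (0:ℝ)..a, X s ≤ ∫ s in (0:ℝ)..b, X s := by
  have hzero : (0:ℝ) ∈ Set.Icc (0:ℝ) T := Set.left_mem_Icc.2 hT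
  have hsplit := integral_add_adjacent_intervals (μ := volume)
    (II_mono hT hX hzero ha) (II_mono hT hX ha hb)
  have hpos2 : 0 ≤ ∫ s in a..b, X s :=
    intervalIntegral.integral_nonneg hab (fun s hs => hpos s ⟨ha.1.trans hs.1, hs.2.trans hb.2⟩)
  linarith

noncomputable def gfun (n : ℕ) (r : ℝ) : ℝ :=
  2 * n * gronC ⌈2 * r⌉₊ ^ 2 * ((2 * n + 2) * gronC ⌈2 * (2 * n * r)⌉₊ * r ^ 2 + r)
    + (2 * n + 2) * gronC ⌈2 * (2 * n * r)⌉₊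

lemma gfun_nonneg (n : ℕ) {r : ℝ} (hr : 0 ≤ r) : 0 ≤ gfun n r := by
  have h1 := gronC_one_le ⌈2 * r⌉₊
  have h2 := gronC_one_le ⌈2 * (2 * n * r)⌉₊
  have hn : (0:ℝ) ≤ n := Nat.cast_nonneg n
  unfold gfun
  positivity

lemma gfun_mono (n : ℕ) {r r' : ℝ} (hr : 0 ≤ r) (hrr : r ≤ r') : gfun n r ≤ gfun n r' := by
  have hn : (0:ℝ) ≤ n := Nat.cast_nonneg n
  have h1 : gronC ⌈2 * r⌉₊ ≤ gronC ⌈2 * r'⌉₊ :=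
    gronC_mono (Nat.ceil_le_ceil (by linarith))
  have h2 : gronC ⌈2 * (2 * n * r)⌉₊ ≤ gronC ⌈2 * (2 * n * r')⌉₊ :=
    gronC_mono (Nat.ceil_le_ceil (by nlinarith))
  have h3 := gronC_one_le ⌈2 * r⌉₊
  have h4 := gronC_one_le ⌈2 * (2 * n * r)⌉₊
  have h5 := gronC_one_le ⌈2 * r'⌉₊
  have h6 := gronC_one_le ⌈2 * (2 * n * r')⌉₊
  unfold gfun
  have hr' : 0 ≤ r' := hr.trans hrr
  gcongr <;> nlinarith

end SLEaux


set_option maxHeartbeats 10000000 in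
theorem statistical_linearization_estimate (n : ℕ) :
    ∃ α : ℝ≥0 → ℝ≥0, Monotone α ∧
      ∀ (k d : ℕ)
        (f : EuclideanSpace ℝ (Fin n) → EuclideanSpace ℝ (Fin k) → EuclideanSpace ℝ (Fin n))
        (φ : ℝ≥0 → ℝ≥0) (t_f : ℝ) (u : ℝ → EuclideanSpace ℝ (Fin k))
        (G : EuclideanSpace ℝ (Fin k) →
          (EuclideanSpace ℝ (Fin d) →L[ℝ] EuclideanSpace ℝ (Fin n)))
        (μ : ℝ → Measure (EuclideanSpace ℝ (Fin n)))
        (m mhat : ℝ → EuclideanSpace ℝ (Fin n))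
        (P Phat Ψ : ℝ → EuclideanSpace ℝ (Fin n) →L[ℝ] EuclideanSpace ℝ (Fin n)),
        -- `f` is continuously differentiable in `x`, with `‖D_x f(x,v)‖ ≤ φ(‖v‖)`
        (∀ v, ContDiff ℝ 1 (fun x => f x v)) →
        Continuous φ →
        (∀ x v, ‖fderiv ℝ (fun y => f y v) x‖ ≤ φ ‖v‖₊) →
        0 < t_f →
        -- measurable control with `φ(‖u(·)‖)` integrable
        Measurable u →
        IntervalIntegrable (fun s => (φ ‖u s‖₊ : ℝ)) volume 0 t_f →
        -- measurable dispersion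
        (∀ w, Measurable fun v => G v w) →
        -- true moment flow: probability measures with finite second moments,
        -- mean `m` and covariance `P`
        (∀ t ∈ Set.Icc 0 t_f, IsProbabilityMeasure (μ t)) →
        (∀ t ∈ Set.Icc 0 t_f, Integrable (fun x => ‖x‖ ^ 2) (μ t)) →
        (∀ t ∈ Set.Icc 0 t_f, Integrable (fun x : EuclideanSpace ℝ (Fin n) => x) (μ t)) →
        (∀ t ∈ Set.Icc 0 t_f, m t = ∫ x, x ∂(μ t)) →
        (∀ t ∈ Set.Icc 0 t_f, ∀ w, P t w = ∫ x, ⟪x - m t, w⟫ • (x - m t) ∂(μ t)) →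
        -- the moment equations (absolute continuity in integral form)
        (∀ t ∈ Set.Icc 0 t_f, Integrable (fun x => f x (u t)) (μ t)) →
        IntervalIntegrable (fun s => ∫ x, f x (u s) ∂(μ s)) volume 0 t_f →
        (∀ t ∈ Set.Icc 0 t_f, m t = m 0 + ∫ s in (0:ℝ)..t, ∫ x, f x (u s) ∂(μ s)) →
        (∀ t ∈ Set.Icc 0 t_f, ∀ w, Ψ t w =
          (∫ x, (⟪x - m t, w⟫ • f x (u t) + ⟪f x (u t), w⟫ • (x - m t)) ∂(μ t))
            + (G (u t) ∘L adjoint (G (u t))) w) →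
        IntervalIntegrable Ψ volume 0 t_f →
        (∀ t ∈ Set.Icc 0 t_f, P t = P 0 + ∫ s in (0:ℝ)..t, Ψ s) →
        -- statistical linearization with the same initial condition
        mhat 0 = m 0 →
        Phat 0 = P 0 →
        IntervalIntegrable (fun s => f (mhat s) (u s)) volume 0 t_f →
        (∀ t ∈ Set.Icc 0 t_f, mhat t = m 0 + ∫ s in (0:ℝ)..t, f (mhat s) (u s)) →
        IntervalIntegrable (fun s =>
          fderiv ℝ (fun y => f y (u s)) (mhat s) ∘L Phat s
            + Phat s ∘L adjoint (fderiv ℝ (fun y => f y (u s)) (mhat s))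
            + G (u s) ∘L adjoint (G (u s))) volume 0 t_f →
        (∀ t ∈ Set.Icc 0 t_f, Phat t = P 0 + ∫ s in (0:ℝ)..t,
          (fderiv ℝ (fun y => f y (u s)) (mhat s) ∘L Phat s
            + Phat s ∘L adjoint (fderiv ℝ (fun y => f y (u s)) (mhat s))
            + G (u s) ∘L adjoint (G (u s)))) →
        -- conclusion: sup of mean error squared plus sup of covariance error
        ∀ t₁ ∈ Set.Icc 0 t_f, ∀ t₂ ∈ Set.Icc 0 t_f,
          ‖m t₁ - mhat t₁‖ ^ 2 + ‖P t₂ - Phat t₂‖ ≤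
            (α (∫ s in (0:ℝ)..t_f, (φ ‖u s‖₊ : ℝ)).toNNReal : ℝ) *
              ∫ s in (0:ℝ)..t_f, (φ ‖u s‖₊ : ℝ) * ‖Phat s‖ := by
  classical
  refine ⟨fun r => Real.toNNReal (SLEaux.gfun n r), ?_, ?_⟩
  · intro r r' hrr
    exact Real.toNNReal_mono (SLEaux.gfun_mono n r.coe_nonneg (NNReal.coe_le_coe.2 hrr))
  intro k d f φ t_f u G μ m mhat P Phat Ψ hf hφcont hbound ht_f hu hLint hG hprob hI2 hI1
    hm hP hfint hFint hmeq hΨdef hΨint hPeq hmhat0 hPhat0 hfmint hmhateq hΘint hPhateq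
    t₁ ht₁ t₂ ht₂
  have htf0 : (0:ℝ) ≤ t_f := ht_f.le
  set J : Set ℝ := Set.Icc (0:ℝ) t_f with hJdef
  have hzero : (0:ℝ) ∈ J := Set.left_mem_Icc.2 htf0
  have hend : t_f ∈ J := Set.right_mem_Icc.2 htf0
  set Λ : ℝ := ∫ s in (0:ℝ)..t_f, ((φ ‖u s‖₊ : ℝ≥0) : ℝ) with hΛdef
  set I : ℝ := ∫ s in (0:ℝ)..t_f, ((φ ‖u s‖₊ : ℝ≥0) : ℝ) * ‖Phat s‖ with hIdef
  set L : ℝ → ℝ := fun s => ((φ ‖u s‖₊ : ℝ≥0) : ℝ) with hLdef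
  have hLs : ∀ s, ((φ ‖u s‖₊ : ℝ≥0) : ℝ) = L s := fun s => rfl
  have hΛL : Λ = ∫ s in (0:ℝ)..t_f, L s := by rw [hΛdef]
  have hIL : I = ∫ s in (0:ℝ)..t_f, L s * ‖Phat s‖ := by rw [hIdef]
  have hLpos : ∀ s, 0 ≤ L s := fun s => (φ ‖u s‖₊).coe_nonneg
  have hΛ0 : 0 ≤ Λ := by
    rw [hΛL]; exact intervalIntegral.integral_nonneg htf0 fun s _ => hLpos s
  set F : ℝ → EuclideanSpace ℝ (Fin n) := fun s => ∫ x, f x (u s) ∂(μ s) with hFdef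
  set Θ : ℝ → EuclideanSpace ℝ (Fin n) →L[ℝ] EuclideanSpace ℝ (Fin n) := fun s =>
      fderiv ℝ (fun y => f y (u s)) (mhat s) ∘L Phat s
        + Phat s ∘L adjoint (fderiv ℝ (fun y => f y (u s)) (mhat s))
        + G (u s) ∘L adjoint (G (u s)) with hΘdef
  have hFint' : IntervalIntegrable F volume 0 t_f := hFint
  have hΘint' : IntervalIntegrable Θ volume 0 t_f := hΘint
  have hPhateq' : ∀ t ∈ J, Phat t = P 0 + ∫ s in (0:ℝ)..t, Θ s := hPhateq
  have hmeq' : ∀ t ∈ J, m t = m 0 + ∫ s in (0:ℝ)..t, F s := hmeq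
  -- continuity of the four flows
  have hmc : ContinuousOn m J :=
    (continuousOn_const.add (SLEaux.primitive_contOn htf0 hFint')).congr
      (fun t ht => hmeq' t ht)
  have hmhatc : ContinuousOn mhat J :=
    (continuousOn_const.add (SLEaux.primitive_contOn htf0 hfmint)).congr
      (fun t ht => hmhateq t ht)
  have hPc : ContinuousOn P J :=
    (continuousOn_const.add (SLEaux.primitive_contOn htf0 hΨint)).congr
      (fun t ht => hPeq t ht)
  have hPhatc : ContinuousOn Phat J :=
    (continuousOn_const.add (SLEaux.primitive_contOn htf0 hΘint')).congr
      (fun t ht => hPhateq' t ht)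
  set D : ℝ → ℝ := fun t => ‖P t - Phat t‖ with hDdef
  set Eer : ℝ → ℝ := fun t => ‖m t - mhat t‖ with hEerdef
  set p : ℝ → ℝ := fun t => ‖Phat t‖ with hpdef
  have hDc : ContinuousOn D J := (hPc.sub hPhatc).norm
  have hEc : ContinuousOn Eer J := (hmc.sub hmhatc).norm
  have hpc : ContinuousOn p J := hPhatc.norm
  have hD0 : ∀ t, 0 ≤ D t := fun t => norm_nonneg _
  have hE0 : ∀ t, 0 ≤ Eer t := fun t => norm_nonneg _
  have hp0 : ∀ t, 0 ≤ p t := fun t => norm_nonneg _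
  have hI0 : 0 ≤ I := by
    rw [hIL]
    exact intervalIntegral.integral_nonneg htf0
      fun s _ => mul_nonneg (hLpos s) (norm_nonneg _)
  have hLpInt : IntervalIntegrable (fun s => L s * p s) volume 0 t_f :=
    hLint.mul_continuousOn (hpc.mono (by rw [Set.uIcc_of_le htf0, hJdef]))
  -- Lipschitz bound on f
  have hlip : ∀ (v : EuclideanSpace ℝ (Fin k)) (x y : EuclideanSpace ℝ (Fin n)),
      ‖f x v - f y v‖ ≤ ((φ ‖v‖₊ : ℝ≥0) : ℝ) * ‖x - y‖ := by
    intro v x y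
    exact Convex.norm_image_sub_le_of_norm_fderiv_le
      (fun z _ => ((hf v).differentiable one_ne_zero).differentiableAt)
      (fun z _ => hbound z v) convex_univ (Set.mem_univ y) (Set.mem_univ x)
  -- basic integrability facts w.r.t. μ t
  have hxm2 : ∀ t ∈ J, Integrable (fun x => ‖x - m t‖ ^ 2) (μ t) := by
    intro t ht
    have hpm := hprob t ht
    refine (((hI2 t ht).const_mul 2).add (integrable_const (2 * ‖m t‖ ^ 2))).mono'
      (((continuous_id.sub continuous_const).norm.pow 2).aestronglyMeasurable) ?_
    refine Filter.Eventually.of_forall fun x => ?_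
    have h1 : ‖x - m t‖ ≤ ‖x‖ + ‖m t‖ := norm_sub_le x (m t)
    simp only [Pi.add_apply]
    rw [Real.norm_of_nonneg (by positivity)]
    nlinarith [mul_le_mul h1 h1 (norm_nonneg (x - m t)) (by positivity : (0:ℝ) ≤ ‖x‖ + ‖m t‖), sq_nonneg (‖x‖ - ‖m t‖)]
  have hxmE : ∀ t ∈ J, Integrable (fun x => x - m t) (μ t) := by
    intro t ht
    have hpm := hprob t ht
    exact (hI1 t ht).sub (integrable_const _)
  have hxm1 : ∀ t ∈ J, Integrable (fun x => ‖x - m t‖) (μ t) := fun t ht => (hxmE t ht).norm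
  have hmean0 : ∀ t ∈ J, ∫ x, (x - m t) ∂(μ t) = 0 := by
    intro t ht
    have hpm := hprob t ht
    rw [integral_sub (hI1 t ht) (integrable_const _), MeasureTheory.integral_const]
    simp only [probReal_univ, one_smul]
    rw [← hm t ht, sub_self]
  set trP : ℝ → ℝ := fun t => ∫ x, ‖x - m t‖ ^ 2 ∂(μ t) with htrPdef
  have htrP0 : ∀ t, 0 ≤ trP t := fun t => integral_nonneg fun x => by positivity
  have hint1 : ∀ t ∈ J, (∫ x, ‖x - m t‖ ∂(μ t)) ≤ Real.sqrt (trP t) := by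
    intro t ht
    have hpm := hprob t ht
    have h := SLEaux.amgm_opt (X := ∫ x, ‖x - m t‖ ∂(μ t)) (a := 1) (b := trP t)
      (integral_nonneg fun x => norm_nonneg _) zero_le_one (htrP0 t) ?_
    · simpa using h
    intro ε hε
    have hptw : ∀ x : EuclideanSpace ℝ (Fin n), ‖x - m t‖ ≤ (ε + ‖x - m t‖ ^ 2 / ε) / 2 :=
      fun x => SLEaux.point_amgm (norm_nonneg _) hε
    calc ∫ x, ‖x - m t‖ ∂(μ t) ≤ ∫ x, (ε + ‖x - m t‖ ^ 2 / ε) / 2 ∂(μ t) :=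
          integral_mono (hxm1 t ht)
            (((integrable_const ε).add ((hxm2 t ht).div_const ε)).div_const 2) hptw
      _ = (ε * 1 + trP t / ε) / 2 := by
          rw [MeasureTheory.integral_div, integral_add (integrable_const ε) ((hxm2 t ht).div_const ε),
            MeasureTheory.integral_const, MeasureTheory.integral_div]
          simp only [probReal_univ, one_smul, smul_eq_mul]
          rw [htrPdef]
          ring
  -- trace bound via coordinates
  have htrPle : ∀ t ∈ J, trP t ≤ n * (D t + p t) := by
    intro t ht
    have hpm := hprob t ht
    set e : Fin n → EuclideanSpace ℝ (Fin n) := fun i => EuclideanSpace.single i (1:ℝ) with hedef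
    have hecont : ∀ w : EuclideanSpace ℝ (Fin n),
        Continuous (fun x : EuclideanSpace ℝ (Fin n) => (⟪x - m t, w⟫ : ℝ)) :=
      fun w => (continuous_id.sub continuous_const).inner continuous_const
    have henorm : ∀ i, ‖e i‖ = 1 := by
      intro i; rw [hedef]; simp
    have hcoordInt : ∀ i : Fin n, Integrable (fun x => (⟪x - m t, e i⟫ : ℝ) ^ 2) (μ t) := by
      intro i
      refine (hxm2 t ht).mono' (((hecont (e i)).pow 2).aestronglyMeasurable) ?_
      refine Filter.Eventually.of_forall fun x => ?_
      have h1 : |(⟪x - m t, e i⟫ : ℝ)| ≤ ‖x - m t‖ * ‖e i‖ := abs_real_inner_le_norm _ _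
      rw [henorm i, mul_one] at h1
      rw [Real.norm_of_nonneg (by positivity)]
      nlinarith [abs_nonneg (⟪x - m t, e i⟫ : ℝ), sq_abs (⟪x - m t, e i⟫ : ℝ),
        norm_nonneg (x - m t)]
    have hvecInt : ∀ i : Fin n,
        Integrable (fun x => (⟪x - m t, e i⟫ : ℝ) • (x - m t)) (μ t) := by
      intro i
      refine (hxm2 t ht).mono'
        (((hecont (e i)).smul (continuous_id.sub continuous_const)).aestronglyMeasurable) ?_
      refine Filter.Eventually.of_forall fun x => ?_
      rw [norm_smul, Real.norm_eq_abs]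
      have h1 : |(⟪x - m t, e i⟫ : ℝ)| ≤ ‖x - m t‖ * ‖e i‖ := abs_real_inner_le_norm _ _
      rw [henorm i, mul_one] at h1
      nlinarith [abs_nonneg (⟪x - m t, e i⟫ : ℝ), norm_nonneg (x - m t)]
    have hPi : ∀ i : Fin n, (⟪P t (e i), e i⟫ : ℝ) = ∫ x, (⟪x - m t, e i⟫ : ℝ) ^ 2 ∂(μ t) := by
      intro i
      rw [real_inner_comm (e i) (P t (e i)), hP t ht (e i), ← integral_inner (hvecInt i)]
      refine integral_congr_ae (Filter.Eventually.of_forall fun x => ?_)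
      simp only [real_inner_smul_right, real_inner_comm (x - m t) (e i), sq]
    have hnormsum : ∀ y : EuclideanSpace ℝ (Fin n), ‖y‖ ^ 2 = ∑ i, (⟪y, e i⟫ : ℝ) ^ 2 := by
      intro y
      have h1 : ∀ i, (⟪y, e i⟫ : ℝ) = y i := by
        intro i; rw [hedef]; simp [EuclideanSpace.inner_single_right]
      rw [EuclideanSpace.norm_eq, Real.sq_sqrt (by positivity)]
      refine Finset.sum_congr rfl fun i _ => ?_
      rw [h1 i, Real.norm_eq_abs, sq_abs]
    have htr_eq : trP t = ∑ i, (⟪P t (e i), e i⟫ : ℝ) := by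
      rw [htrPdef]
      calc ∫ x, ‖x - m t‖ ^ 2 ∂(μ t) = ∫ x, ∑ i, (⟪x - m t, e i⟫ : ℝ) ^ 2 ∂(μ t) :=
            integral_congr_ae (Filter.Eventually.of_forall fun x => hnormsum _)
        _ = ∑ i, ∫ x, (⟪x - m t, e i⟫ : ℝ) ^ 2 ∂(μ t) :=
            integral_finset_sum _ (fun i _ => hcoordInt i)
        _ = ∑ i, (⟪P t (e i), e i⟫ : ℝ) := by
            exact Finset.sum_congr rfl fun i _ => (hPi i).symm
    rw [htr_eq]
    have hterm : ∀ i : Fin n, (⟪P t (e i), e i⟫ : ℝ) ≤ D t + p t := by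
      intro i
      have hsplit : (⟪P t (e i), e i⟫ : ℝ)
          = (⟪(P t - Phat t) (e i), e i⟫ : ℝ) + (⟪Phat t (e i), e i⟫ : ℝ) := by
        rw [ContinuousLinearMap.sub_apply, inner_sub_left]
        ring
      have h1 : (⟪(P t - Phat t) (e i), e i⟫ : ℝ) ≤ D t := by
        refine (real_inner_le_norm _ _).trans ?_
        rw [henorm i, mul_one]
        exact ((P t - Phat t).le_opNorm (e i)).trans (by rw [henorm i, mul_one])
      have h2 : (⟪Phat t (e i), e i⟫ : ℝ) ≤ p t := by
        refine (real_inner_le_norm _ _).trans ?_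
        rw [henorm i, mul_one]
        exact ((Phat t).le_opNorm (e i)).trans (by rw [henorm i, mul_one])
      linarith [hsplit]
    calc ∑ i : Fin n, (⟪P t (e i), e i⟫ : ℝ) ≤ ∑ _i : Fin n, (D t + p t) :=
          Finset.sum_le_sum fun i _ => hterm i
      _ = n * (D t + p t) := by
          rw [Finset.sum_const, Finset.card_univ, Fintype.card_fin, nsmul_eq_mul]
  -- operator norm bound on Ψ - Θ
  have hop : ∀ s ∈ J, ‖Ψ s - Θ s‖ ≤ 2 * L s * (trP s + p s) := by
    intro s hs
    have hpm := hprob s hs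
    set c : EuclideanSpace ℝ (Fin n) := f (m s) (u s) with hcdef
    set A : EuclideanSpace ℝ (Fin n) →L[ℝ] EuclideanSpace ℝ (Fin n) :=
      fderiv ℝ (fun y => f y (u s)) (mhat s) with hAdef
    have hAnorm : ‖A‖ ≤ L s := hbound (mhat s) (u s)
    have hfcsub : Continuous fun x : EuclideanSpace ℝ (Fin n) => f x (u s) - c :=
      ((hf (u s)).continuous).sub continuous_const
    have hfsub : Integrable (fun x => f x (u s) - c) (μ s) :=
      (hfint s hs).sub (integrable_const _)
    have hfnorm : ∀ x : EuclideanSpace ℝ (Fin n), ‖f x (u s) - c‖ ≤ L s * ‖x - m s‖ :=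
      fun x => hlip (u s) x (m s)
    have h2L : (0:ℝ) ≤ 2 * L s := by have := hLpos s; linarith
    refine ContinuousLinearMap.opNorm_le_bound _
      (mul_nonneg h2L (add_nonneg (htrP0 s) (hp0 s))) fun w => ?_
    have hIa : Integrable (fun x => (⟪x - m s, w⟫ : ℝ) • (f x (u s) - c)) (μ s) := by
      refine ((hxm2 s hs).const_mul (L s * ‖w‖)).mono'
        (Continuous.aestronglyMeasurable (by have := (hf (u s)).continuous; fun_prop)) ?_
      refine Filter.Eventually.of_forall fun x => ?_
      rw [norm_smul, Real.norm_eq_abs]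
      have h1 : |(⟪x - m s, w⟫ : ℝ)| ≤ ‖x - m s‖ * ‖w‖ := abs_real_inner_le_norm _ _
      have h2 := hfnorm x
      calc |(⟪x - m s, w⟫ : ℝ)| * ‖f x (u s) - c‖
          ≤ (‖x - m s‖ * ‖w‖) * (L s * ‖x - m s‖) :=
            mul_le_mul h1 h2 (norm_nonneg _) (by positivity)
        _ = L s * ‖w‖ * ‖x - m s‖ ^ 2 := by ring
    have hIb : Integrable (fun x => (⟪f x (u s) - c, w⟫ : ℝ) • (x - m s)) (μ s) := by
      refine ((hxm2 s hs).const_mul (L s * ‖w‖)).mono'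
        (Continuous.aestronglyMeasurable (by have := (hf (u s)).continuous; fun_prop)) ?_
      refine Filter.Eventually.of_forall fun x => ?_
      rw [norm_smul, Real.norm_eq_abs]
      have h1 : |(⟪f x (u s) - c, w⟫ : ℝ)| ≤ ‖f x (u s) - c‖ * ‖w‖ := abs_real_inner_le_norm _ _
      have h2 := hfnorm x
      have h3 : |(⟪f x (u s) - c, w⟫ : ℝ)| ≤ L s * ‖x - m s‖ * ‖w‖ := by
        refine h1.trans ?_
        exact mul_le_mul_of_nonneg_right h2 (norm_nonneg w)
      calc |(⟪f x (u s) - c, w⟫ : ℝ)| * ‖x - m s‖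
          ≤ (L s * ‖x - m s‖ * ‖w‖) * ‖x - m s‖ :=
            mul_le_mul_of_nonneg_right h3 (norm_nonneg _)
        _ = L s * ‖w‖ * ‖x - m s‖ ^ 2 := by ring
    have hIc : Integrable (fun x => (⟪x - m s, w⟫ : ℝ) • c) (μ s) := by
      refine ((hxm1 s hs).const_mul (‖w‖ * ‖c‖)).mono'
        (Continuous.aestronglyMeasurable (by fun_prop)) ?_
      refine Filter.Eventually.of_forall fun x => ?_
      rw [norm_smul, Real.norm_eq_abs]
      have h1 : |(⟪x - m s, w⟫ : ℝ)| ≤ ‖x - m s‖ * ‖w‖ := abs_real_inner_le_norm _ _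
      calc |(⟪x - m s, w⟫ : ℝ)| * ‖c‖ ≤ (‖x - m s‖ * ‖w‖) * ‖c‖ :=
            mul_le_mul_of_nonneg_right h1 (norm_nonneg _)
        _ = ‖w‖ * ‖c‖ * ‖x - m s‖ := by ring
    have hId : Integrable (fun x => (⟪c, w⟫ : ℝ) • (x - m s)) (μ s) := (hxmE s hs).smul (⟪c, w⟫ : ℝ)
    have hzero1 : ∫ x, (⟪x - m s, w⟫ : ℝ) • c ∂(μ s) = 0 := by
      rw [_root_.integral_smul_const]
      have hflip : ∫ x, (⟪x - m s, w⟫ : ℝ) ∂(μ s) = ∫ x, (⟪w, x - m s⟫ : ℝ) ∂(μ s) :=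
        integral_congr_ae (Filter.Eventually.of_forall fun x => real_inner_comm _ _)
      rw [hflip, integral_inner (hxmE s hs), hmean0 s hs, inner_zero_right, zero_smul]
    have hzero2 : ∫ x, (⟪c, w⟫ : ℝ) • (x - m s) ∂(μ s) = 0 := by
      rw [MeasureTheory.integral_smul, hmean0 s hs, smul_zero]
    have hsplitInt : ∫ x, ((⟪x - m s, w⟫ : ℝ) • f x (u s)
          + (⟪f x (u s), w⟫ : ℝ) • (x - m s)) ∂(μ s)
        = ∫ x, ((⟪x - m s, w⟫ : ℝ) • (f x (u s) - c)
          + (⟪f x (u s) - c, w⟫ : ℝ) • (x - m s)) ∂(μ s) := by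
      have hptw : ∀ x : EuclideanSpace ℝ (Fin n),
          (⟪x - m s, w⟫ : ℝ) • f x (u s) + (⟪f x (u s), w⟫ : ℝ) • (x - m s)
          = ((⟪x - m s, w⟫ : ℝ) • (f x (u s) - c)
              + (⟪f x (u s) - c, w⟫ : ℝ) • (x - m s))
            + ((⟪x - m s, w⟫ : ℝ) • c + (⟪c, w⟫ : ℝ) • (x - m s)) := by
        intro x
        simp only [inner_sub_left, sub_smul, smul_sub]
        abel
      have hsum : ∫ x, (((⟪x - m s, w⟫ : ℝ) • (f x (u s) - c)
              + (⟪f x (u s) - c, w⟫ : ℝ) • (x - m s))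
            + ((⟪x - m s, w⟫ : ℝ) • c + (⟪c, w⟫ : ℝ) • (x - m s))) ∂(μ s)
          = (∫ x, ((⟪x - m s, w⟫ : ℝ) • (f x (u s) - c)
              + (⟪f x (u s) - c, w⟫ : ℝ) • (x - m s)) ∂(μ s))
            + ∫ x, ((⟪x - m s, w⟫ : ℝ) • c + (⟪c, w⟫ : ℝ) • (x - m s)) ∂(μ s) :=
        integral_add (hIa.add hIb) (hIc.add hId)
      have hsum2 : ∫ x, ((⟪x - m s, w⟫ : ℝ) • c + (⟪c, w⟫ : ℝ) • (x - m s)) ∂(μ s)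
          = (∫ x, (⟪x - m s, w⟫ : ℝ) • c ∂(μ s))
            + ∫ x, (⟪c, w⟫ : ℝ) • (x - m s) ∂(μ s) := integral_add hIc hId
      rw [integral_congr_ae (Filter.Eventually.of_forall hptw), hsum, hsum2, hzero1, hzero2]
      simp
    set Xint : EuclideanSpace ℝ (Fin n) := ∫ x, ((⟪x - m s, w⟫ : ℝ) • (f x (u s) - c)
        + (⟪f x (u s) - c, w⟫ : ℝ) • (x - m s)) ∂(μ s) with hXdef
    have hΨw : Ψ s w = Xint + (G (u s) ∘L adjoint (G (u s))) w := by
      rw [hΨdef s hs w, hsplitInt]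
    have hΘw : Θ s w = A (Phat s w) + Phat s ((adjoint A) w)
        + (G (u s) ∘L adjoint (G (u s))) w := by
      rw [hΘdef]
      simp only [ContinuousLinearMap.add_apply, ContinuousLinearMap.comp_apply]
      rfl
    have hkey : (Ψ s - Θ s) w = Xint - A (Phat s w) - Phat s ((adjoint A) w) := by
      rw [ContinuousLinearMap.sub_apply, hΨw, hΘw]
      abel
    rw [hkey]
    have hn1 : ‖Xint‖ ≤ 2 * L s * ‖w‖ * trP s := by
      rw [hXdef]
      refine (MeasureTheory.norm_integral_le_integral_norm _).trans ?_
      have hptw : ∀ x : EuclideanSpace ℝ (Fin n),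
          ‖(⟪x - m s, w⟫ : ℝ) • (f x (u s) - c) + (⟪f x (u s) - c, w⟫ : ℝ) • (x - m s)‖
            ≤ (2 * L s * ‖w‖) * ‖x - m s‖ ^ 2 := by
        intro x
        have h1 : |(⟪x - m s, w⟫ : ℝ)| ≤ ‖x - m s‖ * ‖w‖ := abs_real_inner_le_norm _ _
        have h2 : |(⟪f x (u s) - c, w⟫ : ℝ)| ≤ ‖f x (u s) - c‖ * ‖w‖ := abs_real_inner_le_norm _ _
        have h3 := hfnorm x
        calc ‖(⟪x - m s, w⟫ : ℝ) • (f x (u s) - c) + (⟪f x (u s) - c, w⟫ : ℝ) • (x - m s)‖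
            ≤ ‖(⟪x - m s, w⟫ : ℝ) • (f x (u s) - c)‖
              + ‖(⟪f x (u s) - c, w⟫ : ℝ) • (x - m s)‖ := norm_add_le _ _
          _ = |(⟪x - m s, w⟫ : ℝ)| * ‖f x (u s) - c‖
              + |(⟪f x (u s) - c, w⟫ : ℝ)| * ‖x - m s‖ := by
              rw [norm_smul, norm_smul, Real.norm_eq_abs, Real.norm_eq_abs]
          _ ≤ (‖x - m s‖ * ‖w‖) * (L s * ‖x - m s‖)
              + (‖f x (u s) - c‖ * ‖w‖) * ‖x - m s‖ := by
              refine add_le_add (mul_le_mul h1 h3 (norm_nonneg _) (by positivity))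
                (mul_le_mul_of_nonneg_right h2 (norm_nonneg _))
          _ ≤ (‖x - m s‖ * ‖w‖) * (L s * ‖x - m s‖)
              + ((L s * ‖x - m s‖) * ‖w‖) * ‖x - m s‖ := by
              refine add_le_add_right ?_ _
              refine mul_le_mul_of_nonneg_right
                (mul_le_mul_of_nonneg_right h3 (norm_nonneg w)) (norm_nonneg _)
          _ = (2 * L s * ‖w‖) * ‖x - m s‖ ^ 2 := by ring
      calc ∫ x, ‖(⟪x - m s, w⟫ : ℝ) • (f x (u s) - c)
              + (⟪f x (u s) - c, w⟫ : ℝ) • (x - m s)‖ ∂(μ s)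
          ≤ ∫ x, (2 * L s * ‖w‖) * ‖x - m s‖ ^ 2 ∂(μ s) :=
            integral_mono (hIa.add hIb).norm ((hxm2 s hs).const_mul _) hptw
        _ = 2 * L s * ‖w‖ * trP s := by
            rw [MeasureTheory.integral_const_mul]
    have hn2 : ‖A (Phat s w)‖ ≤ L s * (p s * ‖w‖) := by
      calc ‖A (Phat s w)‖ ≤ ‖A‖ * ‖Phat s w‖ := A.le_opNorm _
        _ ≤ L s * (p s * ‖w‖) :=
            mul_le_mul hAnorm ((Phat s).le_opNorm w) (norm_nonneg _) (hLpos s)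
    have hn3 : ‖Phat s ((adjoint A) w)‖ ≤ p s * (L s * ‖w‖) := by
      calc ‖Phat s ((adjoint A) w)‖ ≤ ‖Phat s‖ * ‖(adjoint A) w‖ := (Phat s).le_opNorm _
        _ ≤ ‖Phat s‖ * (‖adjoint A‖ * ‖w‖) :=
            mul_le_mul_of_nonneg_left ((adjoint A).le_opNorm w) (norm_nonneg _)
        _ = p s * (‖A‖ * ‖w‖) := by rw [ContinuousLinearMap.adjoint.norm_map]
        _ ≤ p s * (L s * ‖w‖) :=
            mul_le_mul_of_nonneg_left
              (mul_le_mul_of_nonneg_right hAnorm (norm_nonneg w)) (hp0 s)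
    calc ‖Xint - A (Phat s w) - Phat s ((adjoint A) w)‖
        ≤ ‖Xint - A (Phat s w)‖ + ‖Phat s ((adjoint A) w)‖ := norm_sub_le _ _
      _ ≤ (‖Xint‖ + ‖A (Phat s w)‖) + ‖Phat s ((adjoint A) w)‖ :=
          add_le_add_left (norm_sub_le _ _) _
      _ ≤ (2 * L s * ‖w‖ * trP s + L s * (p s * ‖w‖)) + p s * (L s * ‖w‖) :=
          add_le_add (add_le_add hn1 hn2) hn3
      _ = 2 * L s * (trP s + p s) * ‖w‖ := by ring
  -- covariance difference identity and inequality
  have hPdiff : ∀ t ∈ J, P t - Phat t = ∫ s' in (0:ℝ)..t, (Ψ s' - Θ s') := by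
    intro t ht
    rw [hPeq t ht, hPhateq' t ht,
      intervalIntegral.integral_sub (SLEaux.II_mono htf0 hΨint hzero ht)
        (SLEaux.II_mono htf0 hΘint' hzero ht)]
    abel
  have hLD : IntervalIntegrable (fun s' => 2 * (n:ℝ) * L s' * D s') volume 0 t_f :=
    (hLint.const_mul (2*(n:ℝ))).mul_continuousOn (hDc.mono (by rw [Set.uIcc_of_le htf0]))
  have hLpD : IntervalIntegrable (fun s' => (2*(n:ℝ)+2) * (L s' * p s')) volume 0 t_f :=
    hLpInt.const_mul _
  have hDineq : ∀ t ∈ J, D t ≤ (2*(n:ℝ)+2) * I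
      + ∫ s' in (0:ℝ)..t, (2 * (n:ℝ) * L s') * D s' := by
    intro t ht
    have h1 : D t ≤ ∫ s' in (0:ℝ)..t, ‖Ψ s' - Θ s'‖ := by
      calc D t = ‖P t - Phat t‖ := rfl
        _ = ‖∫ s' in (0:ℝ)..t, (Ψ s' - Θ s')‖ := by rw [hPdiff t ht]
        _ ≤ ∫ s' in (0:ℝ)..t, ‖Ψ s' - Θ s'‖ :=
            intervalIntegral.norm_integral_le_integral_norm ht.1
    have h2 : ∫ s' in (0:ℝ)..t, ‖Ψ s' - Θ s'‖
        ≤ ∫ s' in (0:ℝ)..t, (2 * (n:ℝ) * L s' * D s' + (2*(n:ℝ)+2) * (L s' * p s')) := by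
      refine intervalIntegral.integral_mono_on ht.1
        (SLEaux.II_mono htf0 ((hΨint.sub hΘint').norm) hzero ht)
        (SLEaux.II_mono htf0 (hLD.add hLpD) hzero ht) ?_
      intro s' hs'
      have hs'J : s' ∈ J := ⟨hs'.1, hs'.2.trans ht.2⟩
      have hL2 : (0:ℝ) ≤ L s' := hLpos s'
      nlinarith [hop s' hs'J, mul_le_mul_of_nonneg_left (htrPle s' hs'J) hL2,
        hp0 s', hD0 s', htrP0 s']
    have h3 : ∫ s' in (0:ℝ)..t, (2 * (n:ℝ) * L s' * D s' + (2*(n:ℝ)+2) * (L s' * p s'))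
        = (∫ s' in (0:ℝ)..t, 2 * (n:ℝ) * L s' * D s')
          + ∫ s' in (0:ℝ)..t, (2*(n:ℝ)+2) * (L s' * p s') :=
      intervalIntegral.integral_add (SLEaux.II_mono htf0 hLD hzero ht)
        (SLEaux.II_mono htf0 hLpD hzero ht)
    have h4 : ∫ s' in (0:ℝ)..t, (2*(n:ℝ)+2) * (L s' * p s') ≤ (2*(n:ℝ)+2) * I := by
      rw [intervalIntegral.integral_const_mul]
      refine mul_le_mul_of_nonneg_left ?_ (by positivity)
      rw [hIL]
      exact SLEaux.primitive_mono htf0 hLpInt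
        (fun s' _ => mul_nonneg (hLpos s') (hp0 s')) ht hend ht.2
    have h5 : ∫ s' in (0:ℝ)..t, 2 * (n:ℝ) * L s' * D s'
        = ∫ s' in (0:ℝ)..t, (2 * (n:ℝ) * L s') * D s' := by
      refine intervalIntegral.integral_congr fun s' _ => by ring
    linarith
  have hgron := SLEaux.gronwall_aux htf0 (mul_nonneg (by positivity) hI0)
    (fun s' => 2 * (n:ℝ) * L s') D (hLint.const_mul _)
    (fun s' _ => mul_nonneg (by positivity) (hLpos s'))
    hDc (fun s' _ => hD0 s') hDineq
  have hceq : (∫ s' in (0:ℝ)..t_f, 2 * (n:ℝ) * L s') = 2 * (n:ℝ) * Λ := by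
    rw [intervalIntegral.integral_const_mul, ← hΛL]
  rw [hceq] at hgron
  set B : ℝ := (2*(n:ℝ)+2) * I * SLEaux.gronC ⌈2 * (2 * (n:ℝ) * Λ)⌉₊ with hBdef
  have hB : ∀ t ∈ J, D t ≤ B := hgron
  have hB0 : 0 ≤ B :=
    mul_nonneg (mul_nonneg (by positivity) hI0)
      ((zero_le_one.trans (SLEaux.gronC_one_le _)))
  have hILp : I = ∫ s' in (0:ℝ)..t_f, L s' * p s' := hIL
  -- mean error pointwise bound
  have hmean_err : ∀ s ∈ J, ‖F s - f (mhat s) (u s)‖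
      ≤ L s * (Real.sqrt (trP s) + Eer s) := by
    intro s hs
    have hpm := hprob s hs
    have h1 : F s - f (mhat s) (u s) = ∫ x, (f x (u s) - f (mhat s) (u s)) ∂(μ s) := by
      rw [integral_sub (hfint s hs) (integrable_const _), MeasureTheory.integral_const]
      simp only [probReal_univ, one_smul]
      rfl
    rw [h1]
    refine (MeasureTheory.norm_integral_le_integral_norm _).trans ?_
    have hptw : ∀ x : EuclideanSpace ℝ (Fin n), ‖f x (u s) - f (mhat s) (u s)‖
        ≤ L s * ‖x - m s‖ + L s * Eer s := by
      intro x
      have h2 := hlip (u s) x (mhat s)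
      have h3 : ‖x - mhat s‖ ≤ ‖x - m s‖ + ‖m s - mhat s‖ := by
        have h4 : x - mhat s = (x - m s) + (m s - mhat s) := by abel
        rw [h4]; exact norm_add_le _ _
      have h4 : Eer s = ‖m s - mhat s‖ := rfl
      have h5 := hLpos s
      nlinarith [mul_le_mul_of_nonneg_left h3 h5]
    calc ∫ x, ‖f x (u s) - f (mhat s) (u s)‖ ∂(μ s)
        ≤ ∫ x, (L s * ‖x - m s‖ + L s * Eer s) ∂(μ s) :=
          integral_mono ((hfint s hs).sub (integrable_const _)).norm
            (((hxm1 s hs).const_mul _).add (integrable_const _)) hptw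
      _ = L s * (∫ x, ‖x - m s‖ ∂(μ s)) + L s * Eer s := by
          rw [integral_add ((hxm1 s hs).const_mul _) (integrable_const _),
            MeasureTheory.integral_const_mul, MeasureTheory.integral_const]
          simp [measure_univ]
      _ ≤ L s * Real.sqrt (trP s) + L s * Eer s := by
          have h6 := mul_le_mul_of_nonneg_left (hint1 s hs) (hLpos s)
          linarith
      _ = L s * (Real.sqrt (trP s) + Eer s) := by ring
  have hsqrtn : (0:ℝ) ≤ Real.sqrt n := Real.sqrt_nonneg _
  have hsqtr : ∀ s ∈ J, Real.sqrt (trP s)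
      ≤ Real.sqrt n * (Real.sqrt (D s) + Real.sqrt (p s)) := by
    intro s hs
    calc Real.sqrt (trP s) ≤ Real.sqrt ((n:ℝ) * (D s + p s)) :=
          Real.sqrt_le_sqrt (htrPle s hs)
      _ = Real.sqrt n * Real.sqrt (D s + p s) := Real.sqrt_mul (Nat.cast_nonneg n) _
      _ ≤ Real.sqrt n * (Real.sqrt (D s) + Real.sqrt (p s)) :=
          mul_le_mul_of_nonneg_left (SLEaux.sqrt_add_le _ _) hsqrtn
  set C₀ : ℝ := Real.sqrt n * (Real.sqrt B * Λ + Real.sqrt (Λ * I)) with hC₀def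
  have hC₀0 : 0 ≤ C₀ :=
    mul_nonneg hsqrtn (add_nonneg (mul_nonneg (Real.sqrt_nonneg _) hΛ0) (Real.sqrt_nonneg _))
  have hsqDc : ContinuousOn (fun s' => Real.sqrt (D s')) J :=
    Real.continuous_sqrt.comp_continuousOn hDc
  have hsqp_cont : ContinuousOn (fun s' => Real.sqrt (p s')) J :=
    Real.continuous_sqrt.comp_continuousOn hpc
  have hLsqp : IntervalIntegrable (fun s' => L s' * Real.sqrt (p s')) volume 0 t_f :=
    hLint.mul_continuousOn (hsqp_cont.mono (by rw [Set.uIcc_of_le htf0]))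
  have hLsqD : IntervalIntegrable (fun s' => L s' * Real.sqrt (D s')) volume 0 t_f :=
    hLint.mul_continuousOn (hsqDc.mono (by rw [Set.uIcc_of_le htf0]))
  have hLE : IntervalIntegrable (fun s' => L s' * Eer s') volume 0 t_f :=
    hLint.mul_continuousOn (hEc.mono (by rw [Set.uIcc_of_le htf0]))
  have hterm1 : IntervalIntegrable
      (fun s' => L s' * (Real.sqrt n * (Real.sqrt (D s') + Real.sqrt (p s')))) volume 0 t_f :=
    hLint.mul_continuousOn ((continuousOn_const.mul (hsqDc.add hsqp_cont)).mono
      (by rw [Set.uIcc_of_le htf0]))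
  have hLp_sqrt : ∫ s' in (0:ℝ)..t_f, L s' * Real.sqrt (p s') ≤ Real.sqrt (Λ * I) := by
    refine SLEaux.amgm_opt ?_ hΛ0 hI0 ?_
    · exact intervalIntegral.integral_nonneg htf0
        (fun s' _ => mul_nonneg (hLpos s') (Real.sqrt_nonneg _))
    intro ε hε
    have hptw : ∀ s' ∈ J, L s' * Real.sqrt (p s')
        ≤ (ε * L s' + (L s' * p s') / ε) / 2 := by
      intro s' _
      have h1 := SLEaux.point_amgm (Real.sqrt_nonneg (p s')) hε
      rw [Real.sq_sqrt (hp0 s')] at h1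
      have h2 := mul_le_mul_of_nonneg_left h1 (hLpos s')
      calc L s' * Real.sqrt (p s') ≤ L s' * ((ε + p s' / ε) / 2) := h2
        _ = (ε * L s' + (L s' * p s') / ε) / 2 := by ring
    have hRHSi : IntervalIntegrable (fun s' => (ε * L s' + (L s' * p s') / ε) / 2)
        volume 0 t_f := ((hLint.const_mul ε).add (hLpInt.div_const ε)).div_const 2
    calc ∫ s' in (0:ℝ)..t_f, L s' * Real.sqrt (p s')
        ≤ ∫ s' in (0:ℝ)..t_f, (ε * L s' + (L s' * p s') / ε) / 2 :=
          intervalIntegral.integral_mono_on htf0 hLsqp hRHSi hptw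
      _ = (ε * Λ + I / ε) / 2 := by
          rw [intervalIntegral.integral_div, intervalIntegral.integral_add
              (hLint.const_mul ε) (hLpInt.div_const ε),
            intervalIntegral.integral_const_mul, intervalIntegral.integral_div,
            ← hΛL, ← hILp]
  have hEineq : ∀ t ∈ J, Eer t ≤ C₀ + ∫ s' in (0:ℝ)..t, L s' * Eer s' := by
    intro t ht
    have hediff : m t - mhat t = ∫ s' in (0:ℝ)..t, (F s' - f (mhat s') (u s')) := by
      rw [hmeq' t ht, hmhateq t ht, intervalIntegral.integral_sub
        (SLEaux.II_mono htf0 hFint' hzero ht) (SLEaux.II_mono htf0 hfmint hzero ht)]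
      abel
    have h1 : Eer t ≤ ∫ s' in (0:ℝ)..t, ‖F s' - f (mhat s') (u s')‖ := by
      calc Eer t = ‖m t - mhat t‖ := rfl
        _ = ‖∫ s' in (0:ℝ)..t, (F s' - f (mhat s') (u s'))‖ := by rw [hediff]
        _ ≤ _ := intervalIntegral.norm_integral_le_integral_norm ht.1
    have h2 : ∫ s' in (0:ℝ)..t, ‖F s' - f (mhat s') (u s')‖
        ≤ ∫ s' in (0:ℝ)..t, (L s' * (Real.sqrt n * (Real.sqrt (D s') + Real.sqrt (p s')))
            + L s' * Eer s') := by
      refine intervalIntegral.integral_mono_on ht.1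
        (SLEaux.II_mono htf0 ((hFint'.sub hfmint).norm) hzero ht)
        (SLEaux.II_mono htf0 (hterm1.add hLE) hzero ht) ?_
      intro s' hs'
      have hs'J : s' ∈ J := ⟨hs'.1, hs'.2.trans ht.2⟩
      have h3 := hmean_err s' hs'J
      have h4 := mul_le_mul_of_nonneg_left (hsqtr s' hs'J) (hLpos s')
      nlinarith
    have h3 : ∫ s' in (0:ℝ)..t, (L s' * (Real.sqrt n * (Real.sqrt (D s') + Real.sqrt (p s')))
          + L s' * Eer s')
        = (∫ s' in (0:ℝ)..t, L s' * (Real.sqrt n * (Real.sqrt (D s') + Real.sqrt (p s'))))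
          + ∫ s' in (0:ℝ)..t, L s' * Eer s' :=
      intervalIntegral.integral_add (SLEaux.II_mono htf0 hterm1 hzero ht)
        (SLEaux.II_mono htf0 hLE hzero ht)
    have h4 : ∫ s' in (0:ℝ)..t, L s' * (Real.sqrt n * (Real.sqrt (D s') + Real.sqrt (p s')))
        ≤ C₀ := by
      have e1 : ∫ s' in (0:ℝ)..t, L s' * (Real.sqrt n * (Real.sqrt (D s') + Real.sqrt (p s')))
          = Real.sqrt n * ∫ s' in (0:ℝ)..t, (L s' * Real.sqrt (D s') + L s' * Real.sqrt (p s')) := by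
        rw [← intervalIntegral.integral_const_mul]
        exact intervalIntegral.integral_congr fun s' _ => by ring
      have e2 : ∫ s' in (0:ℝ)..t, (L s' * Real.sqrt (D s') + L s' * Real.sqrt (p s'))
          = (∫ s' in (0:ℝ)..t, L s' * Real.sqrt (D s'))
            + ∫ s' in (0:ℝ)..t, L s' * Real.sqrt (p s') :=
        intervalIntegral.integral_add (SLEaux.II_mono htf0 hLsqD hzero ht)
          (SLEaux.II_mono htf0 hLsqp hzero ht)
      have e3 : ∫ s' in (0:ℝ)..t, L s' * Real.sqrt (D s') ≤ Real.sqrt B * Λ := by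
        have e3a : ∫ s' in (0:ℝ)..t, L s' * Real.sqrt (D s')
            ≤ ∫ s' in (0:ℝ)..t, L s' * Real.sqrt B := by
          refine intervalIntegral.integral_mono_on ht.1
            (SLEaux.II_mono htf0 hLsqD hzero ht)
            ((SLEaux.II_mono htf0 hLint hzero ht).mul_const _) ?_
          intro s' hs'
          have hs'J : s' ∈ J := ⟨hs'.1, hs'.2.trans ht.2⟩
          exact mul_le_mul_of_nonneg_left (Real.sqrt_le_sqrt (hB s' hs'J)) (hLpos s')
        have e3b : ∫ s' in (0:ℝ)..t, L s' * Real.sqrt B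
            = (∫ s' in (0:ℝ)..t, L s') * Real.sqrt B := intervalIntegral.integral_mul_const _ _
        have e3c : ∫ s' in (0:ℝ)..t, L s' ≤ Λ := by
          rw [hΛL]
          exact SLEaux.primitive_mono htf0 hLint (fun s' _ => hLpos s') ht hend ht.2
        have := mul_le_mul_of_nonneg_right e3c (Real.sqrt_nonneg B)
        nlinarith [Real.sqrt_nonneg B]
      have e4 : ∫ s' in (0:ℝ)..t, L s' * Real.sqrt (p s') ≤ Real.sqrt (Λ * I) := by
        refine le_trans ?_ hLp_sqrt
        exact SLEaux.primitive_mono htf0 hLsqp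
          (fun s' _ => mul_nonneg (hLpos s') (Real.sqrt_nonneg _)) ht hend ht.2
      rw [e1, e2, hC₀def]
      have e5 : (∫ s' in (0:ℝ)..t, L s' * Real.sqrt (D s'))
          + ∫ s' in (0:ℝ)..t, L s' * Real.sqrt (p s') ≤ Real.sqrt B * Λ + Real.sqrt (Λ * I) :=
        add_le_add e3 e4
      exact mul_le_mul_of_nonneg_left e5 hsqrtn
    linarith
  have hgron2 := SLEaux.gronwall_aux htf0 hC₀0 L Eer hLint (fun s' _ => hLpos s')
    hEc (fun s' _ => hE0 s') hEineq
  rw [← hΛL] at hgron2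
  -- final combination
  have hsqB2 : Real.sqrt B ^ 2 = B := Real.sq_sqrt hB0
  have hsqLI2 : Real.sqrt (Λ * I) ^ 2 = Λ * I := Real.sq_sqrt (mul_nonneg hΛ0 hI0)
  have hsqn2 : Real.sqrt (n:ℝ) ^ 2 = (n:ℝ) := Real.sq_sqrt (Nat.cast_nonneg n)
  have hE1 : Eer t₁ ≤ C₀ * SLEaux.gronC ⌈2 * Λ⌉₊ := hgron2 t₁ ht₁
  have hEsq : Eer t₁ ^ 2 ≤ (C₀ * SLEaux.gronC ⌈2 * Λ⌉₊) ^ 2 :=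
    pow_le_pow_left₀ (hE0 t₁) hE1 2
  have hD2 : D t₂ ≤ B := hB t₂ ht₂
  have hmain : (C₀ * SLEaux.gronC ⌈2 * Λ⌉₊) ^ 2 + B ≤ SLEaux.gfun n Λ * I := by
    have hkey : (n:ℝ) * (SLEaux.gronC ⌈2 * Λ⌉₊) ^ 2 * (2 * (B * Λ ^ 2) + 2 * (Λ * I)) + B
        = SLEaux.gfun n Λ * I := by
      unfold SLEaux.gfun
      rw [hBdef]
      ring
    rw [← hkey]
    have hexp : (C₀ * SLEaux.gronC ⌈2 * Λ⌉₊) ^ 2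
        = (n:ℝ) * (SLEaux.gronC ⌈2 * Λ⌉₊) ^ 2
          * (Real.sqrt B * Λ + Real.sqrt (Λ * I)) ^ 2 := by
      rw [hC₀def]
      have h1 : (Real.sqrt n * (Real.sqrt B * Λ + Real.sqrt (Λ * I))
            * SLEaux.gronC ⌈2 * Λ⌉₊) ^ 2
          = Real.sqrt (n:ℝ) ^ 2 * (SLEaux.gronC ⌈2 * Λ⌉₊) ^ 2
            * (Real.sqrt B * Λ + Real.sqrt (Λ * I)) ^ 2 := by ring
      rw [h1, hsqn2]
    rw [hexp]
    have hfac : (Real.sqrt B * Λ + Real.sqrt (Λ * I)) ^ 2 ≤ 2 * (B * Λ ^ 2) + 2 * (Λ * I) := by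
      nlinarith [sq_nonneg (Real.sqrt B * Λ - Real.sqrt (Λ * I)), hsqB2, hsqLI2,
        sq_nonneg Λ, Real.sqrt_nonneg B, Real.sqrt_nonneg (Λ * I)]
    have hmul : (0:ℝ) ≤ (n:ℝ) * (SLEaux.gronC ⌈2 * Λ⌉₊) ^ 2 := by positivity
    nlinarith [mul_le_mul_of_nonneg_left hfac hmul]
  have hcast : ((SLEaux.gfun n ((Real.toNNReal Λ : ℝ≥0) : ℝ)).toNNReal : ℝ)
      = SLEaux.gfun n Λ := by
    rw [Real.coe_toNNReal Λ hΛ0, Real.coe_toNNReal _ (SLEaux.gfun_nonneg n hΛ0)]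
  calc ‖m t₁ - mhat t₁‖ ^ 2 + ‖P t₂ - Phat t₂‖ = Eer t₁ ^ 2 + D t₂ := rfl
    _ ≤ SLEaux.gfun n Λ * I := by linarith
    _ = ((SLEaux.gfun n ((Real.toNNReal Λ : ℝ≥0) : ℝ)).toNNReal : ℝ) * I := by rw [hcast]
end

section
/- Suppose in addition that the control takes values in a bounded set, i.e., there is B ≥ 0 with φ(‖u(t)‖) ≤ B for a.e. t ∈ [0,t_f]. Then there exists a constant C > 0, depending only on the dimension n, on t_f, and on B, such that for every true moment flow (μ_t) for (f,G,u) with mean m and covariance P and its statistical linearization (m̂,P̂) defined on all of [0,t_f], one has sup_{t∈[0,t_f]} ‖m(t) − m̂(t)‖² + sup_{t∈[0,t_f]} ‖P(t) − P̂(t)‖ ≤ C ∫₀^{t_f} ‖P̂(s)‖ ds. -/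
open MeasureTheory intervalIntegral ContinuousLinearMap
open scoped RealInnerProductSpace NNReal

lemma sq_integral_le_integral_sq {α : Type*} [MeasurableSpace α] {μ : Measure α}
    [IsProbabilityMeasure μ] {g : α → ℝ} (hg : Integrable g μ)
    (hg2 : Integrable (fun x => g x ^ 2) μ) :
    (∫ x, g x ∂μ) ^ 2 ≤ ∫ x, g x ^ 2 ∂μ := by
  set c := ∫ x, g x ∂μ with hc
  have h0 : 0 ≤ ∫ x, (g x - c) ^ 2 ∂μ := integral_nonneg fun x => sq_nonneg _
  have hexp : ∫ x, (g x - c) ^ 2 ∂μ = (∫ x, g x ^ 2 ∂μ) - c ^ 2 := by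
    have he : ∀ x, (g x - c) ^ 2 = (g x ^ 2 - 2 * c * g x) + c ^ 2 := fun x => by ring
    have i1 : Integrable (fun x => g x ^ 2 - 2 * c * g x) μ := by
      exact hg2.sub (hg.const_mul (2 * c))
    have i2 : Integrable (fun x => 2 * c * g x) μ := hg.const_mul (2 * c)
    rw [integral_congr_ae (Filter.Eventually.of_forall he),
      integral_add i1 (integrable_const _),
      integral_sub hg2 i2, MeasureTheory.integral_const_mul, MeasureTheory.integral_const]
    simp [← hc]; ring
  linarith

set_option maxHeartbeats 1000000 in
lemma pointwise_bounds {n : ℕ} (ν : Measure (EuclideanSpace ℝ (Fin n)))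
    [IsProbabilityMeasure ν]
    (F : EuclideanSpace ℝ (Fin n) → EuclideanSpace ℝ (Fin n)) (hFc : Continuous F)
    (L : ℝ) (hL : 0 ≤ L) (hlip : ∀ x y, ‖F x - F y‖ ≤ L * ‖x - y‖)
    (hx1 : Integrable (fun x : EuclideanSpace ℝ (Fin n) => x) ν)
    (hx2 : Integrable (fun x : EuclideanSpace ℝ (Fin n) => ‖x‖ ^ 2) ν)
    (hFi : Integrable F ν)
    (mm mh : EuclideanSpace ℝ (Fin n)) (hmm : mm = ∫ x, x ∂ν)
    (Pop Q A : EuclideanSpace ℝ (Fin n) →L[ℝ] EuclideanSpace ℝ (Fin n))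
    (hPop : ∀ w, Pop w = ∫ x, ⟪x - mm, w⟫ • (x - mm) ∂ν)
    (hA : ‖A‖ ≤ L) :
    ‖(∫ x, F x ∂ν) - F mh‖ ≤ L * Real.sqrt (n * ‖Pop‖) + L * ‖mm - mh‖ ∧
    ∀ w, ‖(∫ x, (⟪x - mm, w⟫ • F x + ⟪F x, w⟫ • (x - mm)) ∂ν)
        - (A (Q w) + Q ((adjoint A) w))‖ ≤ (2 * L * (n * ‖Pop‖) + 2 * L * ‖Q‖) * ‖w‖ := by
  have hx1n : Integrable (fun x : EuclideanSpace ℝ (Fin n) => ‖x‖) ν := hx1.norm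
  have hdi : Integrable (fun x : EuclideanSpace ℝ (Fin n) => x - mm) ν :=
    hx1.sub (integrable_const mm)
  have hdn : Integrable (fun x : EuclideanSpace ℝ (Fin n) => ‖x - mm‖) ν := hdi.norm
  have hcent : (∫ x, (x - mm) ∂ν) = 0 := by
    rw [integral_sub hx1 (integrable_const mm), MeasureTheory.integral_const, probReal_univ,
      one_smul, hmm, sub_self]
  have hVint : Integrable (fun x : EuclideanSpace ℝ (Fin n) => ‖x - mm‖ ^ 2) ν := by
    refine Integrable.mono' ((hx2.add (hx1n.const_mul (2 * ‖mm‖))).add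
      (integrable_const (‖mm‖ ^ 2)))
      ((continuous_id.sub continuous_const).norm.pow 2).aestronglyMeasurable
      (Filter.Eventually.of_forall fun x => ?_)
    have h1 := norm_sub_le x mm
    have h2 : (0:ℝ) ≤ ‖x - mm‖ := norm_nonneg _
    rw [Real.norm_eq_abs, abs_of_nonneg (sq_nonneg _)]
    simp only [Pi.add_apply]
    nlinarith [norm_nonneg x, norm_nonneg mm]
  set V := ∫ x, ‖x - mm‖ ^ 2 ∂ν with hVdef
  have hV0 : 0 ≤ V := integral_nonneg fun x => sq_nonneg _
  have hL1 : (∫ x, ‖x - mm‖ ∂ν) ≤ Real.sqrt V := by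
    rw [Real.le_sqrt (integral_nonneg fun x => norm_nonneg _) hV0]
    exact sq_integral_le_integral_sq hdn hVint
  -- V ≤ n * ‖Pop‖
  have hVP : V ≤ n * ‖Pop‖ := by
    set E : Fin n → EuclideanSpace ℝ (Fin n) := fun i => EuclideanSpace.single i (1:ℝ) with hE
    have hnormE : ∀ i, ‖E i‖ = 1 := fun i => by simp [hE]
    have hnorm : ∀ y : EuclideanSpace ℝ (Fin n), ‖y‖ ^ 2 = ∑ i, ⟪y, E i⟫ ^ 2 := by
      intro y
      rw [EuclideanSpace.norm_eq, Real.sq_sqrt (by positivity)]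
      refine Finset.sum_congr rfl fun i _ => ?_
      rw [hE]
      rw [real_inner_comm, EuclideanSpace.inner_single_left]
      simp [Real.norm_eq_abs, sq_abs]
    have hiint : ∀ i, Integrable (fun x => ⟪x - mm, E i⟫ ^ 2) ν := by
      intro i
      refine Integrable.mono' hVint
        (((continuous_id.sub continuous_const).inner continuous_const).pow 2).aestronglyMeasurable
        (Filter.Eventually.of_forall fun x => ?_)
      rw [Real.norm_eq_abs, abs_of_nonneg (sq_nonneg _)]
      have := abs_real_inner_le_norm (x - mm) (E i)
      rw [hnormE i, mul_one] at this
      calc ⟪x - mm, E i⟫ ^ 2 = |⟪x - mm, E i⟫| ^ 2 := (sq_abs _).symm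
        _ ≤ ‖x - mm‖ ^ 2 := pow_le_pow_left₀ (abs_nonneg _) this 2
    have hinteg : ∀ i, Integrable (fun x => ⟪x - mm, E i⟫ • (x - mm)) ν := by
      intro i
      refine Integrable.mono' hVint
        (((continuous_id.sub continuous_const).inner (𝕜 := ℝ) continuous_const).smul
          (continuous_id.sub continuous_const)).aestronglyMeasurable
        (Filter.Eventually.of_forall fun x => ?_)
      rw [norm_smul, Real.norm_eq_abs]
      have := abs_real_inner_le_norm (x - mm) (E i)
      rw [hnormE i, mul_one] at this
      nlinarith [abs_nonneg ⟪x - mm, E i⟫, norm_nonneg (x - mm)]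
    have hPdiag : ∀ i, (∫ x, ⟪x - mm, E i⟫ ^ 2 ∂ν) = ⟪Pop (E i), E i⟫ := by
      intro i
      rw [hPop (E i), real_inner_comm]
      rw [← integral_inner (hinteg i) (E i)]
      refine integral_congr_ae (Filter.Eventually.of_forall fun x => ?_)
      show ⟪x - mm, E i⟫ ^ 2 = ⟪E i, ⟪x - mm, E i⟫ • (x - mm)⟫
      rw [real_inner_smul_right, real_inner_comm]
      ring
    have hVsum : V = ∑ i, ∫ x, ⟪x - mm, E i⟫ ^ 2 ∂ν := by
      rw [hVdef, ← integral_finset_sum _ (fun i _ => hiint i)]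
      refine integral_congr_ae (Filter.Eventually.of_forall fun x => ?_)
      show ‖x - mm‖ ^ 2 = ∑ i, ⟪x - mm, E i⟫ ^ 2
      rw [hnorm (x - mm)]
    have hdiag_le : ∀ i, ⟪Pop (E i), E i⟫ ≤ ‖Pop‖ := by
      intro i
      calc ⟪Pop (E i), E i⟫ ≤ ‖Pop (E i)‖ * ‖E i‖ := real_inner_le_norm _ _
        _ ≤ ‖Pop‖ * ‖E i‖ * ‖E i‖ :=
          mul_le_mul_of_nonneg_right (Pop.le_opNorm (E i)) (norm_nonneg _)
        _ = ‖Pop‖ := by rw [hnormE]; ring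
    calc V = ∑ i, ∫ x, ⟪x - mm, E i⟫ ^ 2 ∂ν := hVsum
      _ ≤ ∑ _i : Fin n, ‖Pop‖ := Finset.sum_le_sum fun i _ => (hPdiag i) ▸ hdiag_le i
      _ = n * ‖Pop‖ := by
          rw [Finset.sum_const, Finset.card_univ, Fintype.card_fin, nsmul_eq_mul]
  have hsqrtVP : Real.sqrt V ≤ Real.sqrt (n * ‖Pop‖) := Real.sqrt_le_sqrt hVP
  constructor
  · -- mean bound
    have heq : (∫ x, F x ∂ν) - F mh = ∫ x, (F x - F mh) ∂ν := by
      rw [integral_sub hFi (integrable_const _), MeasureTheory.integral_const, probReal_univ,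
        one_smul]
    rw [heq]
    calc ‖∫ x, (F x - F mh) ∂ν‖ ≤ ∫ x, ‖F x - F mh‖ ∂ν :=
          norm_integral_le_integral_norm _
      _ ≤ ∫ x, (L * ‖x - mm‖ + L * ‖mm - mh‖) ∂ν := by
          refine integral_mono (hFi.sub (integrable_const _)).norm
            ((hdn.const_mul L).add (integrable_const _)) fun x => ?_
          calc ‖F x - F mh‖ ≤ L * ‖x - mh‖ := hlip x mh
            _ ≤ L * (‖x - mm‖ + ‖mm - mh‖) := by
                refine mul_le_mul_of_nonneg_left ?_ hL
                simpa using norm_sub_le_norm_sub_add_norm_sub x mm mh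
            _ = L * ‖x - mm‖ + L * ‖mm - mh‖ := by ring
      _ = L * (∫ x, ‖x - mm‖ ∂ν) + L * ‖mm - mh‖ := by
          rw [integral_add (hdn.const_mul L) (integrable_const _), MeasureTheory.integral_const_mul,
            MeasureTheory.integral_const, probReal_univ, one_smul]
      _ ≤ L * Real.sqrt (n * ‖Pop‖) + L * ‖mm - mh‖ := by
          have := mul_le_mul_of_nonneg_left (hL1.trans hsqrtVP) hL
          linarith
  · -- covariance bound
    intro w
    have hkey : ∀ x : EuclideanSpace ℝ (Fin n), ‖x - mm‖ * ‖F x‖ ≤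
        ‖x - mm‖ * ‖F mm‖ + L * ‖x - mm‖ ^ 2 := by
      intro x
      have h1 : ‖F x‖ ≤ ‖F mm‖ + L * ‖x - mm‖ := by
        have := hlip x mm
        have h2 := norm_sub_norm_le (F x) (F mm)
        linarith
      nlinarith [norm_nonneg (x - mm)]
    have hgint : Integrable (fun x => ‖x - mm‖ * ‖F mm‖ + L * ‖x - mm‖ ^ 2) ν :=
      (hdn.mul_const _).add (hVint.const_mul L)
    have iw1 : Integrable (fun x => ⟪x - mm, w⟫ • F x) ν := by
      refine Integrable.mono' (hgint.const_mul ‖w‖)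
        (((continuous_id.sub continuous_const).inner (𝕜 := ℝ) continuous_const).smul
          hFc).aestronglyMeasurable (Filter.Eventually.of_forall fun x => ?_)
      rw [norm_smul, Real.norm_eq_abs]
      have h1 := abs_real_inner_le_norm (x - mm) w
      have h2 := hkey x
      have h3 : |⟪x - mm, w⟫| * ‖F x‖ ≤ (‖x - mm‖ * ‖w‖) * ‖F x‖ :=
        mul_le_mul_of_nonneg_right h1 (norm_nonneg _)
      nlinarith [norm_nonneg w, norm_nonneg (F x), norm_nonneg (x - mm), abs_nonneg ⟪x - mm, w⟫]
    have iw2 : Integrable (fun x => ⟪F x, w⟫ • (x - mm)) ν := by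
      refine Integrable.mono' (hgint.const_mul ‖w‖)
        ((hFc.inner (𝕜 := ℝ) continuous_const).smul
          (continuous_id.sub continuous_const)).aestronglyMeasurable
        (Filter.Eventually.of_forall fun x => ?_)
      rw [norm_smul, Real.norm_eq_abs]
      have h1 := abs_real_inner_le_norm (F x) w
      have h2 := hkey x
      have h3 : |⟪F x, w⟫| * ‖x - mm‖ ≤ (‖F x‖ * ‖w‖) * ‖x - mm‖ :=
        mul_le_mul_of_nonneg_right h1 (norm_nonneg _)
      nlinarith [norm_nonneg w, norm_nonneg (F x), norm_nonneg (x - mm), abs_nonneg ⟪F x, w⟫]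
    have i1' : Integrable (fun x => ⟪x - mm, w⟫ • (F x - F mm)) ν := by
      refine Integrable.mono' ((hVint.const_mul L).const_mul ‖w‖)
        (((continuous_id.sub continuous_const).inner (𝕜 := ℝ) continuous_const).smul
          (hFc.sub continuous_const)).aestronglyMeasurable
        (Filter.Eventually.of_forall fun x => ?_)
      rw [norm_smul, Real.norm_eq_abs]
      have h1 := abs_real_inner_le_norm (x - mm) w
      have h2 := hlip x mm
      have h3 : |⟪x - mm, w⟫| * ‖F x - F mm‖ ≤ (‖x - mm‖ * ‖w‖) * (L * ‖x - mm‖) := by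
        refine mul_le_mul h1 h2 (norm_nonneg _) ?_
        positivity
      calc |⟪x - mm, w⟫| * ‖F x - F mm‖ ≤ (‖x - mm‖ * ‖w‖) * (L * ‖x - mm‖) := h3
        _ = ‖w‖ * (L * ‖x - mm‖ ^ 2) := by ring
    have i2' : Integrable (fun x => ⟪F x - F mm, w⟫ • (x - mm)) ν := by
      refine Integrable.mono' ((hVint.const_mul L).const_mul ‖w‖)
        (((hFc.sub continuous_const).inner (𝕜 := ℝ) continuous_const).smul
          (continuous_id.sub continuous_const)).aestronglyMeasurable
        (Filter.Eventually.of_forall fun x => ?_)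
      rw [norm_smul, Real.norm_eq_abs]
      have h1 := abs_real_inner_le_norm (F x - F mm) w
      have h2 := hlip x mm
      have h3 : |⟪F x - F mm, w⟫| * ‖x - mm‖ ≤ (L * ‖x - mm‖ * ‖w‖) * ‖x - mm‖ := by
        refine mul_le_mul ?_ le_rfl (norm_nonneg _) (by positivity)
        exact h1.trans (mul_le_mul_of_nonneg_right h2 (norm_nonneg _))
      calc |⟪F x - F mm, w⟫| * ‖x - mm‖ ≤ (L * ‖x - mm‖ * ‖w‖) * ‖x - mm‖ := h3
        _ = ‖w‖ * (L * ‖x - mm‖ ^ 2) := by ring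
    have hinnerzero : (∫ x, ⟪x - mm, w⟫ ∂ν) = 0 := by
      have : (∫ x, ⟪x - mm, w⟫ ∂ν) = ∫ x, ⟪w, x - mm⟫ ∂ν :=
        integral_congr_ae (Filter.Eventually.of_forall fun x => real_inner_comm _ _)
      rw [this, integral_inner hdi w, hcent, inner_zero_right]
    have e1 : (∫ x, ⟪x - mm, w⟫ • F x ∂ν) = ∫ x, ⟪x - mm, w⟫ • (F x - F mm) ∂ν := by
      have hsplit : ∀ x : EuclideanSpace ℝ (Fin n),
          ⟪x - mm, w⟫ • F x = ⟪x - mm, w⟫ • (F x - F mm) + ⟪x - mm, w⟫ • F mm := by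
        intro x; rw [smul_sub]; abel
      have hiw : Integrable (fun x => ⟪x - mm, w⟫) ν := by
        refine Integrable.mono' (hdn.const_mul ‖w‖)
          ((continuous_id.sub continuous_const).inner
            continuous_const).aestronglyMeasurable
          (Filter.Eventually.of_forall fun x => ?_)
        rw [Real.norm_eq_abs]
        calc |⟪x - mm, w⟫| ≤ ‖x - mm‖ * ‖w‖ := abs_real_inner_le_norm _ _
          _ = ‖w‖ * ‖x - mm‖ := by ring
      have hiw2 : Integrable (fun x => ⟪x - mm, w⟫ • F mm) ν := hiw.smul_const (F mm)
      rw [integral_congr_ae (Filter.Eventually.of_forall hsplit), integral_add i1' hiw2,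
        _root_.integral_smul_const, hinnerzero, zero_smul, add_zero]
    have e2 : (∫ x, ⟪F x, w⟫ • (x - mm) ∂ν) = ∫ x, ⟪F x - F mm, w⟫ • (x - mm) ∂ν := by
      have hsplit : ∀ x : EuclideanSpace ℝ (Fin n),
          ⟪F x, w⟫ • (x - mm) = ⟪F x - F mm, w⟫ • (x - mm) + ⟪F mm, w⟫ • (x - mm) := by
        intro x
        rw [← add_smul]
        congr 1
        rw [← inner_add_left]
        congr 1
        abel
      have h2i : Integrable (fun x => ⟪F mm, w⟫ • (x - mm)) ν := by
        exact hdi.smul ⟪F mm, w⟫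
      rw [integral_congr_ae (Filter.Eventually.of_forall hsplit), integral_add i2' h2i,
        MeasureTheory.integral_smul, hcent, smul_zero, add_zero]
    have norm1 : ‖∫ x, ⟪x - mm, w⟫ • (F x - F mm) ∂ν‖ ≤ L * V * ‖w‖ := by
      calc ‖∫ x, ⟪x - mm, w⟫ • (F x - F mm) ∂ν‖
          ≤ ∫ x, ‖⟪x - mm, w⟫ • (F x - F mm)‖ ∂ν := norm_integral_le_integral_norm _
        _ ≤ ∫ x, (L * ‖w‖) * ‖x - mm‖ ^ 2 ∂ν := by
            refine integral_mono i1'.norm (hVint.const_mul _)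
              fun x => ?_
            rw [norm_smul, Real.norm_eq_abs]
            have h1 := abs_real_inner_le_norm (x - mm) w
            have h2 := hlip x mm
            have h3 : |⟪x - mm, w⟫| * ‖F x - F mm‖ ≤ (‖x - mm‖ * ‖w‖) * (L * ‖x - mm‖) :=
              mul_le_mul h1 h2 (norm_nonneg _) (by positivity)
            calc |⟪x - mm, w⟫| * ‖F x - F mm‖ ≤ (‖x - mm‖ * ‖w‖) * (L * ‖x - mm‖) := h3
              _ = (L * ‖w‖) * ‖x - mm‖ ^ 2 := by ring
        _ = L * V * ‖w‖ := by rw [MeasureTheory.integral_const_mul]; ring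
    have norm2 : ‖∫ x, ⟪F x - F mm, w⟫ • (x - mm) ∂ν‖ ≤ L * V * ‖w‖ := by
      calc ‖∫ x, ⟪F x - F mm, w⟫ • (x - mm) ∂ν‖
          ≤ ∫ x, ‖⟪F x - F mm, w⟫ • (x - mm)‖ ∂ν := norm_integral_le_integral_norm _
        _ ≤ ∫ x, (L * ‖w‖) * ‖x - mm‖ ^ 2 ∂ν := by
            refine integral_mono i2'.norm (hVint.const_mul _) fun x => ?_
            rw [norm_smul, Real.norm_eq_abs]
            have h1 := abs_real_inner_le_norm (F x - F mm) w
            have h2 := hlip x mm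
            have h3 : |⟪F x - F mm, w⟫| ≤ (L * ‖x - mm‖) * ‖w‖ :=
              h1.trans (mul_le_mul_of_nonneg_right h2 (norm_nonneg _))
            calc |⟪F x - F mm, w⟫| * ‖x - mm‖ ≤ ((L * ‖x - mm‖) * ‖w‖) * ‖x - mm‖ :=
                mul_le_mul_of_nonneg_right h3 (norm_nonneg _)
              _ = (L * ‖w‖) * ‖x - mm‖ ^ 2 := by ring
        _ = L * V * ‖w‖ := by rw [MeasureTheory.integral_const_mul]; ring
    have hAQ : ‖A (Q w)‖ ≤ L * (‖Q‖ * ‖w‖) :=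
      (A.le_opNorm (Q w)).trans (by
        refine mul_le_mul hA (Q.le_opNorm w) (norm_nonneg _) hL)
    have hadj : ‖(adjoint A : EuclideanSpace ℝ (Fin n) →L[ℝ] EuclideanSpace ℝ (Fin n))‖
        = ‖A‖ := adjoint.norm_map A
    have hQA : ‖Q ((adjoint A) w)‖ ≤ ‖Q‖ * (L * ‖w‖) := by
      refine (Q.le_opNorm _).trans (mul_le_mul_of_nonneg_left ?_ (norm_nonneg _))
      refine ((adjoint A).le_opNorm w).trans ?_
      rw [hadj]
      exact mul_le_mul_of_nonneg_right hA (norm_nonneg _)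
    have hsum : (∫ x, (⟪x - mm, w⟫ • F x + ⟪F x, w⟫ • (x - mm)) ∂ν)
        = (∫ x, ⟪x - mm, w⟫ • F x ∂ν) + ∫ x, ⟪F x, w⟫ • (x - mm) ∂ν :=
      integral_add iw1 iw2
    have hVP' : L * V * ‖w‖ ≤ L * (n * ‖Pop‖) * ‖w‖ := by
      have := mul_le_mul_of_nonneg_left hVP hL
      exact mul_le_mul_of_nonneg_right this (norm_nonneg w)
    calc ‖(∫ x, (⟪x - mm, w⟫ • F x + ⟪F x, w⟫ • (x - mm)) ∂ν)
        - (A (Q w) + Q ((adjoint A) w))‖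
        ≤ ‖∫ x, ⟪x - mm, w⟫ • F x ∂ν‖ + ‖∫ x, ⟪F x, w⟫ • (x - mm) ∂ν‖
          + (‖A (Q w)‖ + ‖Q ((adjoint A) w)‖) := by
          rw [hsum]
          refine (norm_sub_le _ _).trans ?_
          gcongr
          · exact norm_add_le _ _
          · exact norm_add_le _ _
      _ ≤ (L * V * ‖w‖) + (L * V * ‖w‖) + (L * (‖Q‖ * ‖w‖) + ‖Q‖ * (L * ‖w‖)) := by
          rw [e1, e2]
          gcongr

      _ ≤ (L * (n * ‖Pop‖) * ‖w‖) + (L * (n * ‖Pop‖) * ‖w‖)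
            + (L * (‖Q‖ * ‖w‖) + ‖Q‖ * (L * ‖w‖)) := by
          gcongr

      _ = (2 * L * (n * ‖Pop‖) + 2 * L * ‖Q‖) * ‖w‖ := by ring
lemma gronwall_aux (a T : ℝ) (ha : 0 ≤ a) (hT : 0 ≤ T)
    (E ρ : ℝ → ℝ) (hE : Continuous E) (hρ : Continuous ρ) (hρ0 : ∀ s, 0 ≤ ρ s)
    (h : ∀ t ∈ Set.Icc (0:ℝ) T, E t ≤ ∫ s in (0:ℝ)..t, (a * E s + ρ s)) :
    ∀ t ∈ Set.Icc (0:ℝ) T, E t ≤ Real.exp (a * T) * ∫ s in (0:ℝ)..T, ρ s := by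
  set g : ℝ → ℝ := fun t => ∫ s in (0:ℝ)..t, (a * E s + ρ s) with hgdef
  have hcont : Continuous fun s => a * E s + ρ s := (continuous_const.mul hE).add hρ
  have hg : ∀ t, HasDerivAt g (a * E t + ρ t) t := fun t =>
    (hcont.integral_hasStrictDerivAt 0 t).hasDerivAt
  set d : ℝ → ℝ := fun t => (∫ s in (0:ℝ)..t, Real.exp (-(a * s)) * ρ s)
      - Real.exp (-(a * t)) * g t with hddef
  have hcont2 : Continuous fun s => Real.exp (-(a * s)) * ρ s :=
    ((continuous_const.mul continuous_id).neg.rexp).mul hρ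
  have hd : ∀ t, HasDerivAt d (Real.exp (-(a * t)) * ρ t
      - (Real.exp (-(a * t)) * (a * E t + ρ t) + (-a) * Real.exp (-(a * t)) * g t)) t := by
    intro t
    have h1 := (hcont2.integral_hasStrictDerivAt 0 t).hasDerivAt
    have h2 : HasDerivAt (fun t => Real.exp (-(a * t))) ((-a) * Real.exp (-(a * t))) t := by
      have := (Real.hasDerivAt_exp (-(a * t))).comp t
        (((hasDerivAt_id t).const_mul a).neg)
      simpa [mul_comm, Function.comp_def] using this
    have h3 := h2.mul (hg t)
    exact h1.sub (h3.congr_deriv (by ring))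
  have hdc : Continuous d := by
    rw [continuous_iff_continuousAt]; exact fun t => (hd t).continuousAt
  have hmono : MonotoneOn d (Set.Icc 0 T) := by
    apply monotoneOn_of_deriv_nonneg (convex_Icc 0 T) hdc.continuousOn
    · exact fun x _ => ((hd x).differentiableAt).differentiableWithinAt
    · intro x hx
      rw [(hd x).deriv]
      rw [interior_Icc] at hx
      have hEg : E x ≤ g x := h x ⟨hx.1.le, hx.2.le⟩
      have heq : Real.exp (-(a * x)) * ρ x
          - (Real.exp (-(a * x)) * (a * E x + ρ x) + (-a) * Real.exp (-(a * x)) * g x)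
          = a * Real.exp (-(a * x)) * (g x - E x) := by ring
      rw [heq]
      exact mul_nonneg (mul_nonneg ha (Real.exp_pos _).le) (sub_nonneg.2 hEg)
  intro t ht
  have hd0 : d 0 = 0 := by simp [hddef, hgdef]
  have hdt : 0 ≤ d t := by
    rw [← hd0]; exact hmono ⟨le_refl 0, hT⟩ ht ht.1
  have h1 : (∫ s in (0:ℝ)..t, Real.exp (-(a * s)) * ρ s) ≤ ∫ s in (0:ℝ)..t, ρ s := by
    apply integral_mono_on ht.1 (hcont2.intervalIntegrable _ _) (hρ.intervalIntegrable _ _)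
    intro s hs
    have : Real.exp (-(a * s)) ≤ 1 := by
      rw [Real.exp_le_one_iff]
      simpa using mul_nonneg ha hs.1
    exact mul_le_of_le_one_left (hρ0 s) this
  have h2 : (∫ s in (0:ℝ)..t, ρ s) ≤ ∫ s in (0:ℝ)..T, ρ s :=
    integral_mono_interval (le_refl (0:ℝ)) ht.1 ht.2
      (Filter.Eventually.of_forall hρ0) (hρ.intervalIntegrable _ _)
  have key : Real.exp (-(a * t)) * g t ≤ ∫ s in (0:ℝ)..T, ρ s := by
    have := sub_nonneg.1 hdt
    exact le_trans this (h1.trans h2)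
  have hEt : E t ≤ g t := h t ht
  have hgt : g t ≤ Real.exp (a * t) * ∫ s in (0:ℝ)..T, ρ s := by
    have := mul_le_mul_of_nonneg_left key (Real.exp_pos (a * t)).le
    rwa [← mul_assoc, ← Real.exp_add, add_neg_cancel, Real.exp_zero, one_mul] at this
  have hexp : Real.exp (a * t) ≤ Real.exp (a * T) :=
    Real.exp_le_exp.2 (mul_le_mul_of_nonneg_left ht.2 ha)
  have hint : 0 ≤ ∫ s in (0:ℝ)..T, ρ s :=
    integral_nonneg hT fun s _ => hρ0 s
  calc E t ≤ g t := hEt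
    _ ≤ Real.exp (a * t) * ∫ s in (0:ℝ)..T, ρ s := hgt
    _ ≤ Real.exp (a * T) * ∫ s in (0:ℝ)..T, ρ s := mul_le_mul_of_nonneg_right hexp hint

set_option maxHeartbeats 2000000 in
theorem statistical_linearization_estimate_bounded_controls
    (n : ℕ) (t_f : ℝ) (ht : 0 < t_f) (B : ℝ) (hB : 0 ≤ B) :
    ∃ C : ℝ, 0 < C ∧
      ∀ (k d : ℕ)
        (f : EuclideanSpace ℝ (Fin n) → EuclideanSpace ℝ (Fin k) → EuclideanSpace ℝ (Fin n))
        (φ : ℝ≥0 → ℝ≥0) (u : ℝ → EuclideanSpace ℝ (Fin k))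
        (G : EuclideanSpace ℝ (Fin k) →
          (EuclideanSpace ℝ (Fin d) →L[ℝ] EuclideanSpace ℝ (Fin n)))
        (μ : ℝ → Measure (EuclideanSpace ℝ (Fin n)))
        (m mhat : ℝ → EuclideanSpace ℝ (Fin n))
        (P Phat Ψ : ℝ → EuclideanSpace ℝ (Fin n) →L[ℝ] EuclideanSpace ℝ (Fin n)),
        (∀ v, ContDiff ℝ 1 (fun x => f x v)) →
        Continuous φ →
        (∀ x v, ‖fderiv ℝ (fun y => f y v) x‖ ≤ φ ‖v‖₊) →
        Measurable u →
        IntervalIntegrable (fun s => (φ ‖u s‖₊ : ℝ)) volume 0 t_f →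
        -- bounded controls: φ(‖u(t)‖) ≤ B a.e. on [0,t_f]
        (∀ᵐ t ∂(volume.restrict (Set.Icc (0:ℝ) t_f)), (φ ‖u t‖₊ : ℝ) ≤ B) →
        (∀ w, Measurable fun v => G v w) →
        (∀ t ∈ Set.Icc 0 t_f, IsProbabilityMeasure (μ t)) →
        (∀ t ∈ Set.Icc 0 t_f, Integrable (fun x => ‖x‖ ^ 2) (μ t)) →
        (∀ t ∈ Set.Icc 0 t_f, Integrable (fun x : EuclideanSpace ℝ (Fin n) => x) (μ t)) →
        (∀ t ∈ Set.Icc 0 t_f, m t = ∫ x, x ∂(μ t)) →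
        (∀ t ∈ Set.Icc 0 t_f, ∀ w, P t w = ∫ x, ⟪x - m t, w⟫ • (x - m t) ∂(μ t)) →
        (∀ t ∈ Set.Icc 0 t_f, Integrable (fun x => f x (u t)) (μ t)) →
        IntervalIntegrable (fun s => ∫ x, f x (u s) ∂(μ s)) volume 0 t_f →
        (∀ t ∈ Set.Icc 0 t_f, m t = m 0 + ∫ s in (0:ℝ)..t, ∫ x, f x (u s) ∂(μ s)) →
        (∀ t ∈ Set.Icc 0 t_f, ∀ w, Ψ t w =
          (∫ x, (⟪x - m t, w⟫ • f x (u t) + ⟪f x (u t), w⟫ • (x - m t)) ∂(μ t))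
            + (G (u t) ∘L adjoint (G (u t))) w) →
        IntervalIntegrable Ψ volume 0 t_f →
        (∀ t ∈ Set.Icc 0 t_f, P t = P 0 + ∫ s in (0:ℝ)..t, Ψ s) →
        mhat 0 = m 0 →
        Phat 0 = P 0 →
        IntervalIntegrable (fun s => f (mhat s) (u s)) volume 0 t_f →
        (∀ t ∈ Set.Icc 0 t_f, mhat t = m 0 + ∫ s in (0:ℝ)..t, f (mhat s) (u s)) →
        IntervalIntegrable (fun s =>
          fderiv ℝ (fun y => f y (u s)) (mhat s) ∘L Phat s
            + Phat s ∘L adjoint (fderiv ℝ (fun y => f y (u s)) (mhat s))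
            + G (u s) ∘L adjoint (G (u s))) volume 0 t_f →
        (∀ t ∈ Set.Icc 0 t_f, Phat t = P 0 + ∫ s in (0:ℝ)..t,
          (fderiv ℝ (fun y => f y (u s)) (mhat s) ∘L Phat s
            + Phat s ∘L adjoint (fderiv ℝ (fun y => f y (u s)) (mhat s))
            + G (u s) ∘L adjoint (G (u s)))) →
        ∀ t₁ ∈ Set.Icc 0 t_f, ∀ t₂ ∈ Set.Icc 0 t_f,
          ‖m t₁ - mhat t₁‖ ^ 2 + ‖P t₂ - Phat t₂‖ ≤
            C * ∫ s in (0:ℝ)..t_f, ‖Phat s‖ := by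
  classical
  set C₁ : ℝ := 2 * B * (n + 1) * Real.exp (2 * B * n * t_f) with hC₁def
  set K : ℝ := B * Real.exp (B * t_f) with hKdef
  set D : ℝ := n * (1 + C₁ * t_f) with hDdef
  set C₂ : ℝ := K ^ 2 * D * t_f with hC₂def
  have hC₁0 : 0 ≤ C₁ := by
    refine mul_nonneg (mul_nonneg (by linarith) (by positivity)) (Real.exp_pos _).le
  have hK0 : 0 ≤ K := mul_nonneg hB (Real.exp_pos _).le
  have hD0 : 0 ≤ D := mul_nonneg (Nat.cast_nonneg n) (by nlinarith)
  have hC₂0 : 0 ≤ C₂ := mul_nonneg (mul_nonneg (sq_nonneg K) hD0) ht.le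
  refine ⟨C₁ + C₂ + 1, by linarith, ?_⟩
  intro k d f φ u G μ m mhat P Phat Ψ hf hφc hgrad hu hφint hbd hG hprob hm2 hm1 hmean
    hcov hfint hFμint hmODE hΨ hΨint hPODE hm0 hP0 hFhint hmhODE hΛint hPhODE t₁ ht₁ t₂ ht₂
  have h0f : (0:ℝ) ≤ t_f := ht.le
  set Λ : ℝ → EuclideanSpace ℝ (Fin n) →L[ℝ] EuclideanSpace ℝ (Fin n) := fun s =>
      fderiv ℝ (fun y => f y (u s)) (mhat s) ∘L Phat s
        + Phat s ∘L adjoint (fderiv ℝ (fun y => f y (u s)) (mhat s))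
        + G (u s) ∘L adjoint (G (u s)) with hΛdef
  set Fμ : ℝ → EuclideanSpace ℝ (Fin n) := fun s => ∫ x, f x (u s) ∂(μ s) with hFμdef
  set Fh : ℝ → EuclideanSpace ℝ (Fin n) := fun s => f (mhat s) (u s) with hFhdef
  -- the projection onto [0, t_f]
  set π : ℝ → ℝ := fun t => max 0 (min t t_f) with hπdef
  have hπc : Continuous π := continuous_const.max (continuous_id.min continuous_const)
  have hπmem : ∀ t, π t ∈ Set.Icc (0:ℝ) t_f := fun t =>
    ⟨le_max_left _ _, max_le h0f (min_le_right _ _)⟩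
  have hπeq : ∀ t ∈ Set.Icc (0:ℝ) t_f, π t = t := by
    intro t ht'
    rw [hπdef]
    simp only
    rw [min_eq_left ht'.2, max_eq_right ht'.1]
  have hsub : ∀ t ∈ Set.Icc (0:ℝ) t_f, Set.uIcc (0:ℝ) t ⊆ Set.uIcc (0:ℝ) t_f := by
    intro t ht'
    rw [Set.uIcc_of_le ht'.1, Set.uIcc_of_le h0f]
    exact Set.Icc_subset_Icc le_rfl ht'.2
  -- continuous primitives
  have hprimΨ : ContinuousOn (fun t => ∫ s in (0:ℝ)..t, Ψ s) (Set.Icc 0 t_f) := by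
    have := intervalIntegral.continuousOn_primitive_interval' hΨint
      (Set.left_mem_uIcc (a := (0:ℝ)) (b := t_f))
    rwa [Set.uIcc_of_le h0f] at this
  have hprimΛ : ContinuousOn (fun t => ∫ s in (0:ℝ)..t, Λ s) (Set.Icc 0 t_f) := by
    have := intervalIntegral.continuousOn_primitive_interval' hΛint
      (Set.left_mem_uIcc (a := (0:ℝ)) (b := t_f))
    rwa [Set.uIcc_of_le h0f] at this
  have hprimFμ : ContinuousOn (fun t => ∫ s in (0:ℝ)..t, Fμ s) (Set.Icc 0 t_f) := by
    have := intervalIntegral.continuousOn_primitive_interval' hFμint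
      (Set.left_mem_uIcc (a := (0:ℝ)) (b := t_f))
    rwa [Set.uIcc_of_le h0f] at this
  have hprimFh : ContinuousOn (fun t => ∫ s in (0:ℝ)..t, Fh s) (Set.Icc 0 t_f) := by
    have := intervalIntegral.continuousOn_primitive_interval' hFhint
      (Set.left_mem_uIcc (a := (0:ℝ)) (b := t_f))
    rwa [Set.uIcc_of_le h0f] at this
  set Ec : ℝ → ℝ := fun t =>
    ‖(∫ s in (0:ℝ)..(π t), Ψ s) - ∫ s in (0:ℝ)..(π t), Λ s‖ with hEcdef
  set ρc : ℝ → ℝ := fun t => ‖P 0 + ∫ s in (0:ℝ)..(π t), Λ s‖ with hρcdef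
  set ec : ℝ → ℝ := fun t =>
    ‖(∫ s in (0:ℝ)..(π t), Fμ s) - ∫ s in (0:ℝ)..(π t), Fh s‖ with hecdef
  have hEcc : Continuous Ec :=
    ((hprimΨ.comp_continuous hπc hπmem).sub (hprimΛ.comp_continuous hπc hπmem)).norm
  have hρcc : Continuous ρc :=
    (continuous_const.add (hprimΛ.comp_continuous hπc hπmem)).norm
  have hecc : Continuous ec :=
    ((hprimFμ.comp_continuous hπc hπmem).sub (hprimFh.comp_continuous hπc hπmem)).norm
  have hEceq : ∀ t ∈ Set.Icc (0:ℝ) t_f, Ec t = ‖P t - Phat t‖ := by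
    intro t ht'
    rw [hEcdef]
    simp only
    rw [hπeq t ht', hPODE t ht', hPhODE t ht', add_sub_add_left_eq_sub]
  have hρceq : ∀ t ∈ Set.Icc (0:ℝ) t_f, ρc t = ‖Phat t‖ := by
    intro t ht'
    rw [hρcdef]
    simp only
    rw [hπeq t ht', ← hPhODE t ht']
  have heceq : ∀ t ∈ Set.Icc (0:ℝ) t_f, ec t = ‖m t - mhat t‖ := by
    intro t ht'
    rw [hecdef]
    simp only
    rw [hπeq t ht', hmODE t ht', hmhODE t ht', add_sub_add_left_eq_sub]
  set I : ℝ := ∫ s in (0:ℝ)..t_f, ρc s with hIdef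
  have hI0 : 0 ≤ I :=
    intervalIntegral.integral_nonneg h0f fun s _ => norm_nonneg _
  have hIeq : (∫ s in (0:ℝ)..t_f, ‖Phat s‖) = I := by
    refine intervalIntegral.integral_congr fun s hs => ?_
    rw [Set.uIcc_of_le h0f] at hs
    exact (hρceq s hs).symm
  -- pointwise a.e. estimates
  have hptwise : ∀ᵐ s ∂(volume.restrict (Set.Icc (0:ℝ) t_f)),
      (‖Fμ s - Fh s‖ ≤ B * Real.sqrt (n * ‖P s‖) + B * ‖m s - mhat s‖) ∧
      (‖Ψ s - Λ s‖ ≤ 2 * B * (n * ‖P s‖) + 2 * B * ‖Phat s‖) := by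
    have hmem := ae_restrict_mem (μ := volume) (measurableSet_Icc (a := (0:ℝ)) (b := t_f))
    filter_upwards [hmem, hbd] with s hs hBs
    haveI := hprob s hs
    have hlip : ∀ x y : EuclideanSpace ℝ (Fin n), ‖f x (u s) - f y (u s)‖ ≤ B * ‖x - y‖ := by
      intro x y
      exact convex_univ.norm_image_sub_le_of_norm_fderiv_le
        (fun z _ => ((hf (u s)).differentiable one_ne_zero).differentiableAt)
        (fun z _ => (hgrad z (u s)).trans hBs) (Set.mem_univ y) (Set.mem_univ x)
    have hA : ‖fderiv ℝ (fun y => f y (u s)) (mhat s)‖ ≤ B := (hgrad _ _).trans hBs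
    obtain ⟨mb, cb⟩ := pointwise_bounds (μ s) (fun x => f x (u s)) (hf (u s)).continuous
      B hB hlip (hm1 s hs) (hm2 s hs) (hfint s hs) (m s) (mhat s) (hmean s hs)
      (P s) (Phat s) (fderiv ℝ (fun y => f y (u s)) (mhat s)) (hcov s hs) hA
    constructor
    · exact mb
    · refine ContinuousLinearMap.opNorm_le_bound _ ?_ fun w => ?_
      · have h1 : (0:ℝ) ≤ n * ‖P s‖ := by positivity
        nlinarith [norm_nonneg (Phat s)]
      · have happ : (Ψ s - Λ s) w =
            (∫ x, (⟪x - m s, w⟫ • f x (u s) + ⟪f x (u s), w⟫ • (x - m s)) ∂(μ s))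
            - ((fderiv ℝ (fun y => f y (u s)) (mhat s)) (Phat s w)
              + (Phat s) ((adjoint (fderiv ℝ (fun y => f y (u s)) (mhat s))) w)) := by
          rw [ContinuousLinearMap.sub_apply, hΨ s hs w, hΛdef]
          simp only [ContinuousLinearMap.add_apply, ContinuousLinearMap.comp_apply]
          abel
        rw [happ]
        exact cb w
  -- Gronwall for the covariance
  have hEgron : ∀ t ∈ Set.Icc (0:ℝ) t_f,
      Ec t ≤ ∫ s in (0:ℝ)..t, (2 * B * n * Ec s + (2 * B * n + 2 * B) * ρc s) := by
    intro t ht'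
    have hEct : Ec t = ‖∫ s in (0:ℝ)..t, (Ψ s - Λ s)‖ := by
      rw [hEcdef]
      simp only
      rw [hπeq t ht', intervalIntegral.integral_sub (hΨint.mono_set (hsub t ht'))
        (hΛint.mono_set (hsub t ht'))]
    rw [hEct]
    refine (intervalIntegral.norm_integral_le_integral_norm ht'.1).trans ?_
    refine intervalIntegral.integral_mono_ae_restrict ht'.1
      ((hΨint.sub hΛint).norm.mono_set (hsub t ht'))
      ((((continuous_const.mul hEcc).add (continuous_const.mul hρcc))).intervalIntegrable _ _) ?_
    have hss : Set.Icc (0:ℝ) t ⊆ Set.Icc (0:ℝ) t_f := Set.Icc_subset_Icc le_rfl ht'.2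
    have hae := ae_restrict_of_ae_restrict_of_subset hss hptwise
    have hmem := ae_restrict_mem (μ := volume) (measurableSet_Icc (a := (0:ℝ)) (b := t))
    filter_upwards [hae, hmem] with s hsb hs
    have hs' : s ∈ Set.Icc (0:ℝ) t_f := hss hs
    have hPle : ‖P s‖ ≤ Ec s + ρc s := by
      rw [hEceq s hs', hρceq s hs']
      calc ‖P s‖ = ‖(P s - Phat s) + Phat s‖ := by rw [sub_add_cancel]
        _ ≤ ‖P s - Phat s‖ + ‖Phat s‖ := norm_add_le _ _
    have h2 := hsb.2
    have hn0 : (0:ℝ) ≤ (n:ℝ) := Nat.cast_nonneg n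
    have hρP : ρc s = ‖Phat s‖ := hρceq s hs'
    have hkey := mul_le_mul_of_nonneg_left hPle
      (mul_nonneg (by linarith : (0:ℝ) ≤ 2 * B) hn0)
    rw [← hρP] at h2
    linarith [hkey]
  have hEC1 : ∀ t ∈ Set.Icc (0:ℝ) t_f, Ec t ≤ C₁ * I := by
    intro t ht'
    have := gronwall_aux (2 * B * n) t_f (by positivity) h0f Ec
      (fun s => (2 * B * n + 2 * B) * ρc s) hEcc (continuous_const.mul hρcc)
      (fun s => by positivity) hEgron t ht'
    refine this.trans (le_of_eq ?_)
    rw [intervalIntegral.integral_const_mul, hC₁def, ← hIdef]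
    ring
  -- Gronwall for the mean
  set σ : ℝ → ℝ := fun s => B * Real.sqrt (n * (ρc s + C₁ * I)) with hσdef
  have hσc : Continuous σ :=
    continuous_const.mul ((continuous_const.mul (hρcc.add continuous_const)).sqrt)
  have hσ0 : ∀ s, 0 ≤ σ s := fun s => mul_nonneg hB (Real.sqrt_nonneg _)
  have hegron : ∀ t ∈ Set.Icc (0:ℝ) t_f, ec t ≤ ∫ s in (0:ℝ)..t, (B * ec s + σ s) := by
    intro t ht'
    have hect : ec t = ‖∫ s in (0:ℝ)..t, (Fμ s - Fh s)‖ := by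
      rw [hecdef]
      simp only
      rw [hπeq t ht', intervalIntegral.integral_sub (hFμint.mono_set (hsub t ht'))
        (hFhint.mono_set (hsub t ht'))]
    rw [hect]
    refine (intervalIntegral.norm_integral_le_integral_norm ht'.1).trans ?_
    refine intervalIntegral.integral_mono_ae_restrict ht'.1
      ((hFμint.sub hFhint).norm.mono_set (hsub t ht'))
      (((continuous_const.mul hecc).add hσc).intervalIntegrable _ _) ?_
    have hss : Set.Icc (0:ℝ) t ⊆ Set.Icc (0:ℝ) t_f := Set.Icc_subset_Icc le_rfl ht'.2
    have hae := ae_restrict_of_ae_restrict_of_subset hss hptwise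
    have hmem := ae_restrict_mem (μ := volume) (measurableSet_Icc (a := (0:ℝ)) (b := t))
    filter_upwards [hae, hmem] with s hsb hs
    have hs' : s ∈ Set.Icc (0:ℝ) t_f := hss hs
    have h1 := hsb.1
    have hme : ‖m s - mhat s‖ = ec s := (heceq s hs').symm
    have hsq : Real.sqrt (n * ‖P s‖) ≤ Real.sqrt (n * (ρc s + C₁ * I)) := by
      refine Real.sqrt_le_sqrt ?_
      have hPle : ‖P s‖ ≤ Ec s + ρc s := by
        rw [hEceq s hs', hρceq s hs']
        calc ‖P s‖ = ‖(P s - Phat s) + Phat s‖ := by rw [sub_add_cancel]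
          _ ≤ ‖P s - Phat s‖ + ‖Phat s‖ := norm_add_le _ _
      have hE1 := hEC1 s hs'
      have hn0 : (0:ℝ) ≤ (n:ℝ) := Nat.cast_nonneg n
      nlinarith
    have h2 : B * Real.sqrt (n * ‖P s‖) ≤ σ s := by
      rw [hσdef]
      exact mul_le_mul_of_nonneg_left hsq hB
    rw [hme] at h1
    linarith
  set J : ℝ := ∫ s in (0:ℝ)..t_f, Real.sqrt (n * (ρc s + C₁ * I)) with hJdef
  have hJ0 : 0 ≤ J :=
    intervalIntegral.integral_nonneg h0f fun s _ => Real.sqrt_nonneg _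
  have hecK : ec t₁ ≤ K * J := by
    have := gronwall_aux B t_f hB h0f ec σ hecc hσc hσ0 hegron t₁ ht₁
    refine this.trans (le_of_eq ?_)
    rw [hσdef]
    have : (∫ s in (0:ℝ)..t_f, B * Real.sqrt (n * (ρc s + C₁ * I)))
        = B * J := by
      rw [hJdef]
      exact intervalIntegral.integral_const_mul _ _
    rw [this, hKdef]
    ring
  -- bound on J
  have hJc : ∀ c : ℝ, 0 < c → J ≤ D * I / (2 * c) + c * (t_f / 2) := by
    intro c hc
    have hpt : ∀ s ∈ Set.Icc (0:ℝ) t_f, Real.sqrt (n * (ρc s + C₁ * I))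
        ≤ (n / (2 * c)) * (ρc s + C₁ * I) + c / 2 := by
      intro s _
      set x : ℝ := n * (ρc s + C₁ * I) with hx
      have hx0 : 0 ≤ x := by
        have : 0 ≤ ρc s := norm_nonneg _
        have : 0 ≤ C₁ * I := mul_nonneg hC₁0 hI0
        positivity
      have hsq : Real.sqrt x * (2 * c) ≤ x + c ^ 2 := by
        nlinarith [sq_nonneg (Real.sqrt x - c), Real.sq_sqrt hx0, Real.sqrt_nonneg x]
      have hdiv : Real.sqrt x ≤ (x + c ^ 2) / (2 * c) :=
        (le_div_iff₀ (by positivity)).2 hsq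
      refine hdiv.trans (le_of_eq ?_)
      rw [hx]
      field_simp
    have hint : (∫ s in (0:ℝ)..t_f, ((n / (2 * c)) * (ρc s + C₁ * I) + c / 2))
        = (n / (2 * c)) * (I + C₁ * I * t_f) + c / 2 * t_f := by
      rw [intervalIntegral.integral_add (f := fun s => (n / (2 * c)) * (ρc s + C₁ * I))
        ((continuous_const.mul (hρcc.add continuous_const)).intervalIntegrable _ _)
        (intervalIntegrable_const), intervalIntegral.integral_const_mul,
        intervalIntegral.integral_add (hρcc.intervalIntegrable _ _) intervalIntegrable_const,
        intervalIntegral.integral_const, intervalIntegral.integral_const, ← hIdef]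
      simp only [smul_eq_mul, sub_zero]
      ring
    have hle : J ≤ (n / (2 * c)) * (I + C₁ * I * t_f) + c / 2 * t_f := by
      rw [hJdef, ← hint]
      refine intervalIntegral.integral_mono_on h0f
        ((continuous_const.mul (hρcc.add continuous_const)).sqrt.intervalIntegrable _ _)
        (((continuous_const.mul (hρcc.add continuous_const)).add
          continuous_const).intervalIntegrable _ _) hpt
    refine hle.trans (le_of_eq ?_)
    rw [hDdef]
    field_simp
  -- conclude the mean estimate
  have hec2 : ec t₁ ^ 2 ≤ C₂ * I := by
    rcases eq_or_lt_of_le (mul_nonneg hD0 hI0) with hDI | hDI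
    · -- D * I = 0
      have hJle : J ≤ 0 := by
        by_contra hJpos
        push_neg at hJpos
        have hc := hJc (J / t_f) (by positivity)
        rw [← hDI] at hc
        have : (0:ℝ) / (2 * (J / t_f)) = 0 := by simp
        rw [this] at hc
        have : J / t_f * (t_f / 2) = J / 2 := by field_simp
        rw [this] at hc
        linarith
      have hJeq : J = 0 := le_antisymm hJle hJ0
      have : ec t₁ ≤ 0 := by
        have := hecK
        rw [hJeq, mul_zero] at this
        exact this
      have hec0 : ec t₁ = 0 := le_antisymm this (norm_nonneg _)
      rw [hec0]
      simp only [ne_eq, OfNat.ofNat_ne_zero, not_false_eq_true, zero_pow]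
      exact mul_nonneg hC₂0 hI0
    · -- 0 < D * I
      set c₀ : ℝ := Real.sqrt (D * I / t_f) with hc₀def
      have hc₀pos : 0 < c₀ := Real.sqrt_pos.2 (by positivity)
      have hc₀sq : c₀ ^ 2 = D * I / t_f := Real.sq_sqrt (by positivity)
      have hJb := hJc c₀ hc₀pos
      have hval : D * I / (2 * c₀) + c₀ * (t_f / 2) = c₀ * t_f := by
        have hDI' : D * I = c₀ ^ 2 * t_f := by
          rw [hc₀sq]; field_simp
        rw [hDI']
        field_simp
        ring
      rw [hval] at hJb
      have hecb : ec t₁ ≤ K * (c₀ * t_f) :=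
        hecK.trans (mul_le_mul_of_nonneg_left hJb hK0)
      have hsq2 : (K * (c₀ * t_f)) ^ 2 = C₂ * I := by
        rw [hC₂def]
        have : (c₀ * t_f) ^ 2 = D * I * t_f := by
          rw [mul_pow, hc₀sq]; field_simp
        rw [mul_pow, this]
        ring
      calc ec t₁ ^ 2 ≤ (K * (c₀ * t_f)) ^ 2 := by
            refine pow_le_pow_left₀ (norm_nonneg _) hecb 2
        _ = C₂ * I := hsq2
  -- finish
  have hEt₂ : Ec t₂ ≤ C₁ * I := hEC1 t₂ ht₂
  rw [← heceq t₁ ht₁, ← hEceq t₂ ht₂, hIeq]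
  have : ec t₁ ^ 2 + Ec t₂ ≤ C₂ * I + C₁ * I := add_le_add hec2 hEt₂
  nlinarith [hI0]
end

section
/- Let f : ℝⁿ → ℝⁿ be continuously differentiable with ‖Df(x)‖ ≤ L for all x ∈ ℝⁿ, and let μ be a Borel probability measure on ℝⁿ with finite second moment, mean m = ∫ x dμ(x) and covariance P = ∫ (x−m)(x−m)ᵀ dμ(x). Then for every m̂ ∈ ℝⁿ and every real n×n matrix P̂, one has ‖∫ f(x)(x−m)ᵀ dμ(x) − Df(m̂) P̂‖ ≤ 2L ∫ ‖x − m‖² dμ(x) + L ‖P − P̂‖. -/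
open MeasureTheory
open scoped RealInnerProductSpace

set_option maxHeartbeats 1000000 in
theorem mixed_moment_linearization_error (n : ℕ)
    (f : EuclideanSpace ℝ (Fin n) → EuclideanSpace ℝ (Fin n)) (L : ℝ)
    (hf : ContDiff ℝ 1 f) (hL : ∀ x, ‖fderiv ℝ f x‖ ≤ L)
    (μ : Measure (EuclideanSpace ℝ (Fin n))) [IsProbabilityMeasure μ]
    (h2 : Integrable (fun x => ‖x‖ ^ 2) μ)
    (h1 : Integrable (fun x : EuclideanSpace ℝ (Fin n) => x) μ)
    (m : EuclideanSpace ℝ (Fin n)) (hm : m = ∫ x, x ∂μ)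
    (P : EuclideanSpace ℝ (Fin n) →L[ℝ] EuclideanSpace ℝ (Fin n))
    (hP : ∀ v, P v = ∫ x, ⟪x - m, v⟫ • (x - m) ∂μ)
    (M : EuclideanSpace ℝ (Fin n) →L[ℝ] EuclideanSpace ℝ (Fin n))
    (hM : ∀ v, M v = ∫ x, ⟪x - m, v⟫ • f x ∂μ)
    (mhat : EuclideanSpace ℝ (Fin n))
    (Phat : EuclideanSpace ℝ (Fin n) →L[ℝ] EuclideanSpace ℝ (Fin n)) :
    ‖M - fderiv ℝ f mhat ∘L Phat‖ ≤ 2 * L * ∫ x, ‖x - m‖ ^ 2 ∂μ + L * ‖P - Phat‖ := by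
  set A := fderiv ℝ f mhat with hA
  have hL0 : 0 ≤ L := le_trans (norm_nonneg _) (hL 0)
  have hdiff : Differentiable ℝ f := hf.differentiable one_ne_zero
  have hcont : Continuous f := hf.continuous
  have hlip : ∀ x : EuclideanSpace ℝ (Fin n), ‖f x - f m‖ ≤ L * ‖x - m‖ := fun x =>
    convex_univ.norm_image_sub_le_of_norm_fderiv_le (fun z _ => hdiff z)
      (fun z _ => hL z) trivial trivial
  -- integrability of ‖x - m‖ and ‖x - m‖^2
  have h1m : Integrable (fun x : EuclideanSpace ℝ (Fin n) => x - m) μ :=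
    h1.sub (integrable_const m)
  have h1n : Integrable (fun x : EuclideanSpace ℝ (Fin n) => ‖x - m‖) μ := h1m.norm
  have h2m : Integrable (fun x : EuclideanSpace ℝ (Fin n) => ‖x - m‖ ^ 2) μ := by
    have hb : Integrable (fun x : EuclideanSpace ℝ (Fin n) =>
        2 * ‖x‖ ^ 2 + 2 * ‖m‖ ^ 2) μ := (h2.const_mul 2).add (integrable_const _)
    refine hb.mono' ?_ ?_
    · exact (((continuous_id.sub continuous_const).norm.pow 2).aestronglyMeasurable)
    · filter_upwards with x
      have h := norm_sub_le x m
      have h2 : ‖x - m‖ ≥ 0 := norm_nonneg _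
      rw [Real.norm_of_nonneg (by positivity)]
      nlinarith [sq_nonneg (‖x‖ - ‖m‖), sq_nonneg (‖x‖ + ‖m‖), norm_nonneg x, norm_nonneg m]
  have hInt2 : 0 ≤ ∫ x, ‖x - m‖ ^ 2 ∂μ := integral_nonneg fun x => by positivity
  -- for fixed v, the key identity and bound
  have key : ∀ v : EuclideanSpace ℝ (Fin n),
      ‖(M - A ∘L Phat) v‖ ≤ (2 * L * ∫ x, ‖x - m‖ ^ 2 ∂μ + L * ‖P - Phat‖) * ‖v‖ := by
    intro v
    have hcont_in : Continuous fun x : EuclideanSpace ℝ (Fin n) => ⟪x - m, v⟫ :=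
      (continuous_id.sub continuous_const).inner continuous_const
    have habs : ∀ x : EuclideanSpace ℝ (Fin n), |⟪x - m, v⟫| ≤ ‖x - m‖ * ‖v‖ :=
      fun x => abs_real_inner_le_norm _ _
    -- integrability facts
    have I1 : Integrable (fun x => ⟪x - m, v⟫ • f x) μ := by
      have hb : Integrable (fun x : EuclideanSpace ℝ (Fin n) =>
          (‖v‖ * ‖f m‖) * ‖x - m‖ + (‖v‖ * L) * ‖x - m‖ ^ 2) μ :=
        (h1n.const_mul _).add (h2m.const_mul _)
      refine hb.mono' ((hcont_in.smul hcont).aestronglyMeasurable) ?_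
      filter_upwards with x
      rw [norm_smul]
      have h1 := habs x
      have h2 : ‖f x‖ ≤ ‖f m‖ + L * ‖x - m‖ := by
        have := hlip x
        have := norm_sub_norm_le (f x) (f m)
        linarith
      have h3 : ‖(⟪x - m, v⟫ : ℝ)‖ = |⟪x - m, v⟫| := rfl
      rw [h3]
      nlinarith [abs_nonneg (⟪x - m, v⟫ : ℝ), norm_nonneg (f x), norm_nonneg (x - m),
        norm_nonneg v, norm_nonneg (f m)]
    have I2 : Integrable (fun x => ⟪x - m, v⟫ • (x - m)) μ := by
      have hb : Integrable (fun x : EuclideanSpace ℝ (Fin n) => ‖v‖ * ‖x - m‖ ^ 2) μ :=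
        h2m.const_mul _
      refine hb.mono' ((hcont_in.smul (continuous_id.sub continuous_const)).aestronglyMeasurable) ?_
      filter_upwards with x
      rw [norm_smul]
      have h1 := habs x
      have h3 : ‖(⟪x - m, v⟫ : ℝ)‖ = |⟪x - m, v⟫| := rfl
      rw [h3]
      nlinarith [abs_nonneg (⟪x - m, v⟫ : ℝ), norm_nonneg (x - m), norm_nonneg v]
    have Iinner : Integrable (fun x => (⟪x - m, v⟫ : ℝ)) μ := by
      have hb : Integrable (fun x : EuclideanSpace ℝ (Fin n) => ‖x - m‖ * ‖v‖) μ :=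
        h1n.mul_const _
      refine hb.mono' hcont_in.aestronglyMeasurable ?_
      filter_upwards with x
      exact habs x
    have I3 : Integrable (fun x => ⟪x - m, v⟫ • f m) μ := Iinner.smul_const _
    have I4 : Integrable (fun x => ⟪x - m, v⟫ • A (x - m)) μ := by
      have := A.integrable_comp I2
      simpa [_root_.map_smul] using this
    -- zero mean
    have hmean : (∫ x, (x - m) ∂μ) = 0 := by
      rw [integral_sub h1 (integrable_const m), integral_const]
      simp [← hm]
    have hinner_zero : (∫ x, (⟪x - m, v⟫ : ℝ) ∂μ) = 0 := by
      have : ∀ x : EuclideanSpace ℝ (Fin n), (⟪x - m, v⟫ : ℝ) = ⟪v, x - m⟫ :=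
        fun x => real_inner_comm _ _
      simp_rw [this]
      rw [integral_inner h1m v, hmean, inner_zero_right]
    -- identity: M v - A (P v) = ∫ ⟪x-m,v⟫ • (f x - f m - A (x - m))
    have hid : M v - A (P v) = ∫ x, ⟪x - m, v⟫ • (f x - f m - A (x - m)) ∂μ := by
      have hAP : A (P v) = ∫ x, ⟪x - m, v⟫ • A (x - m) ∂μ := by
        rw [hP v, ← A.integral_comp_comm I2]
        simp_rw [_root_.map_smul]
      have hfm : (∫ x, ⟪x - m, v⟫ • f m ∂μ) = 0 := by
        rw [integral_smul_const, hinner_zero, zero_smul]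
      rw [hM v, hAP]
      simp_rw [smul_sub]
      have I13 : Integrable (fun x => ⟪x - m, v⟫ • f x - ⟪x - m, v⟫ • f m) μ := I1.sub I3
      rw [integral_sub I13 I4, integral_sub I1 I3, hfm, sub_zero]
    -- bound on the first part
    have hbound1 : ‖M v - A (P v)‖ ≤ (2 * L * ∫ x, ‖x - m‖ ^ 2 ∂μ) * ‖v‖ := by
      rw [hid]
      have hb : ‖∫ x, ⟪x - m, v⟫ • (f x - f m - A (x - m)) ∂μ‖
          ≤ ∫ x, 2 * L * ‖x - m‖ ^ 2 * ‖v‖ ∂μ := by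
        refine norm_integral_le_of_norm_le ((h2m.const_mul (2 * L)).mul_const ‖v‖) ?_
        filter_upwards with x
        rw [norm_smul]
        have h1 := habs x
        have h2 : ‖f x - f m - A (x - m)‖ ≤ 2 * L * ‖x - m‖ := by
          have ha : ‖A (x - m)‖ ≤ L * ‖x - m‖ := by
            calc ‖A (x - m)‖ ≤ ‖A‖ * ‖x - m‖ := A.le_opNorm _
              _ ≤ L * ‖x - m‖ := by
                  exact mul_le_mul_of_nonneg_right (hL mhat) (norm_nonneg _)
          have hbx := hlip x
          have := norm_sub_le (f x - f m) (A (x - m))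
          linarith
        have h3 : ‖(⟪x - m, v⟫ : ℝ)‖ = |⟪x - m, v⟫| := rfl
        rw [h3]
        nlinarith [abs_nonneg (⟪x - m, v⟫ : ℝ), norm_nonneg (f x - f m - A (x - m)),
          norm_nonneg (x - m), norm_nonneg v]
      calc ‖∫ x, ⟪x - m, v⟫ • (f x - f m - A (x - m)) ∂μ‖
          ≤ ∫ x, 2 * L * ‖x - m‖ ^ 2 * ‖v‖ ∂μ := hb
        _ = (2 * L * ∫ x, ‖x - m‖ ^ 2 ∂μ) * ‖v‖ := by
            rw [integral_mul_const, integral_const_mul]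
    -- combine
    have hsplit : (M - A ∘L Phat) v = (M v - A (P v)) + A ((P - Phat) v) := by
      simp only [ContinuousLinearMap.sub_apply, ContinuousLinearMap.comp_apply, map_sub]
      abel
    rw [hsplit]
    have hbound2 : ‖A ((P - Phat) v)‖ ≤ L * ‖P - Phat‖ * ‖v‖ := by
      calc ‖A ((P - Phat) v)‖ ≤ ‖A‖ * ‖(P - Phat) v‖ := A.le_opNorm _
        _ ≤ L * (‖P - Phat‖ * ‖v‖) := by
            exact mul_le_mul (hL mhat) ((P - Phat).le_opNorm v) (norm_nonneg _) hL0
        _ = L * ‖P - Phat‖ * ‖v‖ := by ring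
    calc ‖M v - A (P v) + A ((P - Phat) v)‖
        ≤ ‖M v - A (P v)‖ + ‖A ((P - Phat) v)‖ := norm_add_le _ _
      _ ≤ (2 * L * ∫ x, ‖x - m‖ ^ 2 ∂μ) * ‖v‖ + L * ‖P - Phat‖ * ‖v‖ :=
          add_le_add hbound1 hbound2
      _ = (2 * L * ∫ x, ‖x - m‖ ^ 2 ∂μ + L * ‖P - Phat‖) * ‖v‖ := by ring
  exact ContinuousLinearMap.opNorm_le_bound _
    (add_nonneg (mul_nonneg (by positivity) hInt2) (mul_nonneg hL0 (norm_nonneg _))) key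
end

section
/- There exists a constant C > 0 (depending only on the dimension n) such that the following holds. Let f, φ, t_f, u, G be as in the context, let (μ_t) be a true moment flow for (f,G,u) with mean m and covariance P, and let (m̂,P̂) be its statistical linearization, both defined on all of [0,t_f]. Then sup_{t∈[0,t_f]} ‖P(t) − P̂(t)‖ ≤ C e^{C ∫₀^{t_f} φ(‖u(s)‖) ds} · ∫₀^{t_f} φ(‖u(s)‖) ‖P̂(s)‖ ds. -/
open MeasureTheory intervalIntegral ContinuousLinearMap
open scoped RealInnerProductSpace NNReal

/-- Grönwall-Bellman inequality with integrable coefficient. -/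
lemma gronwall_L1 {a v : ℝ → ℝ} {T b K : ℝ} (hT : 0 ≤ T)
    (ha : IntervalIntegrable a volume 0 T)
    (ha0 : ∀ s, 0 ≤ a s)
    (hav : IntervalIntegrable (fun s => a s * v s) volume 0 T)
    (hv0 : ∀ t ∈ Set.Icc (0:ℝ) T, 0 ≤ v t)
    (hb : 0 ≤ b) (hK : 0 < K)
    (hineq : ∀ t ∈ Set.Icc (0:ℝ) T, v t ≤ b + K * ∫ s in (0:ℝ)..t, a s * v s) :
    ∀ t ∈ Set.Icc (0:ℝ) T, v t ≤ 2 * b * Real.exp (2 * Real.log 2 * K * ∫ s in (0:ℝ)..T, a s) := by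
  set A : ℝ → ℝ := fun t => ∫ s in (0:ℝ)..t, a s with hA
  set J : ℝ → ℝ := fun t => K * ∫ s in (0:ℝ)..t, a s * v s with hJ
  set ε : ℝ := 1 / (2 * K) with hε
  have hεpos : 0 < ε := by positivity
  -- basic facts
  have hsub : ∀ t ∈ Set.Icc (0:ℝ) T, IntervalIntegrable a volume 0 t := by
    intro t ht
    exact ha.mono_set (by rw [Set.uIcc_of_le ht.1, Set.uIcc_of_le hT]; exact Set.Icc_subset_Icc le_rfl ht.2)
  have hsubav : ∀ s t, s ∈ Set.Icc (0:ℝ) T → t ∈ Set.Icc (0:ℝ) T → IntervalIntegrable (fun s => a s * v s) volume s t := by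
    intro s t hs ht
    refine hav.mono_set ?_
    rw [Set.uIcc_of_le hT]
    exact Set.uIcc_subset_Icc ⟨hs.1, hs.2⟩ ⟨ht.1, ht.2⟩
  have hAmono : ∀ s t, s ∈ Set.Icc (0:ℝ) T → t ∈ Set.Icc (0:ℝ) T → s ≤ t → A s ≤ A t := by
    intro s t hs ht hst
    have h1 : IntervalIntegrable a volume 0 s := hsub s hs
    have h2 : IntervalIntegrable a volume s t :=
      (ha.mono_set (by rw [Set.uIcc_of_le hT]; exact Set.uIcc_subset_Icc ⟨hs.1, hs.2⟩ ⟨ht.1, ht.2⟩))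
    have : A t = A s + ∫ x in s..t, a x := (integral_add_adjacent_intervals h1 h2).symm
    rw [this]
    have : 0 ≤ ∫ x in s..t, a x := integral_nonneg hst fun x _ => ha0 x
    linarith
  have hAcont : ContinuousOn A (Set.Icc 0 T) := by
    have := continuousOn_primitive_interval' ha (by rw [Set.uIcc_of_le hT]; exact ⟨le_rfl, hT⟩)
    rwa [Set.uIcc_of_le hT] at this
  have hJmono : ∀ s t, s ∈ Set.Icc (0:ℝ) T → t ∈ Set.Icc (0:ℝ) T → s ≤ t → J s ≤ J t := by
    intro s t hs ht hst
    have h1 := hsubav 0 s ⟨le_rfl, hT⟩ hs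
    have h2 := hsubav s t hs ht
    have he : (∫ x in (0:ℝ)..t, a x * v x) = (∫ x in (0:ℝ)..s, a x * v x) + ∫ x in s..t, a x * v x :=
      (integral_add_adjacent_intervals h1 h2).symm
    have hnn : 0 ≤ ∫ x in s..t, a x * v x := by
      apply integral_nonneg hst
      intro x hx
      exact mul_nonneg (ha0 x) (hv0 x ⟨le_trans hs.1 hx.1, le_trans hx.2 ht.2⟩)
    simp only [hJ]
    rw [he]
    nlinarith [hK.le]
  have hJ0 : ∀ t ∈ Set.Icc (0:ℝ) T, 0 ≤ J t := by
    intro t ht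
    have := hJmono 0 t ⟨le_rfl, hT⟩ ht ht.1
    simpa [hJ] using this
  -- main induction: A t ≤ N ε → J t ≤ b * (2^N - 1)
  have key : ∀ N : ℕ, ∀ t ∈ Set.Icc (0:ℝ) T, A t ≤ N * ε → J t ≤ b * (2 ^ N - 1) := by
    intro N
    induction N with
    | zero =>
      intro t ht hAt
      have hA0 : A t = 0 := le_antisymm (by simpa using hAt)
        (integral_nonneg ht.1 fun x _ => ha0 x)
      -- J t ≤ K * (b + J t) * A t = 0, and J t ≥ 0
      have hbound : ∀ s ∈ Set.Icc (0:ℝ) t, v s ≤ b + J t := by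
        intro s hs
        have hsT : s ∈ Set.Icc (0:ℝ) T := ⟨hs.1, le_trans hs.2 ht.2⟩
        calc v s ≤ b + J s := hineq s hsT
        _ ≤ b + J t := by linarith [hJmono s t hsT ht hs.2]
      have hJle : J t ≤ K * ((b + J t) * A t) := by
        simp only [hJ, hA]
        have h1 : (∫ s in (0:ℝ)..t, a s * v s) ≤ ∫ s in (0:ℝ)..t, a s * (b + J t) := by
          apply integral_mono_on ht.1 (hsubav 0 t ⟨le_rfl, hT⟩ ht)
            ((hsub t ht).mul_const _)
          intro s hs
          exact mul_le_mul_of_nonneg_left (hbound s hs) (ha0 s)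
        have h2 : (∫ s in (0:ℝ)..t, a s * (b + J t)) = (∫ s in (0:ℝ)..t, a s) * (b + J t) :=
          integral_mul_const _ _
        calc K * ∫ s in (0:ℝ)..t, a s * v s ≤ K * ((∫ s in (0:ℝ)..t, a s) * (b + J t)) := by
              rw [← h2]; exact mul_le_mul_of_nonneg_left h1 hK.le
        _ = K * ((b + J t) * (∫ s in (0:ℝ)..t, a s)) := by ring
      rw [hA0] at hJle
      simp only [mul_zero] at hJle
      have := hJ0 t ht
      simp only [pow_zero]
      linarith
    | succ N ih =>
      intro t ht hAt
      -- let c = sup of {s ∈ [0,t] | A s ≤ N ε}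
      set S : Set ℝ := {s ∈ Set.Icc (0:ℝ) t | A s ≤ N * ε} with hS
      have hne : (0:ℝ) ∈ S := by
        constructor
        · exact ⟨le_rfl, ht.1⟩
        · simp only [hA]
          rw [intervalIntegral.integral_same]
          positivity
      have hbdd : BddAbove S := BddAbove.mono (fun s hs => hs.1) bddAbove_Icc
      set c : ℝ := sSup S with hc
      have hcS : c ∈ S := by
        have hclosed : IsClosed S := by
          have : S = Set.Icc (0:ℝ) t ∩ (A ⁻¹' Set.Iic (N * ε)) ∩ Set.Icc 0 t := by
            ext s; simp [hS]; tauto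
          rw [this]
          apply IsClosed.inter _ isClosed_Icc
          apply (hAcont.mono (Set.Icc_subset_Icc le_rfl ht.2)).preimage_isClosed_of_isClosed
            isClosed_Icc isClosed_Iic
        exact hclosed.csSup_mem ⟨0, hne⟩ hbdd
      have hcIcc : c ∈ Set.Icc (0:ℝ) t := hcS.1
      have hcT : c ∈ Set.Icc (0:ℝ) T := ⟨hcIcc.1, le_trans hcIcc.2 ht.2⟩
      have hJc : J c ≤ b * (2 ^ N - 1) := ih c hcT hcS.2
      -- A t - A c ≤ ε
      have hAdiff : A t - A c ≤ ε := by
        rcases eq_or_lt_of_le hcIcc.2 with hct | hct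
        · rw [hct]; simp [hεpos.le]
        · -- c < t: A c ≥ N ε by right-continuity
          have hge : (N : ℝ) * ε ≤ A c := by
            by_contra hlt
            push_neg at hlt
            -- by continuity, A < N ε slightly to the right of c, contradicting sup
            have hcont : ContinuousWithinAt A (Set.Icc 0 T) c := hAcont c hcT
            have : ∀ᶠ s in nhdsWithin c (Set.Icc 0 T), A s < N * ε :=
              hcont.eventually_lt_const hlt
            -- pick s in (c, t] with A s < N ε
            obtain ⟨δ, hδpos, hδsub⟩ := Metric.mem_nhdsWithin_iff.mp this
            set s : ℝ := min t (c + δ / 2) with hs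
            have hsgt : c < s := by
              apply lt_min hct
              linarith
            have hsle : s ≤ t := min_le_left _ _
            have hsball : s ∈ Metric.ball c δ := by
              simp only [Metric.mem_ball, Real.dist_eq, abs_sub_lt_iff]
              have hmin : s ≤ c + δ / 2 := min_le_right _ _
              exact ⟨by linarith, by linarith⟩
            have hsIcc : s ∈ Set.Icc (0:ℝ) T := ⟨le_trans hcIcc.1 hsgt.le, le_trans hsle ht.2⟩
            have hsS : s ∈ S := ⟨⟨le_trans hcIcc.1 hsgt.le, hsle⟩, (hδsub ⟨hsball, hsIcc⟩).le⟩
            have : s ≤ c := le_csSup hbdd hsS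
            linarith
          have hAc : A c ≤ N * ε := hcS.2
          push_cast at hAt ⊢
          linarith
      -- bound v on [0, t] by b + J t, so on [c,t] integral piece small
      have hbound : ∀ s ∈ Set.Icc (0:ℝ) t, v s ≤ b + J t := by
        intro s hs
        have hsT : s ∈ Set.Icc (0:ℝ) T := ⟨hs.1, le_trans hs.2 ht.2⟩
        calc v s ≤ b + J s := hineq s hsT
        _ ≤ b + J t := by linarith [hJmono s t hsT ht hs.2]
      -- J t = J c + K ∫_c^t a v ≤ J c + K (b + J t)(A t - A c) ≤ J c + (b + J t)/2
      have hsplit : J t = J c + K * ∫ s in c..t, a s * v s := by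
        simp only [hJ]
        rw [← integral_add_adjacent_intervals (hsubav 0 c ⟨le_rfl, hT⟩ hcT) (hsubav c t hcT ht)]
        ring
      have hpiece : (∫ s in c..t, a s * v s) ≤ (b + J t) * (A t - A c) := by
        have hsubac : IntervalIntegrable a volume c t :=
          ha.mono_set (by rw [Set.uIcc_of_le hT]; exact Set.uIcc_subset_Icc ⟨hcT.1, hcT.2⟩ ⟨ht.1, ht.2⟩)
        have h1 : (∫ s in c..t, a s * v s) ≤ ∫ s in c..t, a s * (b + J t) := by
          apply integral_mono_on hcIcc.2 (hsubav c t hcT ht) (hsubac.mul_const _)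
          intro s hs
          exact mul_le_mul_of_nonneg_left (hbound s ⟨le_trans hcIcc.1 hs.1, hs.2⟩) (ha0 s)
        have h2 : (∫ s in c..t, a s * (b + J t)) = (∫ s in c..t, a s) * (b + J t) :=
          integral_mul_const _ _
        have h3 : (∫ s in c..t, a s) = A t - A c := by
          simp only [hA]
          rw [← integral_add_adjacent_intervals (hsub c hcT) hsubac]
          ring
        calc (∫ s in c..t, a s * v s) ≤ (∫ s in c..t, a s) * (b + J t) := h1.trans_eq h2
        _ = (b + J t) * (A t - A c) := by rw [h3]; ring
      have hJtnn : 0 ≤ J t := hJ0 t ht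
      have hbJt : 0 ≤ b + J t := by linarith
      have hAcnn : 0 ≤ A t - A c := by
        have := hAmono c t hcT ht hcIcc.2
        linarith
      have : J t ≤ J c + K * ((b + J t) * ε) := by
        have h4 : K * (∫ s in c..t, a s * v s) ≤ K * ((b + J t) * ε) := by
          apply mul_le_mul_of_nonneg_left _ hK.le
          calc (∫ s in c..t, a s * v s) ≤ (b + J t) * (A t - A c) := hpiece
          _ ≤ (b + J t) * ε := mul_le_mul_of_nonneg_left hAdiff hbJt
        linarith [hsplit]
      have hKε : K * ε = 1 / 2 := by
        rw [hε]; field_simp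
      have h2 : J t ≤ J c + (b + J t) / 2 := by
        have e : K * ((b + J t) * ε) = (b + J t) / 2 := by
          rw [mul_comm (b + J t) ε, ← mul_assoc, mul_comm K ε, mul_comm ε K, hKε]; ring
        linarith [e ▸ this]
      -- conclude
      have : J t ≤ 2 * J c + b := by linarith
      calc J t ≤ 2 * (b * (2 ^ N - 1)) + b := by linarith
      _ = b * (2 ^ (N + 1) - 1) := by ring
  -- conclude the statement
  intro t ht
  have hATnn : 0 ≤ A T := integral_nonneg hT fun x _ => ha0 x
  set N : ℕ := ⌈A T / ε⌉₊ with hN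
  have hAtN : A t ≤ N * ε := by
    calc A t ≤ A T := hAmono t T ht ⟨hT, le_rfl⟩ ht.2
    _ = (A T / ε) * ε := by field_simp
    _ ≤ N * ε := mul_le_mul_of_nonneg_right (Nat.le_ceil _) hεpos.le
  have hvt : v t ≤ b * 2 ^ N := by
    have h1 : v t ≤ b + J t := hineq t ht
    have h2 : J t ≤ b * (2 ^ N - 1) := key N t ht hAtN
    nlinarith [pow_pos (by norm_num : (0:ℝ) < 2) N]
  -- 2^N ≤ 2 * exp(2 log 2 K A T)
  have hNle : (N : ℝ) ≤ 2 * K * A T + 1 := by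
    have : (N : ℝ) ≤ A T / ε + 1 := by
      calc (N:ℝ) ≤ ⌈A T / ε⌉₊ := le_rfl
      _ ≤ A T / ε + 1 := (Nat.ceil_lt_add_one (by positivity)).le
    have hdiv : A T / ε = 2 * K * A T := by
      rw [hε, div_div_eq_mul_div, div_one]; ring
    linarith [hdiv ▸ this]
  have hexp : (2:ℝ) ^ N ≤ 2 * Real.exp (2 * Real.log 2 * K * A T) := by
    have h1 : (2:ℝ) ^ N = Real.exp (N * Real.log 2) := by
      rw [Real.exp_nat_mul, Real.exp_log (by norm_num)]
    rw [h1]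
    have hlog2 : 0 < Real.log 2 := Real.log_pos (by norm_num)
    have h2 : (N:ℝ) * Real.log 2 ≤ (2 * K * A T + 1) * Real.log 2 :=
      mul_le_mul_of_nonneg_right hNle hlog2.le
    calc Real.exp ((N:ℝ) * Real.log 2) ≤ Real.exp ((2 * K * A T + 1) * Real.log 2) :=
          Real.exp_le_exp.mpr h2
    _ = Real.exp (Real.log 2) * Real.exp (2 * Real.log 2 * K * A T) := by
        rw [← Real.exp_add]; ring_nf
    _ = 2 * Real.exp (2 * Real.log 2 * K * A T) := by rw [Real.exp_log (by norm_num)]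
  calc v t ≤ b * 2 ^ N := hvt
  _ ≤ b * (2 * Real.exp (2 * Real.log 2 * K * A T)) := mul_le_mul_of_nonneg_left hexp hb
  _ = 2 * b * Real.exp (2 * Real.log 2 * K * ∫ s in (0:ℝ)..T, a s) := by rw [hA]; ring

variable {n : ℕ}

local notation "E" => EuclideanSpace ℝ (Fin n)

/-- trace-type bound: second central moment is at most `n * ‖P‖`. -/
lemma second_moment_le {ν : Measure (EuclideanSpace ℝ (Fin n))} [IsProbabilityMeasure ν]
    {m : EuclideanSpace ℝ (Fin n)}
    (hx2 : Integrable (fun x : EuclideanSpace ℝ (Fin n) => ‖x‖ ^ 2) ν)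
    (Pop : EuclideanSpace ℝ (Fin n) →L[ℝ] EuclideanSpace ℝ (Fin n))
    (hP : ∀ w, Pop w = ∫ x, ⟪x - m, w⟫ • (x - m) ∂ν) :
    (∫ x, ‖x - m‖ ^ 2 ∂ν) ≤ n * ‖Pop‖ := by
  have iNorm2 : Integrable (fun x : EuclideanSpace ℝ (Fin n) => ‖x - m‖ ^ 2) ν := by
    apply Integrable.mono' (g := fun x => 2 * ‖x‖ ^ 2 + 2 * ‖m‖ ^ 2)
      ((hx2.const_mul 2).add (integrable_const _))
      ((((continuous_sub_right m).norm.pow 2)).aestronglyMeasurable)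
    filter_upwards with x
    have h1 : ‖x - m‖ ≤ ‖x‖ + ‖m‖ := norm_sub_le x m
    have h2 : (0:ℝ) ≤ ‖x - m‖ := norm_nonneg _
    show ‖‖x - m‖ ^ 2‖ ≤ 2 * ‖x‖ ^ 2 + 2 * ‖m‖ ^ 2
    rw [Real.norm_eq_abs, abs_of_nonneg (by positivity)]
    nlinarith [norm_nonneg x, norm_nonneg m, sq_nonneg (‖x‖ - ‖m‖), sq_nonneg (‖x‖ + ‖m‖)]
  set e : Fin n → EuclideanSpace ℝ (Fin n) := fun i => EuclideanSpace.single i (1:ℝ) with he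
  have hinner : ∀ i, Integrable (fun x : EuclideanSpace ℝ (Fin n) => ⟪x - m, e i⟫ ^ 2) ν := by
    intro i
    apply Integrable.mono' (g := fun x => ‖x - m‖ ^ 2) iNorm2
      (Continuous.aestronglyMeasurable
        (((continuous_sub_right m).inner continuous_const).pow 2))
    filter_upwards with x
    rw [Real.norm_eq_abs, abs_of_nonneg (sq_nonneg _), ← sq_abs]
    have h := abs_real_inner_le_norm (x - m) (e i)
    have hne1 : ‖e i‖ = 1 := by simp [he, EuclideanSpace.norm_single]
    rw [hne1, mul_one] at h
    nlinarith [abs_nonneg ⟪x - m, e i⟫, norm_nonneg (x - m)]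
  have hnormsq : ∀ y : EuclideanSpace ℝ (Fin n), ‖y‖ ^ 2 = ∑ i, ⟪y, e i⟫ ^ 2 := by
    intro y
    have h1 : ∀ i, ⟪y, e i⟫ = y i := by
      intro i
      rw [he]
      simp [EuclideanSpace.inner_single_right]
    simp_rw [h1]
    rw [EuclideanSpace.norm_eq, Real.sq_sqrt (by positivity)]
    congr 1; ext i; rw [Real.norm_eq_abs, sq_abs]
  have hsum : (∫ x, ‖x - m‖ ^ 2 ∂ν) = ∑ i, ∫ x, ⟪x - m, e i⟫ ^ 2 ∂ν := by
    rw [← integral_finset_sum _ (fun i _ => hinner i)]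
    exact MeasureTheory.integral_congr_ae (Filter.Eventually.of_forall fun x => hnormsq (x - m))
  have hterm : ∀ i, (∫ x, ⟪x - m, e i⟫ ^ 2 ∂ν) ≤ ‖Pop‖ := by
    intro i
    have ig : Integrable (fun x : EuclideanSpace ℝ (Fin n) => ⟪x - m, e i⟫ • (x - m)) ν := by
      apply Integrable.mono' (g := fun x => ‖x - m‖ ^ 2) iNorm2
        (Continuous.aestronglyMeasurable
          (by fun_prop))
      filter_upwards with x
      rw [norm_smul, Real.norm_eq_abs]
      have h := abs_real_inner_le_norm (x - m) (e i)
      have hne : ‖e i‖ = 1 := by simp [he, EuclideanSpace.norm_single]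
      rw [hne, mul_one] at h
      nlinarith [abs_nonneg ⟪x - m, e i⟫, norm_nonneg (x - m)]
    have h1 : ⟪e i, Pop (e i)⟫ = ∫ x, ⟪x - m, e i⟫ ^ 2 ∂ν := by
      rw [hP (e i), ← integral_inner ig (e i)]
      apply MeasureTheory.integral_congr_ae
      filter_upwards with x
      rw [real_inner_smul_right, real_inner_comm]
      ring
    have hne : ‖e i‖ = 1 := by simp [he, EuclideanSpace.norm_single]
    calc (∫ x, ⟪x - m, e i⟫ ^ 2 ∂ν) = ⟪e i, Pop (e i)⟫ := h1.symm
    _ ≤ ‖e i‖ * ‖Pop (e i)‖ := real_inner_le_norm _ _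
    _ = ‖Pop (e i)‖ := by rw [hne, one_mul]
    _ ≤ ‖Pop‖ * ‖e i‖ := le_opNorm _ _
    _ = ‖Pop‖ := by rw [hne, mul_one]
  calc (∫ x, ‖x - m‖ ^ 2 ∂ν) = ∑ i, ∫ x, ⟪x - m, e i⟫ ^ 2 ∂ν := hsum
  _ ≤ ∑ _i : Fin n, ‖Pop‖ := Finset.sum_le_sum fun i _ => hterm i

  _ = n * ‖Pop‖ := by
      rw [Finset.sum_const, Finset.card_univ, Fintype.card_fin, nsmul_eq_mul]

set_option maxHeartbeats 1000000 in
lemma psi_sub_d_bound {n : ℕ} {ν : Measure (EuclideanSpace ℝ (Fin n))} [IsProbabilityMeasure ν]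
    {F : EuclideanSpace ℝ (Fin n) → EuclideanSpace ℝ (Fin n)} (hFc : Continuous F)
    {a : ℝ} (ha : 0 ≤ a)
    (hLip : ∀ x y, ‖F x - F y‖ ≤ a * ‖x - y‖)
    {m : EuclideanSpace ℝ (Fin n)} (hm : m = ∫ x, x ∂ν)
    (hx1 : Integrable (fun x : EuclideanSpace ℝ (Fin n) => x) ν)
    (hx2 : Integrable (fun x : EuclideanSpace ℝ (Fin n) => ‖x‖ ^ 2) ν)
    (Pop : EuclideanSpace ℝ (Fin n) →L[ℝ] EuclideanSpace ℝ (Fin n))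
    (hP : ∀ w, Pop w = ∫ x, ⟪x - m, w⟫ • (x - m) ∂ν)
    (B Q R Ψop : EuclideanSpace ℝ (Fin n) →L[ℝ] EuclideanSpace ℝ (Fin n)) (hB : ‖B‖ ≤ a)
    (hΨ : ∀ w, Ψop w = (∫ x, (⟪x - m, w⟫ • F x + ⟪F x, w⟫ • (x - m)) ∂ν) + R w) :
    ‖Ψop - (B ∘L Q + Q ∘L adjoint B + R)‖ ≤ 2 * n * a * ‖Pop‖ + 2 * a * ‖Q‖ := by
  have iSub : Integrable (fun x : EuclideanSpace ℝ (Fin n) => x - m) ν :=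
    hx1.sub (integrable_const m)
  have hmean0 : (∫ x, (x - m) ∂ν) = 0 := by
    rw [integral_sub hx1 (integrable_const m), MeasureTheory.integral_const, probReal_univ,
      one_smul, hm, sub_self]
  have iNorm2 : Integrable (fun x : EuclideanSpace ℝ (Fin n) => ‖x - m‖ ^ 2) ν := by
    apply Integrable.mono' (g := fun x => 2 * ‖x‖ ^ 2 + 2 * ‖m‖ ^ 2)
      ((hx2.const_mul 2).add (integrable_const _))
      ((((continuous_sub_right m).norm.pow 2)).aestronglyMeasurable)
    filter_upwards with x
    have h1 : ‖x - m‖ ≤ ‖x‖ + ‖m‖ := norm_sub_le x m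
    have h2 : (0:ℝ) ≤ ‖x - m‖ := norm_nonneg _
    show ‖‖x - m‖ ^ 2‖ ≤ 2 * ‖x‖ ^ 2 + 2 * ‖m‖ ^ 2
    rw [Real.norm_eq_abs, abs_of_nonneg (by positivity)]
    nlinarith [norm_nonneg x, norm_nonneg m, sq_nonneg (‖x‖ - ‖m‖)]
  have htrace : (∫ x, ‖x - m‖ ^ 2 ∂ν) ≤ n * ‖Pop‖ := second_moment_le hx2 Pop hP
  have htrace0 : 0 ≤ ∫ x, ‖x - m‖ ^ 2 ∂ν := integral_nonneg fun x => by positivity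
  refine opNorm_le_bound _ (by positivity) fun w => ?_
  set g1 : EuclideanSpace ℝ (Fin n) → EuclideanSpace ℝ (Fin n) :=
    fun x => ⟪x - m, w⟫ • (F x - F m) with hg1def
  set g2 : EuclideanSpace ℝ (Fin n) → EuclideanSpace ℝ (Fin n) :=
    fun x => ⟪F x - F m, w⟫ • (x - m) with hg2def
  have hg1bd : ∀ x, ‖g1 x‖ ≤ a * ‖w‖ * ‖x - m‖ ^ 2 := by
    intro x
    rw [hg1def]
    simp only
    rw [norm_smul, Real.norm_eq_abs]
    calc |⟪x - m, w⟫| * ‖F x - F m‖ ≤ (‖x - m‖ * ‖w‖) * (a * ‖x - m‖) := by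
          apply mul_le_mul (abs_real_inner_le_norm _ _) (hLip x m) (norm_nonneg _) (by positivity)
    _ = a * ‖w‖ * ‖x - m‖ ^ 2 := by ring
  have hg2bd : ∀ x, ‖g2 x‖ ≤ a * ‖w‖ * ‖x - m‖ ^ 2 := by
    intro x
    rw [hg2def]
    simp only
    rw [norm_smul, Real.norm_eq_abs]
    calc |⟪F x - F m, w⟫| * ‖x - m‖ ≤ (‖F x - F m‖ * ‖w‖) * ‖x - m‖ :=
          mul_le_mul_of_nonneg_right (abs_real_inner_le_norm _ _) (norm_nonneg _)
    _ ≤ ((a * ‖x - m‖) * ‖w‖) * ‖x - m‖ := by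
          apply mul_le_mul_of_nonneg_right
            (mul_le_mul_of_nonneg_right (hLip x m) (norm_nonneg _)) (norm_nonneg _)
    _ = a * ‖w‖ * ‖x - m‖ ^ 2 := by ring
  have hFcont : Continuous fun x : EuclideanSpace ℝ (Fin n) => F x - F m :=
    hFc.sub continuous_const
  have iG1 : Integrable g1 ν := by
    apply Integrable.mono' (g := fun x => a * ‖w‖ * ‖x - m‖ ^ 2)
      ((iNorm2.const_mul _))
      (Continuous.aestronglyMeasurable
        (by rw [hg1def]; fun_prop))
    filter_upwards with x using hg1bd x
  have iG2 : Integrable g2 ν := by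
    apply Integrable.mono' (g := fun x => a * ‖w‖ * ‖x - m‖ ^ 2)
      ((iNorm2.const_mul _))
      (Continuous.aestronglyMeasurable
        (by rw [hg2def]; fun_prop))
    filter_upwards with x using hg2bd x
  have hinnerint : Integrable (fun x : EuclideanSpace ℝ (Fin n) => ⟪x - m, w⟫) ν := by
    apply Integrable.mono' (g := fun x => ‖x - m‖ * ‖w‖) (iSub.norm.mul_const _)
      (Continuous.aestronglyMeasurable ((continuous_sub_right m).inner continuous_const))
    filter_upwards with x
    rw [Real.norm_eq_abs]
    exact abs_real_inner_le_norm _ _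
  have iC : Integrable (fun x : EuclideanSpace ℝ (Fin n) => ⟪x - m, w⟫ • F m) ν :=
    hinnerint.smul_const (F m)
  have iD : Integrable (fun x : EuclideanSpace ℝ (Fin n) => ⟪F m, w⟫ • (x - m)) ν := by
    exact iSub.smul (⟪F m, w⟫ : ℝ)
  -- the integral identity
  have hdecomp : ∀ x : EuclideanSpace ℝ (Fin n),
      ⟪x - m, w⟫ • F x + ⟪F x, w⟫ • (x - m)
        = (g1 x + g2 x) + (⟪x - m, w⟫ • F m + ⟪F m, w⟫ • (x - m)) := by
    intro x
    rw [hg1def, hg2def]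
    simp only [inner_sub_left, smul_sub, sub_smul]
    abel
  have hCzero : (∫ x, ⟪x - m, w⟫ • F m ∂ν) = 0 := by
    rw [_root_.integral_smul_const]
    have h0 : (∫ x, ⟪x - m, w⟫ ∂ν) = 0 := by
      have h := integral_inner (𝕜 := ℝ) iSub w
      rw [hmean0, inner_zero_right] at h
      rw [← h]
      exact MeasureTheory.integral_congr_ae
        (Filter.Eventually.of_forall fun x => real_inner_comm _ _)
    rw [h0, zero_smul]
  have hDzero : (∫ x, ⟪F m, w⟫ • (x - m) ∂ν) = 0 := by
    rw [MeasureTheory.integral_smul, hmean0, smul_zero]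
  have hintegral : (∫ x, (⟪x - m, w⟫ • F x + ⟪F x, w⟫ • (x - m)) ∂ν)
      = ∫ x, (g1 x + g2 x) ∂ν := by
    have h1 : Integrable (fun x => g1 x + g2 x) ν := iG1.add iG2
    have h2 : Integrable (fun x : EuclideanSpace ℝ (Fin n) =>
        ⟪x - m, w⟫ • F m + ⟪F m, w⟫ • (x - m)) ν := iC.add iD
    calc (∫ x, (⟪x - m, w⟫ • F x + ⟪F x, w⟫ • (x - m)) ∂ν)
        = ∫ x, ((g1 x + g2 x) + (⟪x - m, w⟫ • F m + ⟪F m, w⟫ • (x - m))) ∂ν :=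
          MeasureTheory.integral_congr_ae (Filter.Eventually.of_forall hdecomp)
      _ = (∫ x, (g1 x + g2 x) ∂ν)
            + ∫ x, (⟪x - m, w⟫ • F m + ⟪F m, w⟫ • (x - m)) ∂ν :=
          MeasureTheory.integral_add h1 h2
      _ = ∫ x, (g1 x + g2 x) ∂ν := by
          rw [MeasureTheory.integral_add iC iD, hCzero, hDzero]; simp
  -- norm bound on the integral part
  have hnormint : ‖∫ x, (g1 x + g2 x) ∂ν‖ ≤ 2 * a * ‖w‖ * (n * ‖Pop‖) := by
    calc ‖∫ x, (g1 x + g2 x) ∂ν‖ ≤ ∫ x, 2 * a * ‖w‖ * ‖x - m‖ ^ 2 ∂ν := by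
          apply MeasureTheory.norm_integral_le_of_norm_le (by simpa [mul_assoc] using iNorm2.const_mul (2 * a * ‖w‖))
          filter_upwards with x
          calc ‖g1 x + g2 x‖ ≤ ‖g1 x‖ + ‖g2 x‖ := norm_add_le _ _
          _ ≤ a * ‖w‖ * ‖x - m‖ ^ 2 + a * ‖w‖ * ‖x - m‖ ^ 2 := add_le_add (hg1bd x) (hg2bd x)
          _ = 2 * a * ‖w‖ * ‖x - m‖ ^ 2 := by ring
    _ = 2 * a * ‖w‖ * ∫ x, ‖x - m‖ ^ 2 ∂ν :=
          MeasureTheory.integral_const_mul (2 * a * ‖w‖) (fun x => ‖x - m‖ ^ 2)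
    _ ≤ 2 * a * ‖w‖ * (n * ‖Pop‖) := by
          apply mul_le_mul_of_nonneg_left htrace (by positivity)
  -- assemble
  have happly : (Ψop - (B ∘L Q + Q ∘L adjoint B + R)) w
      = (∫ x, (g1 x + g2 x) ∂ν) - (B (Q w) + Q (adjoint B w)) := by
    rw [ContinuousLinearMap.sub_apply, hΨ w, hintegral]
    simp only [ContinuousLinearMap.add_apply, ContinuousLinearMap.comp_apply]
    abel
  rw [happly]
  have hadj : ‖adjoint B‖ = ‖B‖ := ContinuousLinearMap.adjoint.norm_map B
  calc ‖(∫ x, (g1 x + g2 x) ∂ν) - (B (Q w) + Q (adjoint B w))‖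
      ≤ ‖∫ x, (g1 x + g2 x) ∂ν‖ + ‖B (Q w) + Q (adjoint B w)‖ := norm_sub_le _ _
  _ ≤ 2 * a * ‖w‖ * (n * ‖Pop‖) + (‖B (Q w)‖ + ‖Q (adjoint B w)‖) :=
      add_le_add hnormint (norm_add_le _ _)
  _ ≤ 2 * a * ‖w‖ * (n * ‖Pop‖) + (a * ‖Q‖ * ‖w‖ + a * ‖Q‖ * ‖w‖) := by
      apply add_le_add le_rfl
      apply add_le_add
      · calc ‖B (Q w)‖ ≤ ‖B‖ * ‖Q w‖ := le_opNorm _ _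
        _ ≤ a * (‖Q‖ * ‖w‖) := mul_le_mul hB (le_opNorm _ _) (norm_nonneg _) ha
        _ = a * ‖Q‖ * ‖w‖ := by ring
      · calc ‖Q (adjoint B w)‖ ≤ ‖Q‖ * ‖adjoint B w‖ := le_opNorm _ _
        _ ≤ ‖Q‖ * (‖adjoint B‖ * ‖w‖) :=
            mul_le_mul_of_nonneg_left (le_opNorm _ _) (norm_nonneg _)
        _ = ‖Q‖ * (‖B‖ * ‖w‖) := by rw [hadj]
        _ ≤ ‖Q‖ * (a * ‖w‖) := by
            apply mul_le_mul_of_nonneg_left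
              (mul_le_mul_of_nonneg_right hB (norm_nonneg _)) (norm_nonneg _)
        _ = a * ‖Q‖ * ‖w‖ := by ring
  _ = (2 * ↑n * a * ‖Pop‖ + 2 * a * ‖Q‖) * ‖w‖ := by ring

set_option maxHeartbeats 1000000 in
theorem covariance_estimate (n : ℕ) :
    ∃ C : ℝ, 0 < C ∧
      ∀ (k d : ℕ)
        (f : EuclideanSpace ℝ (Fin n) → EuclideanSpace ℝ (Fin k) → EuclideanSpace ℝ (Fin n))
        (φ : ℝ≥0 → ℝ≥0) (t_f : ℝ) (u : ℝ → EuclideanSpace ℝ (Fin k))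
        (G : EuclideanSpace ℝ (Fin k) →
          (EuclideanSpace ℝ (Fin d) →L[ℝ] EuclideanSpace ℝ (Fin n)))
        (μ : ℝ → Measure (EuclideanSpace ℝ (Fin n)))
        (m mhat : ℝ → EuclideanSpace ℝ (Fin n))
        (P Phat Ψ : ℝ → EuclideanSpace ℝ (Fin n) →L[ℝ] EuclideanSpace ℝ (Fin n)),
        (∀ v, ContDiff ℝ 1 (fun x => f x v)) →
        Continuous φ →
        (∀ x v, ‖fderiv ℝ (fun y => f y v) x‖ ≤ φ ‖v‖₊) →
        0 < t_f →
        Measurable u →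
        IntervalIntegrable (fun s => (φ ‖u s‖₊ : ℝ)) volume 0 t_f →
        (∀ w, Measurable fun v => G v w) →
        (∀ t ∈ Set.Icc 0 t_f, IsProbabilityMeasure (μ t)) →
        (∀ t ∈ Set.Icc 0 t_f, Integrable (fun x => ‖x‖ ^ 2) (μ t)) →
        (∀ t ∈ Set.Icc 0 t_f, Integrable (fun x : EuclideanSpace ℝ (Fin n) => x) (μ t)) →
        (∀ t ∈ Set.Icc 0 t_f, m t = ∫ x, x ∂(μ t)) →
        (∀ t ∈ Set.Icc 0 t_f, ∀ w, P t w = ∫ x, ⟪x - m t, w⟫ • (x - m t) ∂(μ t)) →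
        (∀ t ∈ Set.Icc 0 t_f, Integrable (fun x => f x (u t)) (μ t)) →
        IntervalIntegrable (fun s => ∫ x, f x (u s) ∂(μ s)) volume 0 t_f →
        (∀ t ∈ Set.Icc 0 t_f, m t = m 0 + ∫ s in (0:ℝ)..t, ∫ x, f x (u s) ∂(μ s)) →
        (∀ t ∈ Set.Icc 0 t_f, ∀ w, Ψ t w =
          (∫ x, (⟪x - m t, w⟫ • f x (u t) + ⟪f x (u t), w⟫ • (x - m t)) ∂(μ t))
            + (G (u t) ∘L adjoint (G (u t))) w) →
        IntervalIntegrable Ψ volume 0 t_f →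
        (∀ t ∈ Set.Icc 0 t_f, P t = P 0 + ∫ s in (0:ℝ)..t, Ψ s) →
        mhat 0 = m 0 →
        Phat 0 = P 0 →
        IntervalIntegrable (fun s => f (mhat s) (u s)) volume 0 t_f →
        (∀ t ∈ Set.Icc 0 t_f, mhat t = m 0 + ∫ s in (0:ℝ)..t, f (mhat s) (u s)) →
        IntervalIntegrable (fun s =>
          fderiv ℝ (fun y => f y (u s)) (mhat s) ∘L Phat s
            + Phat s ∘L adjoint (fderiv ℝ (fun y => f y (u s)) (mhat s))
            + G (u s) ∘L adjoint (G (u s))) volume 0 t_f →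
        (∀ t ∈ Set.Icc 0 t_f, Phat t = P 0 + ∫ s in (0:ℝ)..t,
          (fderiv ℝ (fun y => f y (u s)) (mhat s) ∘L Phat s
            + Phat s ∘L adjoint (fderiv ℝ (fun y => f y (u s)) (mhat s))
            + G (u s) ∘L adjoint (G (u s)))) →
        ∀ t ∈ Set.Icc 0 t_f,
          ‖P t - Phat t‖ ≤
            C * Real.exp (C * ∫ s in (0:ℝ)..t_f, (φ ‖u s‖₊ : ℝ)) *
              ∫ s in (0:ℝ)..t_f, (φ ‖u s‖₊ : ℝ) * ‖Phat s‖ := by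
  refine ⟨8 * n + 8, by positivity, ?_⟩
  intro k d f φ t_f u G μ m mhat P Phat Ψ hf1 hφc hDf htf hu haint hG hprob hx2 hx1 hm
    hPdef hfint hmint hmEq hΨdef hΨint hPEq hm0 hP0 hfhat hmhatEq hDint hPhatEq t ht
  set C : ℝ := 8 * n + 8 with hCdef
  set a : ℝ → ℝ := fun s => (φ ‖u s‖₊ : ℝ) with ha_def
  have ha0 : ∀ s, 0 ≤ a s := fun s => (φ ‖u s‖₊).coe_nonneg
  set D : ℝ → (EuclideanSpace ℝ (Fin n) →L[ℝ] EuclideanSpace ℝ (Fin n)) := fun s =>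
    fderiv ℝ (fun y => f y (u s)) (mhat s) ∘L Phat s
      + Phat s ∘L adjoint (fderiv ℝ (fun y => f y (u s)) (mhat s))
      + G (u s) ∘L adjoint (G (u s)) with hD_def
  have huIcc : Set.uIcc (0:ℝ) t_f = Set.Icc 0 t_f := Set.uIcc_of_le htf.le
  -- continuity of P and Phat
  have hPc : ContinuousOn P (Set.Icc 0 t_f) := by
    have h := continuousOn_primitive_interval' hΨint (by rw [huIcc]; exact ⟨le_rfl, htf.le⟩)
    have h2 : ContinuousOn (fun b => P 0 + ∫ s in (0:ℝ)..b, Ψ s) (Set.Icc 0 t_f) := by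
      rw [← huIcc]; exact continuousOn_const.add h
    exact h2.congr hPEq
  have hPhatc : ContinuousOn Phat (Set.Icc 0 t_f) := by
    have h := continuousOn_primitive_interval' hDint (by rw [huIcc]; exact ⟨le_rfl, htf.le⟩)
    have h2 : ContinuousOn (fun b => P 0 + ∫ s in (0:ℝ)..b, D s) (Set.Icc 0 t_f) := by
      rw [← huIcc]; exact continuousOn_const.add h
    exact h2.congr hPhatEq
  set v : ℝ → ℝ := fun t => ‖P t - Phat t‖ with hv_def
  have hvc : ContinuousOn v (Set.Icc 0 t_f) := (hPc.sub hPhatc).norm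
  have hv0 : ∀ t ∈ Set.Icc (0:ℝ) t_f, 0 ≤ v t := fun t _ => norm_nonneg _
  -- sub-interval integrability helper
  have hsubset : ∀ t ∈ Set.Icc (0:ℝ) t_f, Set.uIcc (0:ℝ) t ⊆ Set.uIcc (0:ℝ) t_f := by
    intro t ht'
    rw [Set.uIcc_of_le ht'.1, huIcc]
    exact Set.Icc_subset_Icc le_rfl ht'.2
  -- difference as an integral
  have hΔ : ∀ t ∈ Set.Icc (0:ℝ) t_f, P t - Phat t = ∫ s in (0:ℝ)..t, (Ψ s - D s) := by
    intro t ht'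
    rw [hPEq t ht', hPhatEq t ht']
    rw [intervalIntegral.integral_sub (hΨint.mono_set (hsubset t ht'))
      (hDint.mono_set (hsubset t ht'))]
    abel
  -- pointwise norm bound
  have hbd : ∀ s ∈ Set.Icc (0:ℝ) t_f,
      ‖Ψ s - D s‖ ≤ 2 * n * a s * ‖P s‖ + 2 * a s * ‖Phat s‖ := by
    intro s hs
    haveI := hprob s hs
    have hFc : Continuous fun x => f x (u s) := (hf1 (u s)).continuous
    have hdiff : ∀ x : EuclideanSpace ℝ (Fin n),
        DifferentiableAt ℝ (fun y => f y (u s)) x :=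
      fun x => ((hf1 (u s)).differentiable one_ne_zero).differentiableAt
    have hLip : ∀ x y : EuclideanSpace ℝ (Fin n),
        ‖f x (u s) - f y (u s)‖ ≤ a s * ‖x - y‖ := by
      intro x y
      exact convex_univ.norm_image_sub_le_of_norm_fderiv_le
        (fun z _ => hdiff z) (fun z _ => hDf z (u s)) (Set.mem_univ y) (Set.mem_univ x)
    exact psi_sub_d_bound hFc (ha0 s) hLip (hm s hs) (hx1 s hs) (hx2 s hs) (P s)
      (hPdef s hs) (fderiv ℝ (fun y => f y (u s)) (mhat s)) (Phat s)
      (G (u s) ∘L adjoint (G (u s))) (Ψ s) (hDf (mhat s) (u s)) (hΨdef s hs)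
  -- Gronwall data
  set K : ℝ := 2 * n + 2 with hK_def
  have hKpos : (0:ℝ) < K := by positivity
  have haPhat : IntervalIntegrable (fun s => a s * ‖Phat s‖) volume 0 t_f :=
    haint.mul_continuousOn (by rw [huIcc]; exact hPhatc.norm)
  have hav : IntervalIntegrable (fun s => a s * v s) volume 0 t_f :=
    haint.mul_continuousOn (by rw [huIcc]; exact hvc)
  have havP : IntervalIntegrable (fun s => K * (a s * v s) + K * (a s * ‖Phat s‖)) volume 0 t_f :=
    (hav.const_mul K).add (haPhat.const_mul K)
  set I : ℝ := ∫ s in (0:ℝ)..t_f, a s * ‖Phat s‖ with hI_def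
  have hInn : 0 ≤ I :=
    intervalIntegral.integral_nonneg htf.le fun s _ => mul_nonneg (ha0 s) (norm_nonneg _)
  set b : ℝ := K * I with hb_def
  have hbnn : 0 ≤ b := mul_nonneg hKpos.le hInn
  -- the integral inequality
  have hineq : ∀ t' ∈ Set.Icc (0:ℝ) t_f, v t' ≤ b + K * ∫ s in (0:ℝ)..t', a s * v s := by
    intro t' ht'
    have h0t : (0:ℝ) ≤ t' := ht'.1
    have hnormint : IntervalIntegrable (fun s => ‖Ψ s - D s‖) volume 0 t' :=
      ((hΨint.sub hDint).norm).mono_set (hsubset t' ht')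
    have step1 : v t' ≤ ∫ s in (0:ℝ)..t', ‖Ψ s - D s‖ := by
      rw [hv_def]
      simp only
      rw [hΔ t' ht']
      exact intervalIntegral.norm_integral_le_integral_norm h0t
    have step2 : (∫ s in (0:ℝ)..t', ‖Ψ s - D s‖)
        ≤ ∫ s in (0:ℝ)..t', (K * (a s * v s) + K * (a s * ‖Phat s‖)) := by
      apply intervalIntegral.integral_mono_on h0t hnormint
        (havP.mono_set (hsubset t' ht'))
      intro s hs
      have hsIcc : s ∈ Set.Icc (0:ℝ) t_f := ⟨hs.1, le_trans hs.2 ht'.2⟩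
      have h1 : ‖Ψ s - D s‖ ≤ 2 * n * a s * ‖P s‖ + 2 * a s * ‖Phat s‖ := hbd s hsIcc
      have h2 : ‖P s‖ ≤ v s + ‖Phat s‖ := by
        rw [hv_def]
        simp only
        calc ‖P s‖ = ‖(P s - Phat s) + Phat s‖ := by rw [sub_add_cancel]
        _ ≤ ‖P s - Phat s‖ + ‖Phat s‖ := norm_add_le _ _
      have hvs : 0 ≤ v s := norm_nonneg _
      have hPs : 0 ≤ ‖Phat s‖ := norm_nonneg _
      have has : 0 ≤ a s := ha0 s
      have hn : (0:ℝ) ≤ (n:ℝ) := Nat.cast_nonneg n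
      calc ‖Ψ s - D s‖ ≤ 2 * n * a s * ‖P s‖ + 2 * a s * ‖Phat s‖ := h1
      _ ≤ 2 * n * a s * (v s + ‖Phat s‖) + 2 * a s * ‖Phat s‖ := by
          have := mul_le_mul_of_nonneg_left h2 (by positivity : (0:ℝ) ≤ 2 * n * a s)
          linarith
      _ ≤ K * (a s * v s) + K * (a s * ‖Phat s‖) := by
          rw [hK_def]; nlinarith
    have step3 : (∫ s in (0:ℝ)..t', (K * (a s * v s) + K * (a s * ‖Phat s‖)))
        = K * (∫ s in (0:ℝ)..t', a s * v s) + K * ∫ s in (0:ℝ)..t', a s * ‖Phat s‖ := by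
      rw [intervalIntegral.integral_add ((hav.mono_set (hsubset t' ht')).const_mul K)
        ((haPhat.mono_set (hsubset t' ht')).const_mul K),
        intervalIntegral.integral_const_mul, intervalIntegral.integral_const_mul]
    have step4 : (∫ s in (0:ℝ)..t', a s * ‖Phat s‖) ≤ I := by
      rw [hI_def]
      have hsplit := intervalIntegral.integral_add_adjacent_intervals
        (haPhat.mono_set (hsubset t' ht'))
        (haPhat.mono_set (f := fun s => a s * ‖Phat s‖) (by
          rw [huIcc]
          exact Set.uIcc_subset_Icc ⟨ht'.1, ht'.2⟩ ⟨htf.le, le_rfl⟩))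
      have : 0 ≤ ∫ s in t'..t_f, a s * ‖Phat s‖ :=
        intervalIntegral.integral_nonneg ht'.2 fun s _ => mul_nonneg (ha0 s) (norm_nonneg _)
      linarith [hsplit]
    calc v t' ≤ ∫ s in (0:ℝ)..t', ‖Ψ s - D s‖ := step1
    _ ≤ K * (∫ s in (0:ℝ)..t', a s * v s) + K * ∫ s in (0:ℝ)..t', a s * ‖Phat s‖ :=
        step2.trans_eq step3
    _ ≤ K * (∫ s in (0:ℝ)..t', a s * v s) + b := by
        rw [hb_def]
        have := mul_le_mul_of_nonneg_left step4 hKpos.le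
        linarith
    _ = b + K * ∫ s in (0:ℝ)..t', a s * v s := by ring
  -- apply Gronwall
  have hgron := gronwall_L1 htf.le haint ha0 hav hv0 hbnn hKpos hineq t ht
  -- final constants
  set Φ : ℝ := ∫ s in (0:ℝ)..t_f, a s with hΦ_def
  have hΦnn : 0 ≤ Φ := intervalIntegral.integral_nonneg htf.le fun s _ => ha0 s
  have hlog2 : Real.log 2 ≤ 1 := by
    have := Real.log_le_sub_one_of_pos (by norm_num : (0:ℝ) < 2)
    linarith
  have hlog2nn : 0 ≤ Real.log 2 := Real.log_nonneg (by norm_num)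
  have hKC : 2 * K ≤ C := by rw [hK_def, hCdef]; push_cast; linarith [Nat.cast_nonneg (α := ℝ) n]
  have hexpC : Real.exp (2 * Real.log 2 * K * Φ) ≤ Real.exp (C * Φ) := by
    apply Real.exp_le_exp.mpr
    apply mul_le_mul_of_nonneg_right _ hΦnn
    nlinarith
  calc ‖P t - Phat t‖ = v t := rfl
  _ ≤ 2 * b * Real.exp (2 * Real.log 2 * K * Φ) := hgron
  _ = (2 * K) * Real.exp (2 * Real.log 2 * K * Φ) * I := by rw [hb_def]; ring
  _ ≤ C * Real.exp (C * Φ) * I := by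
      apply mul_le_mul_of_nonneg_right _ hInn
      apply mul_le_mul hKC hexpC (Real.exp_pos _).le (by positivity)
  _ = C * Real.exp (C * ∫ s in (0:ℝ)..t_f, a s) * ∫ s in (0:ℝ)..t_f, a s * ‖Phat s‖ := by
      rw [hΦ_def, hI_def]
end

section
/- Fix constants T > 0, q > 0, g₀ > 0 and 0 ≤ u_min ≤ u_max, and let U = {u ∈ ℝ² : u_min ≤ ‖u‖ ≤ u_max}. On the open set M = {x ∈ ℝ⁵ : x₅ > 0}, for u ∈ ℝ² define the smooth vector field f_u(x) = (x₃, x₄, T u₁/x₅, T u₂/x₅ − g₀, −q‖u‖), and let F = {f_u : u ∈ U}. Let 𝒟(F) be the smallest set of smooth vector fields on M containing [f,g] for all f,g ∈ F and containing [f,h] for all f ∈ F and h ∈ 𝒟(F) (the iterated right-nested Lie brackets of elements of F), and let I(F) be the real linear span of {f₁ − f₂ : f₁, f₂ ∈ F} ∪ 𝒟(F). Then for every x ∈ M, the linear subspace of ℝ⁵ × Sym₅(ℝ) spanned by the set {(f(x), Df(x) + Df(x)ᵀ) : f ∈ I(F)} has dimension at most 9; in particular its dimension is strictly less than 5 + 5·6/2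 = 20, so no point x ∈ M satisfies the sufficient accessibility condition for the statistical linearization. -/
open Matrix
/-- The powered-descent vector field `f_u(x) = (x₃, x₄, Tu₁/x₅, Tu₂/x₅ − g₀, −q‖u‖)`. -/
noncomputable def poweredDescentField (T q g0 : ℝ) (u : EuclideanSpace ℝ (Fin 2)) :
    (Fin 5 → ℝ) → (Fin 5 → ℝ) :=
  fun x => ![x 2, x 3, T * u 0 / x 4, T * u 1 / x 4 - g0, -(q * ‖u‖)]

/-- The Lie bracket `[f,g](x) = Dg(x) f(x) − Df(x) g(x)` of vector fields on ℝ⁵. -/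
noncomputable def lieB (f g : (Fin 5 → ℝ) → (Fin 5 → ℝ)) : (Fin 5 → ℝ) → (Fin 5 → ℝ) :=
  fun x => fderiv ℝ g x (f x) - fderiv ℝ f x (g x)

/-- `𝒟(F)`: the smallest set of vector fields containing `[f,g]` for `f, g ∈ F` and
closed under `h ↦ [f,h]` for `f ∈ F` (iterated right-nested Lie brackets). -/
inductive DBracket (F : Set ((Fin 5 → ℝ) → (Fin 5 → ℝ))) :
    ((Fin 5 → ℝ) → (Fin 5 → ℝ)) → Prop
  | base {f g} : f ∈ F → g ∈ F → DBracket F (lieB f g)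
  | step {f h} : f ∈ F → DBracket F h → DBracket F (lieB f h)

/-- `I(F)`: the real linear span of `{f₁ − f₂ : f₁, f₂ ∈ F} ∪ 𝒟(F)`. -/
noncomputable def IGen (F : Set ((Fin 5 → ℝ) → (Fin 5 → ℝ))) :
    Submodule ℝ ((Fin 5 → ℝ) → (Fin 5 → ℝ)) :=
  Submodule.span ℝ ({h | ∃ f₁ ∈ F, ∃ f₂ ∈ F, h = f₁ - f₂} ∪ {h | DBracket F h})

/-- The Jacobian matrix `Df(x)` of a vector field on ℝ⁵. -/
noncomputable def jac (f : (Fin 5 → ℝ) → (Fin 5 → ℝ)) (x : Fin 5 → ℝ) :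
    Matrix (Fin 5) (Fin 5) ℝ :=
  LinearMap.toMatrix' (fderiv ℝ f x : (Fin 5 → ℝ) →ₗ[ℝ] (Fin 5 → ℝ))

/-! ### Auxiliary machinery -/

namespace NoAccAux

open ContinuousLinearMap

abbrev XX := Fin 5 → ℝ

noncomputable def pr (j : Fin 5) : XX →L[ℝ] ℝ := ContinuousLinearMap.proj j

noncomputable def DL (d0 d1 d2 d3 : ℝ) : XX →L[ℝ] XX :=
  ContinuousLinearMap.pi ![d0 • pr 4, d1 • pr 4, d2 • pr 4, d3 • pr 4, 0]

noncomputable def Lu (T : ℝ) (u : EuclideanSpace ℝ (Fin 2)) (t : ℝ) : XX →L[ℝ] XX :=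
  ContinuousLinearMap.pi ![pr 2, pr 3, (-(T * u 0)/t^2) • pr 4, (-(T * u 1)/t^2) • pr 4, 0]

lemma DL_apply (d0 d1 d2 d3 : ℝ) (v : XX) :
    DL d0 d1 d2 d3 v = ![d0 * v 4, d1 * v 4, d2 * v 4, d3 * v 4, 0] := by
  funext i; fin_cases i <;> simp [DL, pr]

lemma Lu_apply (T : ℝ) (u : EuclideanSpace ℝ (Fin 2)) (t : ℝ) (v : XX) :
    Lu T u t v = ![v 2, v 3, -(T * u 0)/t^2 * v 4, -(T * u 1)/t^2 * v 4, 0] := by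
  funext i; fin_cases i <;> simp [Lu, pr]

lemma hasFDerivAt_comp4 {c : ℝ → ℝ} {d : ℝ} {y : XX} (h : HasDerivAt c d (y 4)) :
    HasFDerivAt (fun y : XX => c (y 4)) (d • pr 4) y :=
  h.comp_hasFDerivAt y (hasFDerivAt_apply 4 y)

lemma hasFDerivAt_cform {c0 c1 c2 c3 : ℝ → ℝ} {d0 d1 d2 d3 : ℝ} {y : XX}
    (h0 : HasDerivAt c0 d0 (y 4)) (h1 : HasDerivAt c1 d1 (y 4))
    (h2 : HasDerivAt c2 d2 (y 4)) (h3 : HasDerivAt c3 d3 (y 4)) :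
    HasFDerivAt (fun y : XX => ![c0 (y 4), c1 (y 4), c2 (y 4), c3 (y 4), (0:ℝ)])
      (DL d0 d1 d2 d3) y := by
  apply hasFDerivAt_pi''
  intro i
  fin_cases i <;>
    simp only [DL, ContinuousLinearMap.proj_pi, Matrix.cons_val_zero, Matrix.cons_val_one,
      Matrix.head_cons, Matrix.cons_val_two, Matrix.tail_cons, Matrix.cons_val_three,
      Matrix.cons_val_four, Fin.isValue]
  · exact hasFDerivAt_comp4 h0
  · exact hasFDerivAt_comp4 h1
  · exact hasFDerivAt_comp4 h2
  · exact hasFDerivAt_comp4 h3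
  · exact hasFDerivAt_const 0 y

lemma hasDerivAt_cdiv (a t : ℝ) (ht : t ≠ 0) :
    HasDerivAt (fun s : ℝ => a / s) (-a / t ^ 2) t := by
  have := (hasDerivAt_inv ht).const_mul a
  simpa [div_eq_mul_inv, neg_div, mul_comm] using this

lemma hasFDerivAt_pdf (T q g0 : ℝ) (u : EuclideanSpace ℝ (Fin 2)) (y : XX) (hy : y 4 ≠ 0) :
    HasFDerivAt (poweredDescentField T q g0 u) (Lu T u (y 4)) y := by
  apply hasFDerivAt_pi''
  intro i
  fin_cases i <;>
    simp only [Lu, poweredDescentField, ContinuousLinearMap.proj_pi, Matrix.cons_val_zero,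
      Matrix.cons_val_one, Matrix.head_cons, Matrix.cons_val_two, Matrix.tail_cons,
      Matrix.cons_val_three, Matrix.cons_val_four, Fin.isValue, pr]
  · exact hasFDerivAt_apply 2 y
  · exact hasFDerivAt_apply 3 y
  · exact hasFDerivAt_comp4 (hasDerivAt_cdiv (T * u 0) (y 4) hy)
  · exact hasFDerivAt_comp4 ((hasDerivAt_cdiv (T * u 1) (y 4) hy).sub_const g0)
  · exact hasFDerivAt_const _ y

lemma omega_mem_nhds {y : XX} (hy : 0 < y 4) : {z : XX | 0 < z 4} ∈ nhds y :=
  (isOpen_lt continuous_const (continuous_apply 4)).mem_nhds hy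

lemma cform_hasFDerivAt {c0 c1 c2 c3 : ℝ → ℝ}
    (hc0 : ContDiffOn ℝ (⊤ : ℕ∞) c0 (Set.Ioi 0)) (hc1 : ContDiffOn ℝ (⊤ : ℕ∞) c1 (Set.Ioi 0))
    (hc2 : ContDiffOn ℝ (⊤ : ℕ∞) c2 (Set.Ioi 0)) (hc3 : ContDiffOn ℝ (⊤ : ℕ∞) c3 (Set.Ioi 0))
    {h : XX → XX} (hh : ∀ y : XX, 0 < y 4 → h y = ![c0 (y 4), c1 (y 4), c2 (y 4), c3 (y 4), 0])
    {y : XX} (hy : 0 < y 4) :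
    HasFDerivAt h (DL (deriv c0 (y 4)) (deriv c1 (y 4)) (deriv c2 (y 4)) (deriv c3 (y 4))) y := by
  have hev : h =ᶠ[nhds y] fun z : XX => ![c0 (z 4), c1 (z 4), c2 (z 4), c3 (z 4), (0:ℝ)] :=
    Filter.eventuallyEq_of_mem (omega_mem_nhds hy) (fun z hz => hh z hz)
  have hd : ∀ c : ℝ → ℝ, ContDiffOn ℝ (⊤ : ℕ∞) c (Set.Ioi 0) → HasDerivAt c (deriv c (y 4)) (y 4) :=
    fun c hc => ((hc.differentiableOn (by simp)).differentiableAt (Ioi_mem_nhds hy)).hasDerivAt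
  exact (hasFDerivAt_cform (hd _ hc0) (hd _ hc1) (hd _ hc2) (hd _ hc3)).congr_of_eventuallyEq hev

lemma contDiffOn_cdiv (a : ℝ) (k : ℕ) :
    ContDiffOn ℝ (⊤ : ℕ∞) (fun t : ℝ => a / t ^ k) (Set.Ioi 0) :=
  ContDiffOn.div contDiffOn_const ((contDiff_id.pow k).contDiffOn)
    (fun t ht => pow_ne_zero _ (ne_of_gt ht))

lemma contDiffOn_cdiv1 (a : ℝ) : ContDiffOn ℝ (⊤ : ℕ∞) (fun t : ℝ => a / t) (Set.Ioi 0) := by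
  simpa using contDiffOn_cdiv a 1

/-- the invariant for elements of `𝒟(F)` -/
def QForm (h : XX → XX) : Prop :=
  ∃ c0 c1 c2 c3 : ℝ → ℝ,
    (ContDiffOn ℝ (⊤ : ℕ∞) c0 (Set.Ioi 0) ∧ ContDiffOn ℝ (⊤ : ℕ∞) c1 (Set.Ioi 0) ∧
     ContDiffOn ℝ (⊤ : ℕ∞) c2 (Set.Ioi 0) ∧ ContDiffOn ℝ (⊤ : ℕ∞) c3 (Set.Ioi 0)) ∧
    ∀ y : XX, 0 < y 4 → h y = ![c0 (y 4), c1 (y 4), c2 (y 4), c3 (y 4), 0]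

lemma lieB_base_val (T q g0 : ℝ) (u v : EuclideanSpace ℝ (Fin 2)) (y : XX) (hy : 0 < y 4) :
    lieB (poweredDescentField T q g0 u) (poweredDescentField T q g0 v) y =
      ![T * u 0 / y 4 - T * v 0 / y 4,
        (T * u 1 / y 4 - g0) - (T * v 1 / y 4 - g0),
        -(T * v 0) / (y 4) ^ 2 * (-(q * ‖u‖)) - -(T * u 0) / (y 4) ^ 2 * (-(q * ‖v‖)),
        -(T * v 1) / (y 4) ^ 2 * (-(q * ‖u‖)) - -(T * u 1) / (y 4) ^ 2 * (-(q * ‖v‖)), 0] := by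
  have hu := (hasFDerivAt_pdf T q g0 u y (ne_of_gt hy)).fderiv
  have hv := (hasFDerivAt_pdf T q g0 v y (ne_of_gt hy)).fderiv
  rw [lieB, hu, hv, Lu_apply, Lu_apply]
  funext i
  fin_cases i <;> simp [poweredDescentField]

lemma lieB_step_val (T q g0 : ℝ) (u : EuclideanSpace ℝ (Fin 2)) {c0 c1 c2 c3 : ℝ → ℝ}
    (hc0 : ContDiffOn ℝ (⊤ : ℕ∞) c0 (Set.Ioi 0)) (hc1 : ContDiffOn ℝ (⊤ : ℕ∞) c1 (Set.Ioi 0))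
    (hc2 : ContDiffOn ℝ (⊤ : ℕ∞) c2 (Set.Ioi 0)) (hc3 : ContDiffOn ℝ (⊤ : ℕ∞) c3 (Set.Ioi 0))
    {h : XX → XX} (hh : ∀ y : XX, 0 < y 4 → h y = ![c0 (y 4), c1 (y 4), c2 (y 4), c3 (y 4), 0])
    (y : XX) (hy : 0 < y 4) :
    lieB (poweredDescentField T q g0 u) h y =
      ![deriv c0 (y 4) * (-(q * ‖u‖)) - c2 (y 4),
        deriv c1 (y 4) * (-(q * ‖u‖)) - c3 (y 4),
        deriv c2 (y 4) * (-(q * ‖u‖)),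
        deriv c3 (y 4) * (-(q * ‖u‖)), 0] := by
  have hu := (hasFDerivAt_pdf T q g0 u y (ne_of_gt hy)).fderiv
  have hd := (cform_hasFDerivAt hc0 hc1 hc2 hc3 hh hy).fderiv
  rw [lieB, hu, hd, DL_apply, Lu_apply, hh y hy]
  funext i
  fin_cases i <;> simp [poweredDescentField]

lemma qform_base (T q g0 : ℝ) (u v : EuclideanSpace ℝ (Fin 2)) :
    QForm (lieB (poweredDescentField T q g0 u) (poweredDescentField T q g0 v)) := by
  refine ⟨fun t => T * u 0 / t - T * v 0 / t,
    fun t => (T * u 1 / t - g0) - (T * v 1 / t - g0),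
    fun t => -(T * v 0) / t ^ 2 * (-(q * ‖u‖)) - -(T * u 0) / t ^ 2 * (-(q * ‖v‖)),
    fun t => -(T * v 1) / t ^ 2 * (-(q * ‖u‖)) - -(T * u 1) / t ^ 2 * (-(q * ‖v‖)),
    ⟨?_, ?_, ?_, ?_⟩, fun y hy => lieB_base_val T q g0 u v y hy⟩
  · exact (contDiffOn_cdiv1 _).sub (contDiffOn_cdiv1 _)
  · exact ((contDiffOn_cdiv1 _).sub contDiffOn_const).sub
      ((contDiffOn_cdiv1 _).sub contDiffOn_const)
  · exact ((contDiffOn_cdiv _ 2).mul contDiffOn_const).sub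
      ((contDiffOn_cdiv _ 2).mul contDiffOn_const)
  · exact ((contDiffOn_cdiv _ 2).mul contDiffOn_const).sub
      ((contDiffOn_cdiv _ 2).mul contDiffOn_const)

lemma qform_step (T q g0 : ℝ) (u : EuclideanSpace ℝ (Fin 2)) {h : XX → XX} (hQ : QForm h) :
    QForm (lieB (poweredDescentField T q g0 u) h) := by
  obtain ⟨c0, c1, c2, c3, ⟨hc0, hc1, hc2, hc3⟩, hh⟩ := hQ
  refine ⟨fun t => deriv c0 t * (-(q * ‖u‖)) - c2 t,
    fun t => deriv c1 t * (-(q * ‖u‖)) - c3 t,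
    fun t => deriv c2 t * (-(q * ‖u‖)),
    fun t => deriv c3 t * (-(q * ‖u‖)),
    ⟨?_, ?_, ?_, ?_⟩, fun y hy => lieB_step_val T q g0 u hc0 hc1 hc2 hc3 hh y hy⟩
  · exact (((hc0.deriv_of_isOpen isOpen_Ioi (mod_cast le_top)).mul contDiffOn_const)).sub hc2
  · exact (((hc1.deriv_of_isOpen isOpen_Ioi (mod_cast le_top)).mul contDiffOn_const)).sub hc3
  · exact ((hc2.deriv_of_isOpen isOpen_Ioi (mod_cast le_top)).mul contDiffOn_const)
  · exact ((hc3.deriv_of_isOpen isOpen_Ioi (mod_cast le_top)).mul contDiffOn_const)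

end NoAccAux

namespace NoAccAux

/-- "good at x": differentiable, with Jacobian supported in rows 0-3 of column 4 -/
def Vprop (x : XX) (h : XX → XX) : Prop :=
  DifferentiableAt ℝ h x ∧ ∀ i j : Fin 5, i = 4 ∨ j ≠ 4 → jac h x i j = 0

lemma jac_entry (h : XX → XX) (x : XX) (i j : Fin 5) :
    jac h x i j = fderiv ℝ h x (fun j' => if j' = j then (1:ℝ) else 0) i := by
  rw [jac, LinearMap.toMatrix'_apply]
  have hps : (Pi.single j (1:ℝ) : XX) = fun j' => if j' = j then (1:ℝ) else 0 := by
    funext j'; simp [Pi.single_apply]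
  rw [hps]
  rfl

lemma cform_vprop {c0 c1 c2 c3 : ℝ → ℝ}
    (hc0 : ContDiffOn ℝ (⊤ : ℕ∞) c0 (Set.Ioi 0)) (hc1 : ContDiffOn ℝ (⊤ : ℕ∞) c1 (Set.Ioi 0))
    (hc2 : ContDiffOn ℝ (⊤ : ℕ∞) c2 (Set.Ioi 0)) (hc3 : ContDiffOn ℝ (⊤ : ℕ∞) c3 (Set.Ioi 0))
    {h : XX → XX} (hh : ∀ y : XX, 0 < y 4 → h y = ![c0 (y 4), c1 (y 4), c2 (y 4), c3 (y 4), 0])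
    {x : XX} (hx : 0 < x 4) : Vprop x h := by
  have hf := cform_hasFDerivAt hc0 hc1 hc2 hc3 hh hx
  refine ⟨hf.differentiableAt, fun i j hij => ?_⟩
  rw [jac_entry, hf.fderiv, DL_apply]
  rcases hij with rfl | hj
  · simp
  · have h4 : (if (4 : Fin 5) = j then (1:ℝ) else 0) = 0 := if_neg fun hc => hj hc.symm
    fin_cases i <;> simp [h4]

lemma diff_vprop (T q g0 : ℝ) (u v : EuclideanSpace ℝ (Fin 2)) {x : XX} (hx : 0 < x 4) :
    Vprop x (poweredDescentField T q g0 u - poweredDescentField T q g0 v) := by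
  have hu := hasFDerivAt_pdf T q g0 u x (ne_of_gt hx)
  have hv := hasFDerivAt_pdf T q g0 v x (ne_of_gt hx)
  have hs : HasFDerivAt (poweredDescentField T q g0 u - poweredDescentField T q g0 v)
      (Lu T u (x 4) - Lu T v (x 4)) x := hu.sub hv
  refine ⟨hs.differentiableAt, fun i j hij => ?_⟩
  rw [jac_entry, hs.fderiv]
  rw [ContinuousLinearMap.sub_apply, Lu_apply, Lu_apply]
  rcases hij with rfl | hj
  · simp
  · have h4 : (if (4 : Fin 5) = j then (1:ℝ) else 0) = 0 := if_neg fun hc => hj hc.symm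
    fin_cases i <;> simp [h4]

/-- The submodule of vector fields "good at x". -/
noncomputable def VV (x : XX) : Submodule ℝ (XX → XX) where
  carrier := {h | Vprop x h}
  zero_mem' := by
    refine ⟨differentiableAt_const 0, fun i j _ => ?_⟩
    rw [jac_entry]
    have : fderiv ℝ (0 : XX → XX) x = 0 := fderiv_const_apply 0
    simp [this]
  add_mem' := by
    rintro a b ⟨ha1, ha2⟩ ⟨hb1, hb2⟩
    have hd : DifferentiableAt ℝ (a + b) x := ha1.add hb1
    refine ⟨hd, fun i j hij => ?_⟩
    have hf : fderiv ℝ (a + b) x = fderiv ℝ a x + fderiv ℝ b x := fderiv_add ha1 hb1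
    rw [jac_entry, hf]
    have := ha2 i j hij
    have := hb2 i j hij
    rw [jac_entry] at this ‹jac a x i j = 0›
    simp only [ContinuousLinearMap.add_apply, Pi.add_apply]
    rw [‹fderiv ℝ a x _ i = 0›, this]
    ring
  smul_mem' := by
    rintro c a ⟨ha1, ha2⟩
    have hd : DifferentiableAt ℝ (c • a) x := ha1.const_smul c
    refine ⟨hd, fun i j hij => ?_⟩
    have hf : fderiv ℝ (c • a) x = c • fderiv ℝ a x := fderiv_const_smul ha1 c
    have := ha2 i j hij
    rw [jac_entry] at this ⊢
    rw [hf]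
    simp only [ContinuousLinearMap.coe_smul', Pi.smul_apply, this, smul_zero]

end NoAccAux

namespace NoAccAux

noncomputable def Amat (w : Fin 4 → ℝ) : Matrix (Fin 5) (Fin 5) ℝ :=
  Matrix.of fun a b => if hab : (a : ℕ) < 4 ∧ b = 4 then w ⟨a, hab.1⟩ else 0

noncomputable def Psi : (XX × (Fin 4 → ℝ)) →ₗ[ℝ] XX × Matrix (Fin 5) (Fin 5) ℝ where
  toFun p := (p.1, Amat p.2 + (Amat p.2)ᵀ)
  map_add' p q := by
    refine Prod.ext rfl ?_
    ext a b
    simp only [Amat, Matrix.add_apply, Matrix.transpose_apply, Matrix.of_apply, Pi.add_apply,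
      Prod.snd_add]
    split <;> split <;> ring
  map_smul' c p := by
    refine Prod.ext rfl ?_
    ext a b
    simp only [Amat, Prod.smul_snd, Matrix.smul_apply, Matrix.add_apply, Matrix.transpose_apply,
      Matrix.of_apply, Pi.smul_apply, RingHom.id_apply, smul_eq_mul]
    split <;> split <;> ring

lemma mem_range_Psi {v : XX} {M : Matrix (Fin 5) (Fin 5) ℝ}
    (hM : ∀ i j : Fin 5, i = 4 ∨ j ≠ 4 → M i j = 0) :
    (v, M + Mᵀ) ∈ LinearMap.range Psi := by
  refine ⟨(v, fun i => M (Fin.castLE (by norm_num) i) 4), ?_⟩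
  have hA : Amat (fun i => M (Fin.castLE (by norm_num) i) 4) = M := by
    ext a b
    simp only [Amat, Matrix.of_apply]
    split
    · next hab =>
      obtain ⟨ha, rfl⟩ := hab
      congr 1
    · next hab =>
      rw [Decidable.not_and_iff_or_not] at hab
      rcases hab with ha | hb
      · push_neg at ha
        have ha4 : a = 4 := by omega
        exact (hM a b (Or.inl ha4)).symm
      · exact (hM a b (Or.inr hb)).symm
  show (v, Amat _ + (Amat _)ᵀ) = (v, M + Mᵀ)
  rw [hA]

lemma finrank_range_Psi : Module.finrank ℝ (LinearMap.range Psi) ≤ 9 := by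
  have h1 := LinearMap.finrank_range_le Psi
  have h2 : Module.finrank ℝ (XX × (Fin 4 → ℝ)) = 9 := by
    simp [Module.finrank_prod]
  omega

end NoAccAux

theorem no_accessibility_for_statistical_linearization
    (T q g0 umin umax : ℝ) (hT : 0 < T) (hq : 0 < q) (hg : 0 < g0)
    (h0 : 0 ≤ umin) (h1 : umin ≤ umax) (x : Fin 5 → ℝ) (hx : 0 < x 4) :
    Module.finrank ℝ
      (Submodule.span ℝ
        {p : (Fin 5 → ℝ) × Matrix (Fin 5) (Fin 5) ℝ |
          ∃ h ∈ IGen {f | ∃ u : EuclideanSpace ℝ (Fin 2),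
              umin ≤ ‖u‖ ∧ ‖u‖ ≤ umax ∧ f = poweredDescentField T q g0 u},
            p = (h x, jac h x + (jac h x)ᵀ)}) ≤ 9 ∧
    Module.finrank ℝ
      (Submodule.span ℝ
        {p : (Fin 5 → ℝ) × Matrix (Fin 5) (Fin 5) ℝ |
          ∃ h ∈ IGen {f | ∃ u : EuclideanSpace ℝ (Fin 2),
              umin ≤ ‖u‖ ∧ ‖u‖ ≤ umax ∧ f = poweredDescentField T q g0 u},
            p = (h x, jac h x + (jac h x)ᵀ)}) < 5 + 5 * 6 / 2 := by
  classical
  have hDQ : ∀ h, DBracket {f | ∃ u : EuclideanSpace ℝ (Fin 2),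
      umin ≤ ‖u‖ ∧ ‖u‖ ≤ umax ∧ f = poweredDescentField T q g0 u} h → NoAccAux.QForm h := by
    intro h hD
    induction hD with
    | base hf hg =>
      obtain ⟨u, _, _, rfl⟩ := hf
      obtain ⟨v, _, _, rfl⟩ := hg
      exact NoAccAux.qform_base T q g0 u v
    | step hf _ ih =>
      obtain ⟨u, _, _, rfl⟩ := hf
      exact NoAccAux.qform_step T q g0 u ih
  have hIG : IGen {f | ∃ u : EuclideanSpace ℝ (Fin 2),
      umin ≤ ‖u‖ ∧ ‖u‖ ≤ umax ∧ f = poweredDescentField T q g0 u} ≤ NoAccAux.VV x := by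
    rw [IGen]
    apply Submodule.span_le.2
    rintro h (⟨f₁, ⟨u, _, _, rfl⟩, f₂, ⟨v, _, _, rfl⟩, rfl⟩ | hD)
    · exact NoAccAux.diff_vprop T q g0 u v hx
    · obtain ⟨c0, c1, c2, c3, ⟨hc0, hc1, hc2, hc3⟩, hh⟩ := hDQ h hD
      exact NoAccAux.cform_vprop hc0 hc1 hc2 hc3 hh hx
  have hsub : Submodule.span ℝ
      {p : (Fin 5 → ℝ) × Matrix (Fin 5) (Fin 5) ℝ |
        ∃ h ∈ IGen {f | ∃ u : EuclideanSpace ℝ (Fin 2),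
            umin ≤ ‖u‖ ∧ ‖u‖ ≤ umax ∧ f = poweredDescentField T q g0 u},
          p = (h x, jac h x + (jac h x)ᵀ)} ≤ LinearMap.range NoAccAux.Psi := by
    apply Submodule.span_le.2
    rintro p ⟨h, hh, rfl⟩
    exact NoAccAux.mem_range_Psi (hIG hh).2
  have h9 := le_trans (Submodule.finrank_mono hsub) NoAccAux.finrank_range_Psi
  exact ⟨h9, lt_of_le_of_lt h9 (by norm_num)⟩
end

section
/- Fix constants T > 0, q > 0, g₀ > 0 and 0 ≤ u_min ≤ u_max, and let U = {u ∈ ℝ² : u_min ≤ ‖u‖ ≤ u_max}. On M = {x ∈ ℝ⁵ : x₅ > 0}, for u ∈ ℝ² define f_u(x) = (x₃, x₄, T u₁/x₅, T u₂/x₅ − g₀, −q‖u‖), let F = {f_u : u ∈ U}, let 𝒟(F) be the smallest set of smooth vector fields on M containing [f,g] for all f,g ∈ F and containing [f,h] for all f ∈ F and h ∈ 𝒟(F), and let I(F) be the real linear span of {f₁ − f₂ : f₁, f₂ ∈ F} ∪ 𝒟(F). Then every vector field h ∈ I(F) depends only on the fifth coordinate, i.e., for all x, x' ∈ M with x₅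 = x'₅ one has h(x) = h(x'). -/
open ContinuousLinearMap in
/-- The derivative of the powered-descent field at a point with `x 4 = t ≠ 0`. -/
noncomputable def pdfDeriv (a b t : ℝ) : (Fin 5 → ℝ) →L[ℝ] (Fin 5 → ℝ) :=
  ContinuousLinearMap.pi
    ![ContinuousLinearMap.proj 2, ContinuousLinearMap.proj 3,
      (-(a / t ^ 2)) • ContinuousLinearMap.proj 4,
      (-(b / t ^ 2)) • ContinuousLinearMap.proj 4, 0]

lemma pdfDeriv_apply (a b t : ℝ) (v : Fin 5 → ℝ) :
    pdfDeriv a b t v = ![v 2, v 3, -(a / t ^ 2) * v 4, -(b / t ^ 2) * v 4, 0] := by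
  funext i
  fin_cases i <;> simp [pdfDeriv]

lemma hasDerivAt_cdiv (c t : ℝ) (ht : t ≠ 0) :
    HasDerivAt (fun s : ℝ => c / s) (-(c / t ^ 2)) t := by
  have := (hasDerivAt_inv ht).const_mul c
  have he : c * -(t ^ 2)⁻¹ = -(c / t ^ 2) := by field_simp
  rw [he] at this
  simpa [div_eq_mul_inv] using this

lemma hasFDerivAt_pdf (T q g0 : ℝ) (u : EuclideanSpace ℝ (Fin 2)) (x : Fin 5 → ℝ)
    (hx : x 4 ≠ 0) :
    HasFDerivAt (poweredDescentField T q g0 u) (pdfDeriv (T * u 0) (T * u 1) (x 4)) x := by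
  apply hasFDerivAt_pi''
  intro i
  have hp4 : HasFDerivAt (fun y : Fin 5 → ℝ => y 4)
      (ContinuousLinearMap.proj (R := ℝ) (φ := fun _ : Fin 5 => ℝ) 4) x :=
    hasFDerivAt_apply 4 x
  fin_cases i
  · have hfun : (fun y : Fin 5 → ℝ => poweredDescentField T q g0 u y 0) =
        fun y : Fin 5 → ℝ => y 2 := by funext y; simp [poweredDescentField]
    have hL : (ContinuousLinearMap.proj (0 : Fin 5)).comp (pdfDeriv (T * u 0) (T * u 1) (x 4)) =
        ContinuousLinearMap.proj (R := ℝ) (φ := fun _ : Fin 5 => ℝ) 2 := by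
      ext v; simp [pdfDeriv]
    simp only [hfun, hL]
    exact hasFDerivAt_apply 2 x
  · have hfun : (fun y : Fin 5 → ℝ => poweredDescentField T q g0 u y 1) =
        fun y : Fin 5 → ℝ => y 3 := by funext y; simp [poweredDescentField]
    have hL : (ContinuousLinearMap.proj (1 : Fin 5)).comp (pdfDeriv (T * u 0) (T * u 1) (x 4)) =
        ContinuousLinearMap.proj (R := ℝ) (φ := fun _ : Fin 5 => ℝ) 3 := by
      ext v; simp [pdfDeriv]
    simp only [hfun, hL]
    exact hasFDerivAt_apply 3 x
  · have hfun : (fun y : Fin 5 → ℝ => poweredDescentField T q g0 u y 2) =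
        fun y : Fin 5 → ℝ => T * u 0 / y 4 := by funext y; simp [poweredDescentField]
    have hL : (ContinuousLinearMap.proj (2 : Fin 5)).comp (pdfDeriv (T * u 0) (T * u 1) (x 4)) =
        (-(T * u 0 / x 4 ^ 2)) • ContinuousLinearMap.proj (R := ℝ) (φ := fun _ : Fin 5 => ℝ) 4 := by
      ext v; simp [pdfDeriv]
    simp only [hfun, hL]
    have := (hasDerivAt_cdiv (T * u 0) (x 4) hx).comp_hasFDerivAt x hp4
    exact this
  · have hfun : (fun y : Fin 5 → ℝ => poweredDescentField T q g0 u y 3) =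
        fun y : Fin 5 → ℝ => T * u 1 / y 4 - g0 := by funext y; simp [poweredDescentField]
    have hL : (ContinuousLinearMap.proj (3 : Fin 5)).comp (pdfDeriv (T * u 0) (T * u 1) (x 4)) =
        (-(T * u 1 / x 4 ^ 2)) • ContinuousLinearMap.proj (R := ℝ) (φ := fun _ : Fin 5 => ℝ) 4 := by
      ext v; simp [pdfDeriv]
    simp only [hfun, hL]
    exact (((hasDerivAt_cdiv (T * u 1) (x 4) hx)).sub_const g0).comp_hasFDerivAt x hp4
  · have hfun : (fun y : Fin 5 → ℝ => poweredDescentField T q g0 u y 4) =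
        fun _ : Fin 5 → ℝ => -(q * ‖u‖) := by funext y; simp [poweredDescentField]
    have hL : (ContinuousLinearMap.proj (4 : Fin 5)).comp (pdfDeriv (T * u 0) (T * u 1) (x 4)) =
        0 := by ext v; simp [pdfDeriv]
    simp only [hfun, hL]
    exact hasFDerivAt_const _ x
/-- Invariant: a vector field depending smoothly only on the fifth coordinate, away from 0. -/
def MassOnly (h : (Fin 5 → ℝ) → (Fin 5 → ℝ)) : Prop :=
  ∃ φ : ℝ → (Fin 5 → ℝ), ContDiffOn ℝ (⊤ : ℕ∞) φ {t : ℝ | t ≠ 0} ∧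
    ∀ x : Fin 5 → ℝ, x 4 ≠ 0 → h x = φ (x 4)

lemma isOpen_ne4 : IsOpen {y : Fin 5 → ℝ | y 4 ≠ 0} := by
  have : Continuous (fun y : Fin 5 → ℝ => y 4) := continuous_apply 4
  exact isOpen_ne.preimage this

lemma contDiffOn_apply4 {φ : ℝ → Fin 5 → ℝ} (hφ : ContDiffOn ℝ (⊤ : ℕ∞) φ {t : ℝ | t ≠ 0})
    (i : Fin 5) : ContDiffOn ℝ (⊤ : ℕ∞) (fun t => φ t i) {t : ℝ | t ≠ 0} :=
  (contDiff_apply ℝ ℝ i).comp_contDiffOn hφ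

lemma contDiffOn_pdfDeriv_comp (a b : ℝ) {φ : ℝ → Fin 5 → ℝ}
    (hφ : ContDiffOn ℝ (⊤ : ℕ∞) φ {t : ℝ | t ≠ 0}) :
    ContDiffOn ℝ (⊤ : ℕ∞) (fun t => pdfDeriv a b t (φ t)) {t : ℝ | t ≠ 0} := by
  rw [contDiffOn_pi]
  intro i
  have hsq : ContDiffOn ℝ (⊤ : ℕ∞) (fun t : ℝ => t ^ 2) {t : ℝ | t ≠ 0} :=
    (contDiff_id.pow 2).contDiffOn
  have hsqne : ∀ t ∈ {t : ℝ | t ≠ 0}, t ^ 2 ≠ 0 := fun t ht => pow_ne_zero 2 ht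
  fin_cases i
  · simpa [pdfDeriv_apply] using contDiffOn_apply4 hφ 2
  · simpa [pdfDeriv_apply] using contDiffOn_apply4 hφ 3
  · have : ContDiffOn ℝ (⊤ : ℕ∞) (fun t : ℝ => -(a / t ^ 2) * φ t 4) {t : ℝ | t ≠ 0} :=
      ((contDiffOn_const.div hsq hsqne).neg).mul (contDiffOn_apply4 hφ 4)
    simpa [pdfDeriv_apply] using this
  · have : ContDiffOn ℝ (⊤ : ℕ∞) (fun t : ℝ => -(b / t ^ 2) * φ t 4) {t : ℝ | t ≠ 0} :=
      ((contDiffOn_const.div hsq hsqne).neg).mul (contDiffOn_apply4 hφ 4)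
    simpa [pdfDeriv_apply] using this
  · simpa [pdfDeriv_apply] using contDiffOn_const (c := (0 : ℝ))

/-- The fderiv of a mass-only field. -/
lemma fderiv_massOnly {φ : ℝ → Fin 5 → ℝ} (hφ : ContDiffOn ℝ (⊤ : ℕ∞) φ {t : ℝ | t ≠ 0})
    {h : (Fin 5 → ℝ) → (Fin 5 → ℝ)} (hh : ∀ y : Fin 5 → ℝ, y 4 ≠ 0 → h y = φ (y 4))
    {x : Fin 5 → ℝ} (hx : x 4 ≠ 0) (v : Fin 5 → ℝ) :
    fderiv ℝ h x v = v 4 • deriv φ (x 4) := by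
  have hp4 : HasFDerivAt (fun y : Fin 5 → ℝ => y 4)
      (ContinuousLinearMap.proj (R := ℝ) (φ := fun _ : Fin 5 => ℝ) 4) x :=
    hasFDerivAt_apply 4 x
  have hdφ : HasDerivAt φ (deriv φ (x 4)) (x 4) := by
    have : DifferentiableAt ℝ φ (x 4) :=
      ((hφ.differentiableOn (by simp)) (x 4) hx).differentiableAt
        (isOpen_ne.mem_nhds hx)
    exact this.hasDerivAt
  have hF : HasFDerivAt (fun y : Fin 5 → ℝ => φ (y 4))
      ((ContinuousLinearMap.smulRight (1 : ℝ →L[ℝ] ℝ) (deriv φ (x 4))).comp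
        (ContinuousLinearMap.proj 4)) x :=
    hdφ.hasFDerivAt.comp x hp4
  have hev : h =ᶠ[nhds x] fun y : Fin 5 → ℝ => φ (y 4) := by
    filter_upwards [isOpen_ne4.mem_nhds hx] with y hy using hh y hy
  rw [hev.fderiv_eq, hF.fderiv]
  simp

/-- Key step : bracketing a mass-only field with any field in the family is mass-only. -/
lemma massOnly_lieB_step (T q g0 : ℝ) (u : EuclideanSpace ℝ (Fin 2))
    {h : (Fin 5 → ℝ) → (Fin 5 → ℝ)} (hh : MassOnly h) :
    MassOnly (lieB (poweredDescentField T q g0 u) h) := by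
  obtain ⟨φ, hφ, hval⟩ := hh
  refine ⟨fun t => (-(q * ‖u‖)) • deriv φ t - pdfDeriv (T * u 0) (T * u 1) t (φ t), ?_, ?_⟩
  · exact (((hφ.deriv_of_isOpen isOpen_ne (mod_cast le_top)).const_smul _)).sub
      (contDiffOn_pdfDeriv_comp _ _ hφ)
  · intro x hx
    have hf := hasFDerivAt_pdf T q g0 u x hx
    have h1 : fderiv ℝ h x (poweredDescentField T q g0 u x) = (-(q * ‖u‖)) • deriv φ (x 4) := by
      rw [fderiv_massOnly hφ hval hx]
      congr 1
    have h2 : fderiv ℝ (poweredDescentField T q g0 u) x (h x) =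
        pdfDeriv (T * u 0) (T * u 1) (x 4) (φ (x 4)) := by
      rw [hf.fderiv, hval x hx]
    simp only [lieB, h1, h2]

/-- Base case : the bracket of two fields in the family is mass-only. -/
lemma massOnly_lieB_base (T q g0 : ℝ) (u v : EuclideanSpace ℝ (Fin 2)) :
    MassOnly (lieB (poweredDescentField T q g0 u) (poweredDescentField T q g0 v)) := by
  classical
  set vf : EuclideanSpace ℝ (Fin 2) → ℝ → Fin 5 → ℝ :=
    fun w t => ![0, 0, T * w 0 / t, T * w 1 / t - g0, -(q * ‖w‖)] with hvf
  have hvfsm : ∀ w, ContDiffOn ℝ (⊤ : ℕ∞) (vf w) {t : ℝ | t ≠ 0} := by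
    intro w
    rw [contDiffOn_pi]
    intro i
    have hid : ContDiffOn ℝ (⊤ : ℕ∞) (fun t : ℝ => t) {t : ℝ | t ≠ 0} := contDiffOn_id
    have hne : ∀ t ∈ {t : ℝ | t ≠ 0}, t ≠ 0 := fun t ht => ht
    fin_cases i
    · simpa [hvf] using contDiffOn_const (c := (0 : ℝ))
    · simpa [hvf] using contDiffOn_const (c := (0 : ℝ))
    · have h3 : ContDiffOn ℝ (⊤ : ℕ∞) (fun t : ℝ => T * w 0 / t) {t : ℝ | t ≠ 0} :=
        contDiffOn_const.div hid hne
      simpa [hvf] using h3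
    · simpa [hvf] using (contDiffOn_const.div hid hne).sub contDiffOn_const
    · simpa [hvf] using contDiffOn_const (c := -(q * ‖w‖))
  refine ⟨fun t => pdfDeriv (T * v 0) (T * v 1) t (vf u t) -
      pdfDeriv (T * u 0) (T * u 1) t (vf v t), ?_, ?_⟩
  · exact (contDiffOn_pdfDeriv_comp _ _ (hvfsm u)).sub (contDiffOn_pdfDeriv_comp _ _ (hvfsm v))
  · intro x hx
    have hfu := hasFDerivAt_pdf T q g0 u x hx
    have hfv := hasFDerivAt_pdf T q g0 v x hx
    have key : ∀ a b : ℝ, ∀ w : EuclideanSpace ℝ (Fin 2),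
        pdfDeriv a b (x 4) (poweredDescentField T q g0 w x) = pdfDeriv a b (x 4) (vf w (x 4)) := by
      intro a b w
      rw [pdfDeriv_apply, pdfDeriv_apply]
      funext i
      fin_cases i <;> simp [poweredDescentField, hvf]
    simp only [lieB, hfu.fderiv, hfv.fderiv, key]
theorem IGen_depends_only_on_mass (T q g0 umin umax : ℝ)
    (hT : 0 < T) (hq : 0 < q) (hg : 0 < g0) (h0 : 0 ≤ umin) (h1 : umin ≤ umax) :
    ∀ h ∈ IGen {f | ∃ u : EuclideanSpace ℝ (Fin 2),
        umin ≤ ‖u‖ ∧ ‖u‖ ≤ umax ∧ f = poweredDescentField T q g0 u},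
      ∀ x x' : Fin 5 → ℝ, 0 < x 4 → 0 < x' 4 → x 4 = x' 4 → h x = h x' := by
  set F : Set ((Fin 5 → ℝ) → (Fin 5 → ℝ)) := {f | ∃ u : EuclideanSpace ℝ (Fin 2),
      umin ≤ ‖u‖ ∧ ‖u‖ ≤ umax ∧ f = poweredDescentField T q g0 u} with hF
  intro h hmem x x' hx hx' heq
  have hx0 : x 4 ≠ 0 := ne_of_gt hx
  have hx'0 : x' 4 ≠ 0 := ne_of_gt hx'
  -- every iterated bracket is mass-only
  have hD : ∀ g, DBracket F g → MassOnly g := by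
    intro g hg'
    induction hg' with
    | base hf hg =>
      obtain ⟨u, _, _, rfl⟩ := hf
      obtain ⟨v, _, _, rfl⟩ := hg
      exact massOnly_lieB_base T q g0 u v
    | step hf _ ih =>
      obtain ⟨u, _, _, rfl⟩ := hf
      exact massOnly_lieB_step T q g0 u ih
  -- induction over the span
  refine Submodule.span_induction
    (p := fun g _ => ∀ y y' : Fin 5 → ℝ, y 4 ≠ 0 → y' 4 ≠ 0 → y 4 = y' 4 → g y = g y')
    ?_ ?_ ?_ ?_ hmem x x' hx0 hx'0 heq
  · rintro g (⟨f₁, hf₁, f₂, hf₂, rfl⟩ | hg) y y' hy hy' hyy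
    · obtain ⟨u, _, _, rfl⟩ := hf₁
      obtain ⟨v, _, _, rfl⟩ := hf₂
      funext i
      fin_cases i <;>
        simp [poweredDescentField, hyy]
    · obtain ⟨φ, _, hval⟩ := hD g hg
      rw [hval y hy, hval y' hy', hyy]
  · intro y y' _ _ _; rfl
  · intro g₁ g₂ _ _ ih₁ ih₂ y y' hy hy' hyy
    simp only [Pi.add_apply, ih₁ y y' hy hy' hyy, ih₂ y y' hy hy' hyy]
  · intro a g _ ih y y' hy hy' hyy
    simp only [Pi.smul_apply, ih y y' hy hy' hyy]
end
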